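/- arXiv:2208.05169 — 7 statements merged into one kernel-verified Lean document; each statement's English description precedes it below -/
import Mathlib

section
/- Let (V,E) be a digraph with out-degree d_u ≥ 2 for every vertex u ∈ V, and let (F_u)_{u∈V} be the attractors of a GD-IFS of similarities on ℝ based on (V,E) satisfying the COSC. Then for every vertex u ∈ V, GL(F_u) = Λ_u ∪ ⋃_{m=1}^∞ ⋃_{v∈V} Λ_v·{|ρ_e| : e is a directed path of length m from u to v}, where the set {|ρ_e|} is understood to be empty when there is no directed path from u to v. -/
/-- Gap length set of a set `K ⊆ ℝ`: lengths of bounded complementary open intervals. -/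
def gapLengths (K : Set ℝ) : Set ℝ :=
  {l | ∃ a b : ℝ, a ∈ K ∧ b ∈ K ∧ a < b ∧ Set.Ioo a b ∩ K = ∅ ∧ l = b - a}

/-- `p` is a (nonempty) directed path from `u` to `v` in the digraph with edge maps `α, ω`. -/
def IsPathFromTo {E V : Type} (α ω : E → V) (p : List E) (u v : V) : Prop :=
  p ≠ [] ∧ p.Chain' (fun e f => ω e = α f) ∧ (∀ e ∈ p.head?, α e = u) ∧
    (∀ e ∈ p.getLast?, ω e = v)

private lemma affImg (ρ c : ℝ) (s : Set ℝ) :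
    (fun t => ρ * t + c) '' convexHull ℝ s = convexHull ℝ ((fun t => ρ * t + c) '' s) := by
  have : (fun t : ℝ => ρ * t + c) = ⇑((AffineMap.lineMap c (ρ + c) : ℝ →ᵃ[ℝ] ℝ)) := by
    funext t; simp [AffineMap.lineMap_apply]; ring
  rw [this, AffineMap.image_convexHull]

private lemma hullIcc {K : Set ℝ} (hK : IsCompact K) (hne : K.Nonempty) :
    convexHull ℝ K = Set.Icc (sInf K) (sSup K) := by
  apply subset_antisymm
  · exact convexHull_min (fun x hx => ⟨csInf_le hK.bddBelow hx, le_csSup hK.bddAbove hx⟩)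
      (convex_Icc _ _)
  · rw [← segment_eq_Icc (csInf_le_csSup hne hK.bddBelow hK.bddAbove)]
    exact (convex_convexHull ℝ K).segment_subset (subset_convexHull ℝ K (hK.sInf_mem hne))
      (subset_convexHull ℝ K (hK.sSup_mem hne))

/-- an affine map with nonzero slope sends strict betweenness to strict betweenness. -/
private lemma affBetween {ρ c s t x : ℝ} (hρ : ρ ≠ 0) (h1 : s < x) (h2 : x < t) :
    min (ρ*s+c) (ρ*t+c) < ρ*x+c ∧ ρ*x+c < max (ρ*s+c) (ρ*t+c) := by
  rcases hρ.lt_or_gt with h | h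
  · rw [min_eq_right (by nlinarith), max_eq_left (by nlinarith)]
    constructor <;> nlinarith
  · rw [min_eq_left (by nlinarith), max_eq_right (by nlinarith)]
    constructor <;> nlinarith

private lemma affBetween' {ρ c s t x : ℝ} (hst : s < t)
    (h1 : min (ρ*s+c) (ρ*t+c) < ρ*x+c) (h2 : ρ*x+c < max (ρ*s+c) (ρ*t+c)) : s < x ∧ x < t := by
  rcases lt_trichotomy ρ 0 with h | h | h
  · rw [min_eq_right (by nlinarith)] at h1; rw [max_eq_left (by nlinarith)] at h2
    have hxs : ρ * x < ρ * s := by linarith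
    have htx : ρ * t < ρ * x := by linarith
    exact ⟨(mul_lt_mul_left_of_neg h).mp hxs, (mul_lt_mul_left_of_neg h).mp htx⟩
  · exfalso; subst h; simp only [zero_mul, zero_add, min_self] at h1; exact lt_irrefl c h1
  · rw [min_eq_left (by nlinarith)] at h1; rw [max_eq_right (by nlinarith)] at h2
    have hxs : ρ * s < ρ * x := by linarith
    have htx : ρ * x < ρ * t := by linarith
    exact ⟨(mul_lt_mul_iff_right₀ h).mp hxs, (mul_lt_mul_iff_right₀ h).mp htx⟩

theorem stmt0 {V E : Type} [Fintype V] [Fintype E]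
    (α ω : E → V) (ρ c : E → ℝ) (F : V → Set ℝ)
    -- contraction ratios in (-1,1) \ {0}
    (hρ : ∀ e, |ρ e| < 1 ∧ ρ e ≠ 0)
    -- attractors: nonempty compact with the invariance identity
    (hFc : ∀ v, IsCompact (F v) ∧ (F v).Nonempty)
    (hFeq : ∀ v, F v = ⋃ e ∈ {e : E | α e = v}, (fun t => ρ e * t + c e) '' F (ω e))
    -- convex open set condition
    (hCOSC : ∃ U : V → Set ℝ,
      (∀ v, (U v).Nonempty ∧ IsOpen (U v) ∧ Bornology.IsBounded (U v) ∧ Convex ℝ (U v)) ∧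
      (∀ e, (fun t => ρ e * t + c e) '' U (ω e) ⊆ U (α e)) ∧
      (∀ e e', e ≠ e' → α e = α e' →
        Disjoint ((fun t => ρ e * t + c e) '' U (ω e))
          ((fun t => ρ e' * t + c e') '' U (ω e'))))
    -- out-degrees, all at least 2
    (d : V → ℕ) (hd : ∀ v, d v = Nat.card {e : E // α e = v}) (hd2 : ∀ v, 2 ≤ d v)
    -- enumeration of the edges leaving each vertex, ordered from left to right
    (en : V → ℕ → E) (hen : ∀ v, Set.BijOn (en v) (Set.Iio (d v)) {e : E | α e = v})
    (horder : ∀ v j k, j < k → k < d v →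
      sSup ((fun t => ρ (en v j) * t + c (en v j)) '' convexHull ℝ (F (ω (en v j)))) ≤
      sInf ((fun t => ρ (en v k) * t + c (en v k)) '' convexHull ℝ (F (ω (en v k)))))
    -- basic gap lengths `λ_v^{(k)}` and the sets `Λ_v` of positive basic gap lengths
    (lam : V → ℕ → ℝ)
    (hlam : ∀ v k, k + 1 < d v → lam v k =
      sInf ((fun t => ρ (en v (k+1)) * t + c (en v (k+1))) ''
        convexHull ℝ (F (ω (en v (k+1))))) -
      sSup ((fun t => ρ (en v k) * t + c (en v k)) '' convexHull ℝ (F (ω (en v k)))))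
    (Λ : V → Set ℝ)
    (hΛ : ∀ v, Λ v = {t | 0 < t ∧ ∃ k, k + 1 < d v ∧ t = lam v k})
    (u : V) :
    gapLengths (F u) =
      Λ u ∪ {x | ∃ v : V, ∃ t ∈ Λ v, ∃ p : List E,
        IsPathFromTo α ω p u v ∧ x = t * |(p.map ρ).prod|} := by
  clear hCOSC hd hd2
  have hFcomp : ∀ v, IsCompact (F v) := fun v => (hFc v).1
  have hFne : ∀ v, (F v).Nonempty := fun v => (hFc v).2
  have hgc : ∀ e, Continuous (fun t : ℝ => ρ e * t + c e) :=
    fun e => (continuous_mul_left _).add continuous_const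
  have hKcomp : ∀ e, IsCompact ((fun t => ρ e * t + c e) '' F (ω e)) :=
    fun e => ((hFcomp _).image (hgc e))
  have hKne : ∀ e, ((fun t => ρ e * t + c e) '' F (ω e)).Nonempty :=
    fun e => (hFne _).image _
  set K : V → ℕ → Set ℝ :=
    fun v k => (fun t : ℝ => ρ (en v k) * t + c (en v k)) '' F (ω (en v k)) with hKdef
  set P : V → ℕ → ℝ := fun v k => sInf (K v k) with hPdef
  set Q : V → ℕ → ℝ := fun v k => sSup (K v k) with hQdef
  have hKc : ∀ v k, IsCompact (K v k) := fun v k => hKcomp _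
  have hKn : ∀ v k, (K v k).Nonempty := fun v k => hKne _
  have hPmem : ∀ v k, P v k ∈ K v k := fun v k => (hKc v k).sInf_mem (hKn v k)
  have hQmem : ∀ v k, Q v k ∈ K v k := fun v k => (hKc v k).sSup_mem (hKn v k)
  have hPle : ∀ v k x, x ∈ K v k → P v k ≤ x := fun v k x hx => csInf_le (hKc v k).bddBelow hx
  have hleQ : ∀ v k x, x ∈ K v k → x ≤ Q v k := fun v k x hx => le_csSup (hKc v k).bddAbove hx
  have hPQ : ∀ v k, P v k ≤ Q v k := fun v k => hPle v k _ (hQmem v k)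
  have himgK : ∀ v k, (fun t : ℝ => ρ (en v k) * t + c (en v k)) '' convexHull ℝ (F (ω (en v k)))
      = Set.Icc (P v k) (Q v k) := by
    intro v k
    rw [affImg, hullIcc (hKcomp (en v k)) (hKne (en v k))]
  have hQP : ∀ v j k, j < k → k < d v → Q v j ≤ P v k := by
    intro v j k hjk hk
    have h := horder v j k hjk hk
    rwa [himgK, himgK, csSup_Icc (hPQ v j), csInf_Icc (hPQ v k)] at h
  have hlam2 : ∀ v k, k + 1 < d v → lam v k = P v (k+1) - Q v k := by
    intro v k h
    rw [hlam v k h, himgK, himgK, csSup_Icc (hPQ _ _), csInf_Icc (hPQ _ _)]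
  have hKsubF : ∀ v k, k < d v → K v k ⊆ F v := by
    intro v k hk
    have hα : α (en v k) = v := (hen v).mapsTo hk
    rw [hFeq v]
    exact Set.subset_biUnion_of_mem (u := fun e => (fun t => ρ e * t + c e) '' F (ω e)) hα
  have hFsubK : ∀ v x, x ∈ F v → ∃ k, k < d v ∧ x ∈ K v k := by
    intro v x hx
    rw [hFeq v] at hx
    simp only [Set.mem_iUnion, Set.mem_setOf_eq] at hx
    obtain ⟨e, he, hxe⟩ := hx
    obtain ⟨k, hk, hek⟩ := (hen v).surjOn he
    refine ⟨k, hk, ?_⟩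
    rw [hKdef]
    simp only
    rw [hek]
    exact hxe
  -- basic gaps are gaps
  have hΛgap : ∀ v t, t ∈ Λ v → t ∈ gapLengths (F v) := by
    intro v t ht
    rw [hΛ v] at ht
    obtain ⟨htpos, k, hk, rfl⟩ := ht
    have hlk := hlam2 v k hk
    refine ⟨Q v k, P v (k+1), hKsubF v k (by omega) (hQmem v k),
      hKsubF v (k+1) hk (hPmem v (k+1)), by linarith, ?_, by linarith⟩
    rw [Set.eq_empty_iff_forall_notMem]
    rintro z ⟨hz1, hz2⟩
    obtain ⟨m, hm, hzm⟩ := hFsubK v z hz2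
    rcases lt_or_ge m (k+1) with hmk | hmk
    · have : z ≤ Q v k := by
        rcases lt_or_eq_of_le (Nat.lt_succ_iff.mp hmk) with h | h
        · exact le_trans (hleQ v m z hzm) (le_trans (hQP v m k h (by omega)) (hPQ v k))
        · rw [h] at hzm; exact hleQ v k z hzm
      exact absurd hz1.1 (not_lt.mpr this)
    · have : P v (k+1) ≤ z := by
        rcases lt_or_eq_of_le hmk with h | h
        · exact le_trans (le_trans (hPQ v (k+1)) (hQP v (k+1) m h hm)) (hPle v m z hzm)
        · rw [← h] at hzm; exact hPle v (k+1) z hzm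
      exact absurd hz1.2 (not_lt.mpr this)
  -- a gap with both endpoints in the same piece comes from a scaled gap
  have hsame : ∀ v j, j < d v → ∀ a b, a ∈ K v j → b ∈ K v j → a < b →
      Set.Ioo a b ∩ F v = ∅ →
      ∃ e, α e = v ∧ ∃ l ∈ gapLengths (F (ω e)), b - a = |ρ e| * l := by
    intro v j hj a b haj hbj hab hgap
    obtain ⟨a₀, ha₀F, ha₀'⟩ := haj
    obtain ⟨b₀, hb₀F, hb₀'⟩ := hbj
    have ha₀ : ρ (en v j) * a₀ + c (en v j) = a := ha₀'
    have hb₀ : ρ (en v j) * b₀ + c (en v j) = b := hb₀'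
    have hne : a₀ ≠ b₀ := by
      intro h
      have : a = b := by rw [← ha₀, h, hb₀]
      exact absurd this hab.ne
    refine ⟨en v j, (hen v).mapsTo hj, max a₀ b₀ - min a₀ b₀,
      ⟨min a₀ b₀, max a₀ b₀, ?_, ?_, min_lt_max.mpr hne, ?_, rfl⟩, ?_⟩
    · rcases min_choice a₀ b₀ with h | h <;> rw [h] <;> assumption
    · rcases max_choice a₀ b₀ with h | h <;> rw [h] <;> assumption
    · rw [Set.eq_empty_iff_forall_notMem]
      rintro w ⟨hw1, hw2⟩
      have hb2 := affBetween (ρ := ρ (en v j)) (c := c (en v j)) (hρ (en v j)).2 hw1.1 hw1.2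
      have hmm : min (ρ (en v j) * min a₀ b₀ + c (en v j)) (ρ (en v j) * max a₀ b₀ + c (en v j))
          = a ∧ max (ρ (en v j) * min a₀ b₀ + c (en v j)) (ρ (en v j) * max a₀ b₀ + c (en v j))
          = b := by
        rcases le_total a₀ b₀ with h | h
        · rw [min_eq_left h, max_eq_right h, ha₀, hb₀, min_eq_left hab.le, max_eq_right hab.le]
          exact ⟨rfl, rfl⟩
        · rw [min_eq_right h, max_eq_left h, ha₀, hb₀, min_comm, max_comm,
            min_eq_left hab.le, max_eq_right hab.le]
          exact ⟨rfl, rfl⟩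
      rw [hmm.1, hmm.2] at hb2
      have hwK : ρ (en v j) * w + c (en v j) ∈ K v j := ⟨w, hw2, rfl⟩
      have : ρ (en v j) * w + c (en v j) ∈ Set.Ioo a b ∩ F v :=
        ⟨⟨hb2.1, hb2.2⟩, hKsubF v j hj hwK⟩
      rw [hgap] at this
      exact this
    · have h1 : b - a = ρ (en v j) * (b₀ - a₀) := by rw [← ha₀, ← hb₀]; ring
      have h2 : b - a = |ρ (en v j) * (b₀ - a₀)| := by
        rw [← h1]; exact (abs_of_pos (by linarith)).symm
      rw [h2, abs_mul, max_sub_min_eq_abs', abs_sub_comm]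
  -- scaled gaps are gaps (index form)
  have hscaleK : ∀ v j, j < d v → ∀ l, l ∈ gapLengths (F (ω (en v j))) →
      |ρ (en v j)| * l ∈ gapLengths (F v) := by
    intro v j hj l hl
    obtain ⟨a', b', ha', hb', hab', hgap', rfl⟩ := hl
    set e := en v j with he
    set x := ρ e * a' + c e with hx
    set y := ρ e * b' + c e with hy
    have hxy : x ≠ y := by
      rw [hx, hy]
      intro h
      have : ρ e * (a' - b') = 0 := by linarith
      rcases mul_eq_zero.mp this with h' | h'
      · exact (hρ e).2 h'
      · exact (ne_of_lt hab') (by linarith)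
    have hxK : x ∈ K v j := ⟨a', ha', rfl⟩
    have hyK : y ∈ K v j := ⟨b', hb', rfl⟩
    have hminK : min x y ∈ K v j := by rcases min_choice x y with h | h <;> rw [h] <;> assumption
    have hmaxK : max x y ∈ K v j := by rcases max_choice x y with h | h <;> rw [h] <;> assumption
    refine ⟨min x y, max x y, hKsubF v j hj hminK, hKsubF v j hj hmaxK,
      min_lt_max.mpr hxy, ?_, ?_⟩
    · rw [Set.eq_empty_iff_forall_notMem]
      rintro z ⟨hz1, hz2⟩
      obtain ⟨m, hm, hzm⟩ := hFsubK v z hz2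
      rcases lt_trichotomy m j with hmj | hmj | hmj
      · have : z ≤ min x y :=
          le_trans (hleQ v m z hzm) (le_trans (hQP v m j hmj hj) (hPle v j _ hminK))
        exact absurd hz1.1 (not_lt.mpr this)
      · rw [hmj] at hzm
        obtain ⟨w, hwF, hwz⟩ := hzm
        rw [← hwz] at hz1
        have := affBetween' (ρ := ρ e) (c := c e) hab' hz1.1 hz1.2
        have : w ∈ Set.Ioo a' b' ∩ F (ω e) := ⟨⟨this.1, this.2⟩, hwF⟩
        rw [hgap'] at this
        exact this
      · have : max x y ≤ z :=
          le_trans (le_trans (hleQ v j _ hmaxK) (hQP v j m hmj hm)) (hPle v m z hzm)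
        exact absurd hz1.2 (not_lt.mpr this)
    · have h1 : max x y - min x y = |x - y| := max_sub_min_eq_abs' x y
      have h2 : x - y = ρ e * (a' - b') := by rw [hx, hy]; ring
      rw [h1, h2, abs_mul, abs_sub_comm, abs_of_pos (by linarith : (0:ℝ) < b' - a')]
  -- scaled gaps are gaps (edge form)
  have hscale : ∀ e, ∀ l, l ∈ gapLengths (F (ω e)) → |ρ e| * l ∈ gapLengths (F (α e)) := by
    intro e l hl
    obtain ⟨j, hj, hje⟩ := (hen (α e)).surjOn (show e ∈ {e' : E | α e' = α e} from rfl)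
    have h := hscaleK (α e) j hj
    rw [hje] at h
    exact h l hl
  -- decomposition of an arbitrary gap
  have hdec : ∀ v a b, a ∈ F v → b ∈ F v → a < b → Set.Ioo a b ∩ F v = ∅ →
      b - a ∈ Λ v ∨ ∃ e, α e = v ∧ ∃ l ∈ gapLengths (F (ω e)), b - a = |ρ e| * l := by
    intro v a b ha hb hab hgap
    have hnm : ∀ z, z ∈ F v → ¬ (a < z ∧ z < b) := by
      intro z hz hzz
      have : z ∈ Set.Ioo a b ∩ F v := ⟨⟨hzz.1, hzz.2⟩, hz⟩
      rw [hgap] at this; exact this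
    obtain ⟨j0, hj0, haj⟩ := hFsubK v a ha
    obtain ⟨k0, hk0, hbk⟩ := hFsubK v b hb
    have hjk : j0 ≤ k0 := by
      by_contra h
      push_neg at h
      have h1 := hleQ v k0 b hbk
      have h2 := hPle v j0 a haj
      have h3 := hQP v k0 j0 h hj0
      linarith
    suffices H : ∀ n j k, k - j ≤ n → j ≤ k → k < d v → a ∈ K v j → b ∈ K v k →
        b - a ∈ Λ v ∨ ∃ e, α e = v ∧ ∃ l ∈ gapLengths (F (ω e)), b - a = |ρ e| * l by
      exact H (k0 - j0) j0 k0 le_rfl hjk hk0 haj hbk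
    intro n
    induction n with
    | zero =>
      intro j k h1 h2 hk haj hbk
      have hjk2 : j = k := by omega
      rw [hjk2] at haj
      exact Or.inr (hsame v k hk a b haj hbk hab hgap)
    | succ n IH =>
      intro j k h1 h2 hk haj hbk
      rcases eq_or_lt_of_le h2 with heq | hjk'
      · rw [heq] at haj
        exact Or.inr (hsame v k hk a b haj hbk hab hgap)
      · have hjd : j < d v := by omega
        have hQj : Q v j = a ∨ Q v j = b := by
          have m1 : a ≤ Q v j := hleQ v j a haj
          have m2 : Q v j ≤ b := le_trans (hQP v j k hjk' hk) (hPle v k b hbk)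
          have mF : Q v j ∈ F v := hKsubF v j hjd (hQmem v j)
          rcases eq_or_lt_of_le m1 with h | h
          · exact Or.inl h.symm
          rcases eq_or_lt_of_le m2 with h' | h'
          · exact Or.inr h'
          exact absurd ⟨h, h'⟩ (hnm _ mF)
        rcases hQj with hQa | hQb
        · -- Q v j = a
          have hPk : P v k = a ∨ P v k = b := by
            have m1 : a ≤ P v k := hQa ▸ hQP v j k hjk' hk
            have m2 : P v k ≤ b := hPle v k b hbk
            have mF : P v k ∈ F v := hKsubF v k hk (hPmem v k)
            rcases eq_or_lt_of_le m1 with h | h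
            · exact Or.inl h.symm
            rcases eq_or_lt_of_le m2 with h' | h'
            · exact Or.inr h'
            exact absurd ⟨h, h'⟩ (hnm _ mF)
          rcases hPk with hPa | hPb
          · exact Or.inr (hsame v k hk a b (hPa ▸ hPmem v k) hbk hab hgap)
          · by_cases hk1 : k = j + 1
            · left
              rw [hΛ v]
              refine ⟨by linarith, j, by omega, ?_⟩
              rw [hlam2 v j (by omega), ← hk1, hPb, hQa]
            · have hj1 : j + 1 < k := by omega
              have hx1 : a ≤ P v (j+1) := hQa ▸ hQP v j (j+1) (by omega) (by omega)
              have hx2 : P v (j+1) ≤ b :=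
                hPb ▸ le_trans (hPQ v (j+1)) (hQP v (j+1) k hj1 hk)
              have hxF : P v (j+1) ∈ F v := hKsubF v (j+1) (by omega) (hPmem v (j+1))
              rcases eq_or_lt_of_le hx1 with h | h
              · exact IH (j+1) k (by omega) (by omega) hk (h ▸ hPmem v (j+1)) hbk
              rcases eq_or_lt_of_le hx2 with h' | h'
              · left
                rw [hΛ v]
                refine ⟨by linarith, j, by omega, ?_⟩
                rw [hlam2 v j (by omega), h', hQa]
              · exact absurd ⟨h, h'⟩ (hnm _ hxF)
        · exact Or.inr (hsame v j hjd a b haj (hQb ▸ hQmem v j) hab hgap)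
  -- bounds on gap lengths
  have hgapub : ∀ v l, l ∈ gapLengths (F v) → 0 < l ∧ l ≤ sSup (F v) - sInf (F v) := by
    rintro v l ⟨a, b, ha, hb, hab, -, rfl⟩
    have h1 : b ≤ sSup (F v) := le_csSup (hFcomp v).bddAbove hb
    have h2 : sInf (F v) ≤ a := csInf_le (hFcomp v).bddBelow ha
    exact ⟨by linarith, by linarith⟩
  -- an edge exists
  obtain ⟨x0, hx0⟩ := hFne u
  rw [hFeq u] at hx0
  simp only [Set.mem_iUnion, Set.mem_setOf_eq] at hx0
  obtain ⟨e0, -, -⟩ := hx0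
  have hEne : (Finset.univ : Finset E).Nonempty := ⟨e0, Finset.mem_univ e0⟩
  have hVne : (Finset.univ : Finset V).Nonempty := ⟨u, Finset.mem_univ u⟩
  set r : ℝ := Finset.univ.sup' hEne (fun e => |ρ e|) with hrdef
  set D : ℝ := Finset.univ.sup' hVne (fun v => sSup (F v) - sInf (F v)) with hDdef
  have hrle : ∀ e, |ρ e| ≤ r := fun e => Finset.le_sup' (fun e => |ρ e|) (Finset.mem_univ e)
  have hr1 : r < 1 := (Finset.sup'_lt_iff hEne).mpr (fun e _ => (hρ e).1)
  have hr0 : 0 < r := lt_of_lt_of_le (abs_pos.mpr (hρ e0).2) (hrle e0)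
  have hDle : ∀ v, sSup (F v) - sInf (F v) ≤ D := fun v => Finset.le_sup' (fun v => sSup (F v) - sInf (F v)) (Finset.mem_univ v)
  -- forward inclusion, by induction on the scale
  have hsub1 : ∀ n v l, l ∈ gapLengths (F v) → D * r ^ n < l →
      l ∈ Λ v ∨ ∃ w, ∃ t ∈ Λ w, ∃ p : List E,
        IsPathFromTo α ω p v w ∧ l = t * |(p.map ρ).prod| := by
    intro n
    induction n with
    | zero =>
      intro v l hl hn
      exfalso
      obtain ⟨h1, h2⟩ := hgapub v l hl
      have := hDle v
      simp only [pow_zero, mul_one] at hn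
      linarith
    | succ n IH =>
      intro v l hl hn
      obtain ⟨a, b, ha, hb, hab, hgap, rfl⟩ := hl
      rcases hdec v a b ha hb hab hgap with h | ⟨e, hαe, l', hl', heq⟩
      · exact Or.inl h
      · have hl'pos : 0 < l' := (hgapub (ω e) l' hl').1
        have hρpos : 0 < |ρ e| := abs_pos.mpr (hρ e).2
        have hlt : D * r ^ n < l' := by
          have h4 : (D * r ^ n) * r < l' * r := by
            have e1 : (D * r ^ n) * r = D * r ^ (n+1) := by ring
            rw [e1]
            calc D * r ^ (n+1) < |ρ e| * l' := heq ▸ hn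
              _ ≤ r * l' := mul_le_mul_of_nonneg_right (hrle e) hl'pos.le
              _ = l' * r := mul_comm _ _
          exact lt_of_mul_lt_mul_right h4 hr0.le
        rcases IH (ω e) l' hl' hlt with h | ⟨w, t, ht, p, hp, hxeq⟩
        · right
          refine ⟨ω e, l', h, [e], ⟨List.cons_ne_nil _ _, List.isChain_singleton _, ?_, ?_⟩, ?_⟩
          · intro f hf
            simp only [List.head?_cons, Option.mem_def, Option.some.injEq] at hf
            rw [← hf]; exact hαe
          · intro f hf
            simp only [List.getLast?_singleton, Option.mem_def, Option.some.injEq] at hf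
            rw [← hf]
          · rw [heq]
            simp [abs_mul, mul_comm]
        · right
          refine ⟨w, t, ht, e :: p, ⟨List.cons_ne_nil _ _, ?_, ?_, ?_⟩, ?_⟩
          · exact List.isChain_cons.mpr ⟨fun f hf => (hp.2.2.1 f hf).symm, hp.2.1⟩
          · intro f hf
            simp only [List.head?_cons, Option.mem_def, Option.some.injEq] at hf
            rw [← hf]; exact hαe
          · intro f hf
            obtain ⟨g, q, rfl⟩ := List.exists_cons_of_ne_nil hp.1
            rw [List.getLast?_cons_cons] at hf
            exact hp.2.2.2 f hf
          · rw [heq, hxeq]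
            simp only [List.map_cons, List.prod_cons, abs_mul]
            ring
  -- reverse inclusion: scaled basic gaps along paths are gaps
  have hsub2 : ∀ p : List E, ∀ w t, t ∈ Λ w → ∀ s, IsPathFromTo α ω p s w →
      t * |(p.map ρ).prod| ∈ gapLengths (F s) := by
    intro p
    induction p with
    | nil => intro w t ht s hp; exact absurd rfl hp.1
    | cons e q IH =>
      intro w t ht s hp
      obtain ⟨-, hch, hhd, hlst⟩ := hp
      have hαe : α e = s := hhd e rfl
      rcases eq_or_ne q [] with rfl | hq
      · have hωe : ω e = w := hlst e rfl
        have ht' : t ∈ gapLengths (F (ω e)) := by rw [hωe]; exact hΛgap w t ht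
        have h2 := hscale e t ht'
        rw [hαe] at h2
        have h3 : t * |([e].map ρ).prod| = |ρ e| * t := by
          simp [mul_comm]
        rw [h3]
        exact h2
      · have hq' : IsPathFromTo α ω q (ω e) w := by
          obtain ⟨h1, h2⟩ := List.isChain_cons.mp hch
          refine ⟨hq, h2, fun f hf => (h1 f hf).symm, ?_⟩
          intro f hf
          apply hlst
          obtain ⟨g, q', rfl⟩ := List.exists_cons_of_ne_nil hq
          rw [List.getLast?_cons_cons]
          exact hf
        have h2 := IH w t ht (ω e) hq'
        have h3 := hscale e _ h2
        rw [hαe] at h3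
        have h4 : t * |((e :: q).map ρ).prod| = |ρ e| * (t * |(q.map ρ).prod|) := by
          simp only [List.map_cons, List.prod_cons, abs_mul]
          ring
        rw [h4]
        exact h3
  -- final assembly
  apply Set.Subset.antisymm
  · intro l hl
    have hl0 : 0 < l := (hgapub u l hl).1
    have htend : Filter.Tendsto (fun n : ℕ => D * r ^ n) Filter.atTop (nhds 0) := by
      simpa using (tendsto_pow_atTop_nhds_zero_of_lt_one hr0.le hr1).const_mul D
    obtain ⟨n, hn⟩ := (htend.eventually_lt_const hl0).exists
    rcases hsub1 n u l hl hn with h | h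
    · exact Or.inl h
    · exact Or.inr h
  · rintro x (hx | hx)
    · exact hΛgap u x hx
    · obtain ⟨w, t, ht, p, hp, rfl⟩ := hx
      exact hsub2 p w t ht u hp
end

section
/- Let n ≥ 1, let A = {a_1,…,a_n} ⊂ (0,1) be a finite set, let λ_1,…,λ_m be positive real numbers (not necessarily distinct), and let Θ = ⋃_{j=1}^m λ_j A_j where each A_j ⊆ A^{ℤ₊}. Then R_Θ(θ) ⊆ A^{ℚ₊*} for every θ ∈ Θ. -/
/-- `A^{ℚ₊*}`: all products `∏ a^(q a)` over nonzero vectors `q` of nonnegative rationals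
indexed by the elements of `A` (exponents supported in `A`). -/
def qPosStar (A : Set ℝ) : Set ℝ :=
  {x | ∃ q : ℝ → ℚ, (∀ a, q a ≠ 0 → a ∈ A) ∧ (Function.support q).Finite ∧ q ≠ 0 ∧
    (∀ a, 0 ≤ q a) ∧ x = ∏ᶠ a, a ^ ((q a : ℝ))}

/-- `A^{ℤ₊*}`: all products `∏ a^(m a)` over nonzero vectors `m` of nonnegative integers. -/
def natStar (A : Set ℝ) : Set ℝ :=
  {x | ∃ m : ℝ → ℕ, (∀ a, m a ≠ 0 → a ∈ A) ∧ (Function.support m).Finite ∧ m ≠ 0 ∧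
    x = ∏ᶠ a, a ^ (m a)}

/-- `A^{ℤ₊} = {1} ∪ A^{ℤ₊*}`. -/
def natPowSet (A : Set ℝ) : Set ℝ := {1} ∪ natStar A

/-- `R_Θ(θ)`: common ratios of strictly decreasing geometric sequences in `Θ` containing `θ`. -/
def ratioSet (Θ : Set ℝ) (θ : ℝ) : Set ℝ :=
  {r | 0 < r ∧ r < 1 ∧ ∃ θ' ∈ Θ, (∃ k : ℕ, θ = θ' * r ^ k) ∧ ∀ k : ℕ, θ' * r ^ k ∈ Θ}

/-- Any element of `natPowSet A` can be written as a finite product over `A` with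
natural exponents (possibly all zero). -/
lemma natPowSet_rep {A : Set ℝ} (hAfin : A.Finite) {x : ℝ} (hx : x ∈ natPowSet A) :
    ∃ M : ℝ → ℕ, (∀ a, M a ≠ 0 → a ∈ A) ∧ x = ∏ a ∈ hAfin.toFinset, a ^ M a := by
  rcases hx with hx | hx
  · refine ⟨0, by simp, ?_⟩
    simp [Set.mem_singleton_iff.mp hx]
  · obtain ⟨M, hMsupp, _, _, hMx⟩ := hx
    refine ⟨M, hMsupp, ?_⟩
    rw [hMx]
    apply finprod_eq_prod_of_mulSupport_subset
    intro a ha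
    have hMa : M a ≠ 0 := by
      intro h0
      apply ha
      simp [h0]
    simpa using hMsupp a hMa

theorem stmt1 (A : Set ℝ) (hAfin : A.Finite) (hAsub : A ⊆ Set.Ioo 0 1) (hAne : A.Nonempty)
    (m : ℕ) (hm : 0 < m) (lam : Fin m → ℝ) (hlam : ∀ j, 0 < lam j)
    (Asub : Fin m → Set ℝ) (hAj : ∀ j, Asub j ⊆ natPowSet A)
    (Θ : Set ℝ) (hΘ : Θ = ⋃ j, (fun x => lam j * x) '' Asub j) :
    ∀ θ ∈ Θ, ratioSet Θ θ ⊆ qPosStar A := by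
  classical
  intro θ _ r hr
  obtain ⟨hr0, hr1, θ', _, _, hseq⟩ := hr
  set F := hAfin.toFinset with hF
  have hFpos : ∀ a ∈ F, (0:ℝ) < a := fun a ha => (hAsub (hAfin.mem_toFinset.mp ha)).1
  -- choose for each k an index j k and exponent vector M k
  have hchoice : ∀ k : ℕ, ∃ (j : Fin m) (M : ℝ → ℕ), (∀ a, M a ≠ 0 → a ∈ A) ∧
      θ' * r ^ k = lam j * ∏ a ∈ F, a ^ M a := by
    intro k
    have hk := hseq k
    rw [hΘ] at hk
    simp only [Set.mem_iUnion, Set.mem_image] at hk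
    obtain ⟨j, x, hxA, hx⟩ := hk
    obtain ⟨M, hM, hMx⟩ := natPowSet_rep hAfin (hAj j hxA)
    exact ⟨j, M, hM, by rw [← hx, hMx]⟩
  choose j M hMsupp hMeq using hchoice
  -- pigeonhole: some j0 has infinite fiber
  obtain ⟨j0, hj0⟩ := Finite.exists_infinite_fiber j
  haveI : Infinite (j ⁻¹' {j0} : Set ℕ) := hj0
  set e := Nat.orderEmbeddingOfSet (j ⁻¹' {j0}) with he_def
  have he : ∀ n, j (e n) = j0 := by
    intro n
    have : e n ∈ j ⁻¹' {j0} := by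
      rw [← Nat.orderEmbeddingOfSet_range (j ⁻¹' {j0})]
      exact Set.mem_range_self n
    exact this
  -- Dickson: find p < q with componentwise M (e p) ≤ M (e q)
  haveI : Finite ↥A := hAfin.to_subtype
  obtain ⟨p, q1, hpq, hle⟩ := (wellQuasiOrdered_le (α := ↥A → ℕ))
    (fun n (a : ↥A) => M (e n) a)
  set s := e p with hs_def
  set t := e q1 with ht_def
  have hst : s < t := e.strictMono hpq
  set d := t - s with hd_def
  have hd : 0 < d := Nat.sub_pos_of_lt hst
  have htsd : t = s + d := by omega
  have hMle : ∀ a, M s a ≤ M t a := by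
    intro a
    by_cases ha : a ∈ A
    · exact hle ⟨a, ha⟩
    · have h1 : M s a = 0 := by
        by_contra h; exact ha (hMsupp s a h)
      have h2 : M t a = 0 := by
        by_contra h; exact ha (hMsupp t a h)
      omega
  set c : ℝ → ℕ := fun a => M t a - M s a with hc_def
  -- derive r ^ d = ∏ a ^ c a
  have hPs : (0:ℝ) < ∏ a ∈ F, a ^ M s a :=
    Finset.prod_pos fun a ha => pow_pos (hFpos a ha) _
  have heq : (∏ a ∈ F, a ^ M s a) * r ^ d = (∏ a ∈ F, a ^ M s a) * ∏ a ∈ F, a ^ c a := by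
    have h1 := hMeq s
    have h2 := hMeq t
    rw [he p] at h1
    rw [he q1] at h2
    have hrt : θ' * r ^ t = θ' * r ^ s * r ^ d := by
      rw [htsd, pow_add, mul_assoc]
    rw [h1, h2] at hrt
    have hlam0 := hlam j0
    have hPt : (∏ a ∈ F, a ^ M t a) = (∏ a ∈ F, a ^ M s a) * ∏ a ∈ F, a ^ c a := by
      rw [← Finset.prod_mul_distrib]
      apply Finset.prod_congr rfl
      intro a _
      rw [← pow_add]
      congr 1
      have := hMle a
      simp only [hc_def]
      omega
    rw [hPt, mul_assoc] at hrt
    have := mul_left_cancel₀ (ne_of_gt hlam0) hrt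
    linarith [this]
  have hrd : r ^ d = ∏ a ∈ F, a ^ c a := mul_left_cancel₀ (ne_of_gt hPs) heq
  -- c is not identically zero
  have hcne : ∃ a, c a ≠ 0 := by
    by_contra hall
    push_neg at hall
    have : r ^ d = 1 := by
      rw [hrd]
      apply Finset.prod_eq_one
      intro a _
      rw [hall a, pow_zero]
    have hlt : r ^ d < 1 := pow_lt_one₀ hr0.le hr1 hd.ne'
    linarith
  obtain ⟨a0, ha0⟩ := hcne
  -- the rational exponent vector
  refine ⟨fun a => (c a : ℚ) / (d : ℚ), ?_, ?_, ?_, ?_, ?_⟩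
  · intro a ha
    have hca : c a ≠ 0 := by
      intro h; apply ha; simp [h]
    by_contra haA
    have h1 : M s a = 0 := by
      by_contra h; exact haA (hMsupp s a h)
    have h2 : M t a = 0 := by
      by_contra h; exact haA (hMsupp t a h)
    apply hca
    simp [hc_def, h1, h2]
  · apply hAfin.subset
    intro a ha
    simp only [Function.mem_support] at ha
    have hca : c a ≠ 0 := by
      intro h; apply ha; simp [h]
    by_contra haA
    have h1 : M s a = 0 := by
      by_contra h; exact haA (hMsupp s a h)
    have h2 : M t a = 0 := by
      by_contra h; exact haA (hMsupp t a h)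
    apply hca
    simp [hc_def, h1, h2]
  · intro h0
    have := congrFun h0 a0
    simp only [Pi.zero_apply, div_eq_zero_iff, Nat.cast_eq_zero] at this
    rcases this with h | h
    · exact ha0 h
    · exact hd.ne' h
  · intro a
    positivity
  · -- r = ∏ᶠ a, a ^ (q a)
    have hsupp : Function.mulSupport (fun a : ℝ => a ^ (((c a : ℚ) / (d : ℚ) : ℚ) : ℝ)) ⊆ ↑F := by
      intro a ha
      simp only [Function.mem_mulSupport] at ha
      have hca : c a ≠ 0 := by
        intro h
        apply ha
        simp [h]
      have haA : a ∈ A := by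
        by_contra haA
        have h1 : M s a = 0 := by
          by_contra h; exact haA (hMsupp s a h)
        have h2 : M t a = 0 := by
          by_contra h; exact haA (hMsupp t a h)
        exact hca (by simp [hc_def, h1, h2])
      simpa [hF] using haA
    rw [finprod_eq_prod_of_mulSupport_subset _ hsupp]
    set P := ∏ a ∈ F, a ^ (((c a : ℚ) / (d : ℚ) : ℚ) : ℝ) with hP_def
    have hPpos : 0 < P :=
      Finset.prod_pos fun a ha => Real.rpow_pos_of_pos (hFpos a ha) _
    have hPd : P ^ d = r ^ d := by
      rw [hP_def, ← Finset.prod_pow, hrd]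
      apply Finset.prod_congr rfl
      intro a ha
      have hapos := hFpos a ha
      rw [← Real.rpow_natCast (a ^ (((c a : ℚ) / (d : ℚ) : ℚ) : ℝ)) d,
        ← Real.rpow_mul hapos.le]
      have : (((c a : ℚ) / (d : ℚ) : ℚ) : ℝ) * (d : ℕ) = (c a : ℕ) := by
        push_cast
        field_simp
      rw [this, Real.rpow_natCast]
    exact ((pow_left_inj₀ hr0.le hPpos.le hd.ne').mp hPd.symm)
end

section
/- Let n ≥ 1, let A = {a_1,…,a_n} ⊂ (0,1) be a finite set, let λ_1,…,λ_m be positive real numbers (not necessarily distinct), and let Θ = ⋃_{j=1}^m λ_j A_j where each A_j ⊆ A^{ℤ₊}. Suppose that λ_p/λ_q ∉ A^{ℚ} for all distinct p, q ∈ {1,…,m} (a vacuous condition when m = 1). Then for every θ' > 0 and r ∈ (0,1) with {θ'·r^k : k = 0,1,2,…} ⊆ Θ, there exists a unique l ∈ {1,…,m} such that {θ'·r^k : k = 0,1,2,…} ⊆ λ_l A_l; moreover θ'·r^k ∉ λ_j A_j for every j ≠ l and every k ≥ 0. -/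
/-- `A^{ℚ*}`: all products `∏ a^(q a)` over nonzero vectors `q` of rationals
indexed by the elements of `A`. -/
def qStar (A : Set ℝ) : Set ℝ :=
  {x | ∃ q : ℝ → ℚ, (∀ a, q a ≠ 0 → a ∈ A) ∧ (Function.support q).Finite ∧ q ≠ 0 ∧
    x = ∏ᶠ a, a ^ ((q a : ℝ))}

/-- `A^{ℚ} = {1} ∪ A^{ℚ*}`. -/
def qFull (A : Set ℝ) : Set ℝ := {1} ∪ qStar A

/-- Auxiliary set: products over a fixed finset with rational exponents. -/
def Qset (A : Set ℝ) (s : Finset ℝ) : Set ℝ :=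
  {x | ∃ q : ℝ → ℚ, (∀ a, q a ≠ 0 → a ∈ A) ∧ x = ∏ a ∈ s, a ^ ((q a : ℝ))}

lemma Qset_one (A : Set ℝ) (s : Finset ℝ) : (1 : ℝ) ∈ Qset A s :=
  ⟨0, fun _ h => absurd rfl h, by simp⟩

lemma Qset_pos {A : Set ℝ} {s : Finset ℝ} (hA : A ⊆ Set.Ioo 0 1) (hs : (s : Set ℝ) = A)
    {x : ℝ} (hx : x ∈ Qset A s) : 0 < x := by
  obtain ⟨q, -, rfl⟩ := hx
  refine Finset.prod_pos fun a ha => ?_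
  have haA : a ∈ A := by rw [← hs]; exact ha
  exact Real.rpow_pos_of_pos (hA haA).1 _

lemma Qset_mul {A : Set ℝ} {s : Finset ℝ} (hA : A ⊆ Set.Ioo 0 1)
    {x y : ℝ} (hx : x ∈ Qset A s) (hy : y ∈ Qset A s) : x * y ∈ Qset A s := by
  obtain ⟨q1, h1, rfl⟩ := hx
  obtain ⟨q2, h2, rfl⟩ := hy
  refine ⟨q1 + q2, fun a h => ?_, ?_⟩
  · rcases eq_or_ne (q1 a) 0 with h' | h'
    · exact h2 a (by simpa [h'] using h)
    · exact h1 a h'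
  · rw [← Finset.prod_mul_distrib]
    refine Finset.prod_congr rfl fun a _ => ?_
    by_cases h1' : q1 a = 0
    · by_cases h2' : q2 a = 0
      · simp [h1', h2']
      · have hpos : (0:ℝ) < a := (hA (h2 a h2')).1
        rw [Pi.add_apply]; push_cast; rw [Real.rpow_add hpos]
    · have hpos : (0:ℝ) < a := (hA (h1 a h1')).1
      rw [Pi.add_apply]; push_cast; rw [Real.rpow_add hpos]

lemma Qset_div {A : Set ℝ} {s : Finset ℝ} (hA : A ⊆ Set.Ioo 0 1)
    {x y : ℝ} (hx : x ∈ Qset A s) (hy : y ∈ Qset A s) : x / y ∈ Qset A s := by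
  obtain ⟨q1, h1, rfl⟩ := hx
  obtain ⟨q2, h2, rfl⟩ := hy
  refine ⟨q1 - q2, fun a h => ?_, ?_⟩
  · rcases eq_or_ne (q1 a) 0 with h' | h'
    · exact h2 a (by intro h0; apply h; simp [h', h0])
    · exact h1 a h'
  · rw [← Finset.prod_div_distrib]
    refine Finset.prod_congr rfl fun a _ => ?_
    by_cases h1' : q1 a = 0
    · by_cases h2' : q2 a = 0
      · simp [h1', h2']
      · have hpos : (0:ℝ) < a := (hA (h2 a h2')).1
        rw [Pi.sub_apply]; push_cast; rw [Real.rpow_sub hpos]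
    · have hpos : (0:ℝ) < a := (hA (h1 a h1')).1
      rw [Pi.sub_apply]; push_cast; rw [Real.rpow_sub hpos]

lemma Qset_pow {A : Set ℝ} {s : Finset ℝ} (hA : A ⊆ Set.Ioo 0 1)
    {x : ℝ} (hx : x ∈ Qset A s) (n : ℕ) : x ^ n ∈ Qset A s := by
  induction n with
  | zero => simpa using Qset_one A s
  | succ n ih => rw [pow_succ]; exact Qset_mul hA ih hx

lemma Qset_root {A : Set ℝ} {s : Finset ℝ} (hA : A ⊆ Set.Ioo 0 1) (hs : (s : Set ℝ) = A)
    {x r : ℝ} {d : ℕ} (hd : d ≠ 0) (hr : 0 < r) (hx : x ∈ Qset A s) (h : r ^ d = x) :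
    r ∈ Qset A s := by
  obtain ⟨q, hq, rfl⟩ := hx
  have hqmem : ∀ a : ℝ, q a / (d : ℚ) ≠ 0 → a ∈ A := by
    intro a h'
    exact hq a (fun h0 => h' (by simp [h0]))
  refine ⟨fun a => q a / (d : ℚ), hqmem, ?_⟩
  have hp : 0 < ∏ a ∈ s, a ^ (((q a / (d : ℚ) : ℚ)) : ℝ) :=
    Qset_pos hA hs ⟨fun a => q a / (d : ℚ), hqmem, rfl⟩
  have key : (∏ a ∈ s, a ^ (((q a / (d : ℚ) : ℚ)) : ℝ)) ^ d = ∏ a ∈ s, a ^ ((q a : ℝ)) := by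
    rw [← Finset.prod_pow]
    refine Finset.prod_congr rfl fun a _ => ?_
    by_cases h0 : q a = 0
    · simp [h0]
    · have hpos : (0:ℝ) < a := (hA (hq a h0)).1
      rw [← Real.rpow_natCast (a ^ (((q a / (d : ℚ) : ℚ)) : ℝ)) d, ← Real.rpow_mul hpos.le]
      congr 1
      have hdq : ((d : ℚ) : ℝ) ≠ 0 := by exact_mod_cast Nat.cast_ne_zero.mpr hd
      push_cast
      field_simp
  have : r ^ d = (∏ a ∈ s, a ^ (((q a / (d : ℚ) : ℚ)) : ℝ)) ^ d := by rw [key, h]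
  exact (pow_left_strictMonoOn₀ (M₀ := ℝ) hd).injOn hr.le hp.le this

lemma natPowSet_subset_Qset {A : Set ℝ} {s : Finset ℝ} (hs : (s : Set ℝ) = A) :
    natPowSet A ⊆ Qset A s := by
  rintro x (hx | ⟨f, hf, -, -, rfl⟩)
  · rw [Set.mem_singleton_iff] at hx
    rw [hx]; exact Qset_one A s
  · refine ⟨fun a => (f a : ℚ), fun a h => hf a (fun h0 => h (by simp [h0])), ?_⟩
    have hsub : Function.mulSupport (fun a : ℝ => a ^ f a) ⊆ (s : Set ℝ) := by
      intro a ha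
      have hfa : f a ≠ 0 := by
        intro h0
        apply ha; simp [h0]
      rw [hs]; exact hf a hfa
    rw [finprod_eq_prod_of_mulSupport_subset _ hsub]
    refine Finset.prod_congr rfl fun a _ => ?_
    rw [show (((f a : ℚ) : ℚ) : ℝ) = ((f a : ℕ) : ℝ) by push_cast; ring, Real.rpow_natCast]

lemma Qset_subset_qFull {A : Set ℝ} {s : Finset ℝ} (hs : (s : Set ℝ) = A) :
    Qset A s ⊆ qFull A := by
  rintro x ⟨q, hq, rfl⟩
  by_cases h0 : q = 0
  · left
    simp [h0]
  · right
    refine ⟨q, hq, ?_, h0, ?_⟩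
    · exact s.finite_toSet.subset (fun a ha => by rw [hs]; exact hq a ha)
    · rw [finprod_eq_prod_of_mulSupport_subset]
      intro a ha
      have hqa : q a ≠ 0 := fun h => ha (by simp [h])
      rw [hs]; exact hq a hqa

theorem stmt2 (A : Set ℝ) (hAfin : A.Finite) (hAsub : A ⊆ Set.Ioo 0 1) (hAne : A.Nonempty)
    (m : ℕ) (hm : 0 < m) (lam : Fin m → ℝ) (hlam : ∀ j, 0 < lam j)
    (Asub : Fin m → Set ℝ) (hAj : ∀ j, Asub j ⊆ natPowSet A)
    (Θ : Set ℝ) (hΘ : Θ = ⋃ j, (fun x => lam j * x) '' Asub j)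
    (hsep : ∀ p q : Fin m, p ≠ q → lam p / lam q ∉ qFull A) :
    ∀ θ' r : ℝ, 0 < θ' → 0 < r → r < 1 → (∀ k : ℕ, θ' * r ^ k ∈ Θ) →
      ∃ l : Fin m,
        (∀ k : ℕ, θ' * r ^ k ∈ (fun x => lam l * x) '' Asub l) ∧
        (∀ l' : Fin m, (∀ k : ℕ, θ' * r ^ k ∈ (fun x => lam l' * x) '' Asub l') → l' = l) ∧
        (∀ j : Fin m, j ≠ l → ∀ k : ℕ, θ' * r ^ k ∉ (fun x => lam j * x) '' Asub j) := by
  intro θ' r hθ hr0 hr1 hk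
  classical
  set s := hAfin.toFinset with hs_def
  have hs : (s : Set ℝ) = A := hAfin.coe_toFinset
  have hmem : ∀ k : ℕ, ∃ p : Fin m, θ' * r ^ k ∈ (fun x => lam p * x) '' Asub p := by
    intro k
    have := hk k
    rw [hΘ, Set.mem_iUnion] at this
    exact this
  choose j hj using hmem
  have hQb : ∀ (p : Fin m) (k : ℕ), θ' * r ^ k ∈ (fun x => lam p * x) '' Asub p →
      ∃ b : ℝ, 0 < b ∧ b ∈ Qset A s ∧ θ' * r ^ k = lam p * b := by
    rintro p k ⟨b, hb, heq⟩
    have hbQ : b ∈ Qset A s := natPowSet_subset_Qset hs (hAj p hb)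
    exact ⟨b, Qset_pos hAsub hs hbQ, hbQ, heq.symm⟩
  have hθne : θ' ≠ 0 := hθ.ne'
  -- Step 1: r ∈ Qset A s
  have hrQ : r ∈ Qset A s := by
    have key : ∀ k1 k2 : ℕ, k1 < k2 → j k1 = j k2 → r ∈ Qset A s := by
      intro k1 k2 hlt hjeq
      obtain ⟨b1, hb1, hb1Q, he1⟩ := hQb _ _ (hj k1)
      obtain ⟨b2, hb2, hb2Q, he2⟩ := hQb _ _ (hj k2)
      rw [← hjeq] at he2
      have hcross : (θ' * r ^ k1) * b2 = (θ' * r ^ k2) * b1 := by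
        rw [he1, he2]; ring
      have h2 : r ^ k1 * b2 = r ^ k2 * b1 :=
        mul_left_cancel₀ hθne (by linear_combination hcross)
      have hd : r ^ (k2 - k1) = b2 / b1 := by
        rw [pow_sub₀ r hr0.ne' hlt.le, ← div_eq_mul_inv,
          div_eq_div_iff (pow_pos hr0 k1).ne' hb1.ne']
        linear_combination -h2
      exact Qset_root hAsub hs (Nat.sub_ne_zero_of_lt hlt) hr0
        (Qset_div hAsub hb2Q hb1Q) hd
    obtain ⟨k1, k2, hne, hjj⟩ := Finite.exists_ne_map_eq_of_infinite j
    rcases hne.lt_or_gt with h | h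
    · exact key k1 k2 h hjj
    · exact key k2 k1 h hjj.symm
  -- Step 2: uniqueness
  have huniq : ∀ (p : Fin m) (k : ℕ), θ' * r ^ k ∈ (fun x => lam p * x) '' Asub p → p = j 0 := by
    intro p k hp
    by_contra hne
    obtain ⟨b1, hb1, hb1Q, he1⟩ := hQb _ _ (hj 0)
    obtain ⟨b2, hb2, hb2Q, he2⟩ := hQb _ _ hp
    have he1' : θ' = lam (j 0) * b1 := by simpa using he1
    have hcross : lam p * b2 = lam (j 0) * b1 * r ^ k := by
      rw [← he2, he1']
    have hratio : lam p / lam (j 0) = b1 / b2 * r ^ k := by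
      rw [div_eq_iff (hlam (j 0)).ne', div_mul_eq_mul_div, div_mul_eq_mul_div,
        eq_div_iff hb2.ne']
      linear_combination hcross
    have hmemQ : lam p / lam (j 0) ∈ Qset A s := by
      rw [hratio]
      exact Qset_mul hAsub (Qset_div hAsub hb1Q hb2Q) (Qset_pow hAsub hrQ k)
    exact hsep p (j 0) hne (Qset_subset_qFull hs hmemQ)
  refine ⟨j 0, ?_, ?_, ?_⟩
  · intro k
    have h := huniq (j k) k (hj k)
    exact h ▸ hj k
  · intro l' hl'
    exact huniq l' 0 (hl' 0)
  · intro p hp k hcon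
    exact hp (huniq p k hcon)
end

section
/- Let X ⊂ (0,1) and Λ ⊂ (0,∞) be two finite sets. Then X^{ℤ₊*} ⊆ R_{ΛX^{ℤ₊}}(θ) ⊆ X^{ℚ₊*} for every θ ∈ ΛX^{ℤ₊}. -/
open Function

private lemma finprod_pow_eq {X : Set ℝ} (hXfin : X.Finite) (m : ℝ → ℕ)
    (hm : ∀ a, m a ≠ 0 → a ∈ X) :
    ∏ᶠ a, a ^ m a = ∏ a ∈ hXfin.toFinset, a ^ m a := by
  apply finprod_eq_prod_of_mulSupport_subset
  intro a ha
  simp only [Set.Finite.coe_toFinset]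
  exact hm a fun h => ha (by simp [h])

private lemma finprod_rpow_eq {X : Set ℝ} (hXfin : X.Finite) (q : ℝ → ℚ)
    (hq : ∀ a, q a ≠ 0 → a ∈ X) :
    ∏ᶠ a, a ^ ((q a : ℝ)) = ∏ a ∈ hXfin.toFinset, a ^ ((q a : ℝ)) := by
  apply finprod_eq_prod_of_mulSupport_subset
  intro a ha
  simp only [Set.Finite.coe_toFinset]
  exact hq a fun h => ha (by simp [h, Real.rpow_zero])

private lemma mem_natPow_iff {X : Set ℝ} {x : ℝ} :
    x ∈ natPowSet X ↔ ∃ m : ℝ → ℕ, (∀ a, m a ≠ 0 → a ∈ X) ∧ (support m).Finite ∧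
      x = ∏ᶠ a, a ^ m a := by
  constructor
  · intro h
    rcases h with h | ⟨m, hm, hfin, -, rfl⟩
    · refine ⟨0, by simp, by simp, ?_⟩
      rw [Set.mem_singleton_iff] at h
      simp [h]
    · exact ⟨m, hm, hfin, rfl⟩
  · rintro ⟨m, hm, hfin, rfl⟩
    by_cases h : m = 0
    · left; simp [h]
    · right; exact ⟨m, hm, hfin, h, rfl⟩

private lemma natPow_pos {X : Set ℝ} (hXfin : X.Finite) (hX : X ⊆ Set.Ioo 0 1) {x : ℝ}
    (hx : x ∈ natPowSet X) : 0 < x := by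
  rw [mem_natPow_iff] at hx
  obtain ⟨m, hm, hfin, rfl⟩ := hx
  rw [finprod_pow_eq hXfin m hm]
  exact Finset.prod_pos fun a ha =>
    pow_pos (hX (hXfin.mem_toFinset.mp ha)).1 _

private lemma natPow_mul {X : Set ℝ} (hXfin : X.Finite) {x y : ℝ}
    (hx : x ∈ natPowSet X) (hy : y ∈ natPowSet X) : x * y ∈ natPowSet X := by
  rw [mem_natPow_iff] at hx hy ⊢
  obtain ⟨m, hm, hmf, rfl⟩ := hx
  obtain ⟨n, hn, hnf, rfl⟩ := hy
  have hmn : ∀ a, (m + n) a ≠ 0 → a ∈ X := by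
    intro a ha
    simp only [Pi.add_apply] at ha
    by_cases h : m a = 0
    · exact hn a (by omega)
    · exact hm a h
  refine ⟨m + n, hmn, (hmf.union hnf).subset (support_add m n), ?_⟩
  · rw [finprod_pow_eq hXfin m hm, finprod_pow_eq hXfin n hn, finprod_pow_eq hXfin _ hmn,
      ← Finset.prod_mul_distrib]
    exact Finset.prod_congr rfl fun a _ => by simp [pow_add]

private lemma natPow_pow {X : Set ℝ} (hXfin : X.Finite) {x : ℝ}
    (hx : x ∈ natPowSet X) : ∀ k : ℕ, x ^ k ∈ natPowSet X := by
  intro k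
  induction k with
  | zero => left; simp
  | succ k ih => rw [pow_succ]; exact natPow_mul hXfin ih hx

theorem stmt3 (X Λ : Set ℝ) (hXfin : X.Finite) (hΛfin : Λ.Finite)
    (hX : X ⊆ Set.Ioo 0 1) (hΛ : Λ ⊆ Set.Ioi 0) :
    ∀ θ ∈ Set.image2 (· * ·) Λ (natPowSet X),
      natStar X ⊆ ratioSet (Set.image2 (· * ·) Λ (natPowSet X)) θ ∧
      ratioSet (Set.image2 (· * ·) Λ (natPowSet X)) θ ⊆ qPosStar X := by
  classical
  intro θ hθ
  obtain ⟨lam0, hlam0, x0, hx0, hθeq⟩ := hθ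
  set s : Finset ℝ := hXfin.toFinset with hs
  constructor
  · -- natStar X ⊆ ratioSet
    rintro r ⟨m, hm, hmf, hmne, rfl⟩
    set r : ℝ := ∏ᶠ a, a ^ m a with hr
    have hrprod : r = ∏ a ∈ s, a ^ m a := finprod_pow_eq hXfin m hm
    have hrmem : r ∈ natStar X := ⟨m, hm, hmf, hmne, rfl⟩
    have hrpos : 0 < r := natPow_pos hXfin hX (Set.mem_union_right _ hrmem)
    have hrlt : r < 1 := by
      obtain ⟨a0, ha0⟩ := Function.ne_iff.mp hmne
      have ha0X : a0 ∈ X := hm a0 ha0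
      have ha0s : a0 ∈ s := hXfin.mem_toFinset.mpr ha0X
      rw [hrprod, ← Finset.mul_prod_erase s _ ha0s]
      have h1 : a0 ^ m a0 < 1 :=
        pow_lt_one₀ (hX ha0X).1.le (hX ha0X).2 (by simpa using ha0)
      have h2 : ∏ a ∈ s.erase a0, a ^ m a ≤ 1 :=
        Finset.prod_le_one (fun a ha => pow_nonneg (hX (hXfin.mem_toFinset.mp
            (Finset.mem_of_mem_erase ha))).1.le _)
          (fun a ha => pow_le_one₀ (hX (hXfin.mem_toFinset.mp
            (Finset.mem_of_mem_erase ha))).1.le (hX (hXfin.mem_toFinset.mp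
            (Finset.mem_of_mem_erase ha))).2.le)
      calc a0 ^ m a0 * ∏ a ∈ s.erase a0, a ^ m a
          ≤ a0 ^ m a0 * 1 := by
            exact mul_le_mul_of_nonneg_left h2 (pow_nonneg (hX ha0X).1.le _)
        _ < 1 := by simpa using h1
    refine ⟨hrpos, hrlt, θ, ⟨lam0, hlam0, x0, hx0, hθeq⟩, ⟨0, by simp⟩, fun k => ?_⟩
    refine ⟨lam0, hlam0, x0 * r ^ k, ?_, by rw [← hθeq]; ring⟩
    exact natPow_mul hXfin hx0 (natPow_pow hXfin (Set.mem_union_right _ hrmem) k)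
  · -- ratioSet ⊆ qPosStar
    rintro r ⟨hr0, hr1, θ', hθ'mem, -, hall⟩
    have hchoice : ∀ k : ℕ, ∃ l : ℝ, l ∈ Λ ∧ ∃ m : ℝ → ℕ, (∀ a, m a ≠ 0 → a ∈ X) ∧
        θ' * r ^ k = l * ∏ a ∈ s, a ^ m a := by
      intro k
      obtain ⟨l, hl, x, hx, hxe⟩ := hall k
      rw [mem_natPow_iff] at hx
      obtain ⟨m, hm, hmf, rfl⟩ := hx
      exact ⟨l, hl, m, hm, by rw [← hxe, finprod_pow_eq hXfin m hm]⟩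
    choose lam hlam m hm heq using hchoice
    -- pigeonhole on lam
    haveI : Finite ↥Λ := hΛfin.to_subtype
    obtain ⟨y, hy⟩ := Finite.exists_infinite_fiber (fun k => (⟨lam k, hlam k⟩ : ↥Λ))
    set S : Set ℕ := (fun k => (⟨lam k, hlam k⟩ : ↥Λ)) ⁻¹' {y} with hS
    haveI : Infinite ↥S := hy
    set g : ℕ → ℕ := fun i => ((Nat.Subtype.orderIsoOfNat S) i : ℕ) with hg
    have hgmono : StrictMono g := fun i j hij => by
      simpa [hg, Subtype.coe_lt_coe] using
        (OrderIso.lt_iff_lt (Nat.Subtype.orderIsoOfNat S)).mpr hij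
    have hgS : ∀ i, g i ∈ S := fun i => ((Nat.Subtype.orderIsoOfNat S) i).2
    -- Dickson's lemma
    haveI : Finite ↥X := hXfin.to_subtype
    obtain ⟨i, j, hij, hle⟩ := (wellQuasiOrdered_le (α := ↥X → ℕ))
      (fun i (a : ↥X) => m (g i) a)
    set k1 := g i with hk1
    set k2 := g j with hk2
    have hklt : k1 < k2 := hgmono hij
    have hmle : ∀ a : ℝ, m k1 a ≤ m k2 a := by
      intro a
      by_cases haX : a ∈ X
      · exact hle ⟨a, haX⟩
      · have h1 : m k1 a = 0 := by
          by_contra h; exact haX (hm k1 a h)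
        simp [h1]
    have hlameq : lam k1 = lam k2 := by
      have h1 : (⟨lam k1, hlam k1⟩ : ↥Λ) = y := hgS i
      have h2 : (⟨lam k2, hlam k2⟩ : ↥Λ) = y := hgS j
      have := h1.trans h2.symm
      exact congrArg Subtype.val this
    set L : ℝ := lam k1 with hL
    have hLpos : 0 < L := hΛ (hlam k1)
    set n : ℝ → ℕ := fun a => m k2 a - m k1 a with hn
    have hnX : ∀ a, n a ≠ 0 → a ∈ X := by
      intro a ha
      apply hm k2
      intro h
      apply ha
      simp [hn, h]
    set d : ℕ := k2 - k1 with hd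
    have hdpos : 0 < d := Nat.sub_pos_of_lt hklt
    have hk2eq : k2 = k1 + d := by omega
    have hP1pos : 0 < ∏ a ∈ s, a ^ m k1 a :=
      Finset.prod_pos fun a ha => pow_pos (hX (hXfin.mem_toFinset.mp ha)).1 _
    have hP2 : ∏ a ∈ s, a ^ m k2 a =
        (∏ a ∈ s, a ^ m k1 a) * ∏ a ∈ s, a ^ n a := by
      rw [← Finset.prod_mul_distrib]
      refine Finset.prod_congr rfl fun a _ => ?_
      rw [← pow_add]
      congr 1
      have h := hmle a
      simp only [hn]
      omega
    have hrd : r ^ d = ∏ a ∈ s, a ^ n a := by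
      have e1 := heq k1
      have e2' : θ' * r ^ k1 * r ^ d = lam k2 * ∏ a ∈ s, a ^ m k2 a := by
        rw [mul_assoc, ← pow_add, ← hk2eq]
        exact heq k2
      rw [e1, ← hlameq, hP2, ← mul_assoc] at e2'
      exact mul_left_cancel₀ (ne_of_gt (mul_pos hLpos hP1pos)) e2'
    have hnne : ∃ a, n a ≠ 0 := by
      by_contra h
      push_neg at h
      have : r ^ d = 1 := by
        rw [hrd]
        exact Finset.prod_eq_one fun a _ => by simp [h a]
      have hlt : r ^ d < 1 := pow_lt_one₀ hr0.le hr1 hdpos.ne'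
      rw [this] at hlt
      exact lt_irrefl 1 hlt
    obtain ⟨a0, ha0⟩ := hnne
    refine ⟨fun a => (n a : ℚ) / (d : ℚ), ?_, ?_, ?_, ?_, ?_⟩
    · intro a ha
      apply hnX
      intro h
      apply ha
      simp [h]
    · apply hXfin.subset
      intro a ha
      rw [Function.mem_support] at ha
      apply hnX
      intro h
      apply ha
      simp [h]
    · intro h
      have := congrFun h a0
      simp only [Pi.zero_apply, div_eq_zero_iff] at this
      rcases this with h1 | h1
      · exact ha0 (by exact_mod_cast h1)
      · exact (Nat.cast_ne_zero.mpr hdpos.ne').elim (by exact_mod_cast h1)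
    · intro a
      positivity
    · rw [finprod_rpow_eq hXfin _ (fun a ha => hnX a fun h => ha (by simp [h]))]
      have key : ∀ a ∈ s, a ^ (((n a : ℚ) / (d : ℚ) : ℚ) : ℝ) =
          ((a : ℝ) ^ n a) ^ ((d : ℝ)⁻¹) := by
        intro a ha
        have hapos : 0 < a := (hX (hXfin.mem_toFinset.mp ha)).1
        have : (((n a : ℚ) / (d : ℚ) : ℚ) : ℝ) = (n a : ℝ) * (d : ℝ)⁻¹ := by
          push_cast
          ring
        rw [this, Real.rpow_mul hapos.le, Real.rpow_natCast]
      rw [Finset.prod_congr rfl key, Real.finset_prod_rpow s _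
        (fun a ha => pow_nonneg (hX (hXfin.mem_toFinset.mp ha)).1.le _) _, ← hrd,
        ← Real.rpow_natCast r d, ← Real.rpow_mul hr0.le,
        mul_inv_cancel₀ (by exact_mod_cast hdpos.ne'), Real.rpow_one]
end

section
/- Let (F_v)_{v∈V} be the attractors of a GD-IFS of similarities on ℝ satisfying the COSC, based on a digraph (V,E) with d_v ≥ 2 for all v ∈ V, and let A = {|ρ_e| : e ∈ E} be its absolute contraction ratio set. Assume that for some vertex u, the set F_u is not a closed interval and not a singleton, and that F_u is also the attractor of some standard IFS on ℝ satisfying the COSC, with absolute contraction ratio set X. Then for every θ ∈ GL(F_u): X ⊆ X^{ℤ₊*} ⊆ R_{GL(F_u)}(θ) ⊆ A^{ℚ₊*} ∩ X^{ℚ₊*}. -/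
section AuxLemmas

open Set Metric

lemma mem_ball_aux {x y ε : ℝ} (h : |y - x| < ε) : y ∈ Metric.ball x ε := by
  simpa [Metric.mem_ball, Real.dist_eq] using h

/-- An open bounded convex nonempty subset of ℝ is an open interval. -/
lemma open_convex_eq_Ioo {U : Set ℝ} (hne : U.Nonempty) (ho : IsOpen U)
    (hb : Bornology.IsBounded U) (hc : Convex ℝ U) :
    ∃ p q : ℝ, p < q ∧ U = Set.Ioo p q := by
  have hba : BddAbove U := hb.bddAbove
  have hbb : BddBelow U := hb.bddBelow
  have key : ∀ x ∈ U, sInf U < x ∧ x < sSup U := by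
    intro x hx
    obtain ⟨ε, hε, hball⟩ := Metric.isOpen_iff.1 ho x hx
    have h1 : x - ε/2 ∈ U := by
      apply hball; apply mem_ball_aux; rw [abs_of_neg (by linarith)]; linarith
    have h2 : x + ε/2 ∈ U := by
      apply hball; apply mem_ball_aux; rw [abs_of_pos (by linarith)]; linarith
    constructor
    · calc sInf U ≤ x - ε/2 := csInf_le hbb h1
      _ < x := by linarith
    · calc x < x + ε/2 := by linarith
      _ ≤ sSup U := le_csSup hba h2
  refine ⟨sInf U, sSup U, ?_, ?_⟩
  · obtain ⟨x, hx⟩ := hne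
    obtain ⟨k1, k2⟩ := key x hx
    linarith
  · ext x
    constructor
    · intro hx; exact key x hx
    · rintro ⟨h1, h2⟩
      obtain ⟨a, ha, hax⟩ := exists_lt_of_csInf_lt hne h1
      obtain ⟨b, hb', hxb⟩ := exists_lt_of_lt_csSup hne h2
      exact hc.ordConnected.out ha hb' ⟨hax.le, hxb.le⟩

lemma image_affine_Ioo_pos {ρ c p q : ℝ} (h : 0 < ρ) :
    (fun t => ρ * t + c) '' Set.Ioo p q = Set.Ioo (ρ * p + c) (ρ * q + c) := by
  simpa using Set.image_affine_Ioo h c p q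

lemma image_affine_Ioo_neg {ρ c p q : ℝ} (h : ρ < 0) :
    (fun t => ρ * t + c) '' Set.Ioo p q = Set.Ioo (ρ * q + c) (ρ * p + c) := by
  ext y
  constructor
  · rintro ⟨t, ⟨h1, h2⟩, rfl⟩
    simp only
    constructor <;> nlinarith
  · rintro ⟨h1, h2⟩
    refine ⟨(y - c) / ρ, ⟨?_, ?_⟩, ?_⟩
    · rw [lt_div_iff_of_neg h]; nlinarith
    · rw [div_lt_iff_of_neg h]; nlinarith
    · simp only; rw [mul_div_assoc'] ; rw [mul_comm, mul_div_assoc, div_self h.ne, mul_one]; ring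

/-- The image of an open interval under a nondegenerate affine map. -/
lemma image_affine_Ioo' {ρ c p q : ℝ} (h : ρ ≠ 0) (hpq : p < q) :
    ∃ p' q' : ℝ, p' < q' ∧ (fun t => ρ * t + c) '' Set.Ioo p q = Set.Ioo p' q' := by
  rcases lt_or_gt_of_ne h with h | h
  · exact ⟨ρ * q + c, ρ * p + c, by nlinarith, image_affine_Ioo_neg h⟩
  · exact ⟨ρ * p + c, ρ * q + c, by nlinarith, image_affine_Ioo_pos h⟩

/-- Farkas' lemma over ℚ, for `ℝ` viewed as a ℚ-vector space. -/
lemma farkasAux {ι : Type*} [DecidableEq ι] (s : Finset ι) :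
    ∀ (f : ι → ℝ) (x : ℝ),
    (∃ q : ι → ℚ, (∀ i, 0 ≤ q i) ∧ (∀ i ∉ s, q i = 0) ∧ x = ∑ i ∈ s, (q i : ℝ) * f i) ∨
    (∃ φ : ℝ →ₗ[ℚ] ℚ, (∀ i ∈ s, 0 ≤ φ (f i)) ∧ φ x < 0) := by
  classical
  induction s using Finset.induction_on with
  | empty =>
    intro f x
    by_cases hx : x = 0
    · exact Or.inl ⟨0, fun i => le_refl 0, fun i _ => rfl, by simp [hx]⟩
    · right
      have h := (Module.forall_dual_apply_eq_zero_iff ℚ x).not.2 hx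
      push_neg at h
      obtain ⟨φ, hφ⟩ := h
      rcases lt_or_gt_of_ne hφ with h1 | h1
      · exact ⟨φ, by simp, h1⟩
      · exact ⟨-φ, by simp, by simpa using h1⟩
  | @insert a s ha ih =>
    intro f x
    rcases ih f x with ⟨q, hq0, hqs, hsum⟩ | ⟨φ, hφs, hφx⟩
    · left
      refine ⟨q, hq0, fun i hi => hqs i (fun h => hi (Finset.mem_insert_of_mem h)), ?_⟩
      rw [Finset.sum_insert ha, hqs a ha]
      simpa using hsum
    · by_cases hfa : 0 ≤ φ (f a)
      · right
        refine ⟨φ, ?_, hφx⟩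
        intro i hi
        rcases Finset.mem_insert.1 hi with rfl | hi
        · exact hfa
        · exact hφs i hi
      · push_neg at hfa
        -- the projection T y = y - (φ y / φ (f a)) • f a
        set T : ℝ →ₗ[ℚ] ℝ :=
          LinearMap.id - (φ (f a))⁻¹ • (LinearMap.smulRight φ (f a)) with hT
        have hTdef : ∀ y, T y = y - ((φ (f a))⁻¹ * φ y : ℚ) • f a := by
          intro y
          simp [hT, mul_smul, LinearMap.smulRight_apply, sub_eq_sub_iff_sub_eq_sub]
        have hφT : ∀ y, φ (T y) = 0 := by
          intro y
          rw [hTdef y, map_sub, map_smul]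
          rw [smul_eq_mul]
          rw [mul_comm ((φ (f a))⁻¹), mul_assoc, inv_mul_cancel₀ hfa.ne, mul_one, sub_self]
        have hTfa : T (f a) = 0 := by
          rw [hTdef]
          rw [inv_mul_cancel₀ hfa.ne, one_smul, sub_self]
        rcases ih (fun i => T (f i)) (T x) with ⟨q, hq0, hqs, hsum⟩ | ⟨ψ, hψs, hψx⟩
        · left
          -- x = λ • f a + ∑ q i • f i
          set lam : ℚ := (φ (f a))⁻¹ * (φ x - ∑ i ∈ s, q i * φ (f i)) with hlam
          have hlam0 : 0 ≤ lam := by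
            have hs0 : 0 ≤ ∑ i ∈ s, q i * φ (f i) :=
              Finset.sum_nonneg (fun i hi => mul_nonneg (hq0 i) (hφs i hi))
            have hinv : (φ (f a))⁻¹ ≤ 0 := inv_nonpos.2 hfa.le
            rw [hlam]
            nlinarith
          refine ⟨fun i => if i = a then lam else q i, ?_, ?_, ?_⟩
          · intro i; by_cases h : i = a <;> simp [h, hlam0, hq0 i]
          · intro i hi
            have h1 : i ≠ a := fun h => hi (h ▸ Finset.mem_insert_self a s)
            have h2 : i ∉ s := fun h => hi (Finset.mem_insert_of_mem h)
            simp [h1, hqs i h2]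
          · rw [Finset.sum_insert ha]
            simp only [if_pos rfl]
            have hrw : ∀ i ∈ s, ((if i = a then lam else q i : ℚ) : ℝ) * f i
                = (q i : ℝ) * f i := by
              intro i hi
              have : i ≠ a := fun h => ha (h ▸ hi)
              simp [this]
            rw [Finset.sum_congr rfl hrw]
            -- now prove x = lam * f a + ∑ q i * f i
            have hx' : T x = ∑ i ∈ s, (q i : ℝ) * T (f i) := hsum
            have hexp : ∀ y : ℝ, y = T y + ((φ (f a))⁻¹ * φ y : ℚ) • f a := by
              intro y; rw [hTdef y]; ring
            have h1 : x = ∑ i ∈ s, (q i : ℝ) * T (f i)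
                + ((φ (f a))⁻¹ * φ x : ℚ) • f a := by
              conv_lhs => rw [hexp x, hx']
            have h2 : ∀ i ∈ s, (q i : ℝ) * T (f i)
                = (q i : ℝ) * f i - (q i * ((φ (f a))⁻¹ * φ (f i)) : ℚ) • f a := by
              intro i hi
              rw [hTdef (f i)]
              push_cast
              ring_nf
              rw [Rat.smul_def, Rat.smul_def]
              push_cast
              ring
            rw [Finset.sum_congr rfl h2, Finset.sum_sub_distrib] at h1
            rw [h1]
            have : ∑ i ∈ s, (q i * ((φ (f a))⁻¹ * φ (f i)) : ℚ) • f a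
                = ((∑ i ∈ s, q i * ((φ (f a))⁻¹ * φ (f i)) : ℚ)) • f a := by
              rw [Finset.sum_smul]
            rw [this]
            rw [Rat.smul_def, Rat.smul_def]
            push_cast
            rw [hlam]
            push_cast
            have hS : ∑ x ∈ s, (q x : ℝ) * (((φ (f a) : ℝ))⁻¹ * (φ (f x) : ℝ))
                = ((φ (f a) : ℝ))⁻¹ * ∑ x ∈ s, (q x : ℝ) * (φ (f x) : ℝ) := by
              rw [Finset.mul_sum]
              exact Finset.sum_congr rfl (fun i _ => by ring)
            rw [hS]
            ring
        · right
          refine ⟨ψ.comp T, ?_, hψx⟩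
          intro i hi
          rcases Finset.mem_insert.1 hi with rfl | hi
          · simp [LinearMap.comp_apply, hTfa]
          · exact hψs i hi

section GD

variable {V E : Type} [Fintype V] [Fintype E]

/-- The attractor components lie in the closures of the COSC open sets. -/
lemma attractor_subset_closure (α ω : E → V) (ρ c : E → ℝ) (F U : V → Set ℝ)
    (hρ : ∀ e, |ρ e| < 1 ∧ ρ e ≠ 0)
    (hFc : ∀ v, IsCompact (F v) ∧ (F v).Nonempty)
    (hFeq : ∀ v, F v = ⋃ e ∈ {e : E | α e = v}, (fun t => ρ e * t + c e) '' F (ω e))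
    (hU1 : ∀ v, (U v).Nonempty)
    (hU2 : ∀ e, (fun t => ρ e * t + c e) '' U (ω e) ⊆ U (α e)) :
    ∀ v, F v ⊆ closure (U v) := by
  by_contra hcon
  push_neg at hcon
  obtain ⟨v0, hv0⟩ := hcon
  obtain ⟨x0, hx0F, hx0U⟩ := Set.not_subset.1 hv0
  haveI : Nonempty V := ⟨v0⟩
  have hex : ∀ v, ∃ x ∈ F v, ∀ y ∈ F v,
      infDist y (closure (U v)) ≤ infDist x (closure (U v)) := by
    intro v
    obtain ⟨x, hxF, hmax⟩ := (hFc v).1.exists_isMaxOn (hFc v).2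
      (Metric.continuous_infDist_pt (closure (U v))).continuousOn
    exact ⟨x, hxF, fun y hy => hmax hy⟩
  choose xv hxvF hxvmax using hex
  set δ : V → ℝ := fun v => infDist (xv v) (closure (U v)) with hδdef
  obtain ⟨v1, -, hv1⟩ := Finset.exists_max_image Finset.univ δ ⟨v0, Finset.mem_univ v0⟩
  have hδ1pos : 0 < δ v1 := by
    have h0 : 0 < infDist x0 (closure (U v0)) :=
      (isClosed_closure.notMem_iff_infDist_pos (hU1 v0).closure).1 hx0U
    have h1 : infDist x0 (closure (U v0)) ≤ δ v0 := hxvmax v0 x0 hx0F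
    have h2 : δ v0 ≤ δ v1 := hv1 v0 (Finset.mem_univ v0)
    linarith
  have hx : xv v1 ∈ ⋃ e ∈ {e : E | α e = v1}, (fun t => ρ e * t + c e) '' F (ω e) :=
    (hFeq v1) ▸ hxvF v1
  rw [Set.mem_iUnion₂] at hx
  obtain ⟨e, he, y, hyF, hxy⟩ := hx
  have hρe : 0 < |ρ e| := abs_pos.2 (hρ e).2
  have key : δ v1 ≤ |ρ e| * δ v1 := by
    refine le_of_forall_pos_le_add ?_
    intro ε hε
    have hne' : (closure (U (ω e))).Nonempty := (hU1 _).closure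
    have hlt : infDist y (closure (U (ω e))) < δ v1 + ε / |ρ e| := by
      have h1 : infDist y (closure (U (ω e))) ≤ δ (ω e) := hxvmax _ y hyF
      have h2 : δ (ω e) ≤ δ v1 := hv1 _ (Finset.mem_univ _)
      have : 0 < ε / |ρ e| := div_pos hε hρe
      linarith
    obtain ⟨z, hz, hdz⟩ := (Metric.infDist_lt_iff hne').1 hlt
    have hSz : ρ e * z + c e ∈ closure (U v1) := by
      have h1 : ρ e * z + c e ∈ (fun t => ρ e * t + c e) '' closure (U (ω e)) :=
        ⟨z, hz, rfl⟩
      have h2 : (fun t => ρ e * t + c e) '' closure (U (ω e))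
          ⊆ closure ((fun t => ρ e * t + c e) '' U (ω e)) :=
        image_closure_subset_closure_image (by fun_prop)
      have h3 : closure ((fun t => ρ e * t + c e) '' U (ω e)) ⊆ closure (U (α e)) :=
        closure_mono (hU2 e)
      rw [he] at h3
      exact h3 (h2 h1)
    have hd : dist (xv v1) (ρ e * z + c e) = |ρ e| * dist y z := by
      rw [← hxy, Real.dist_eq, Real.dist_eq]
      rw [show ρ e * y + c e - (ρ e * z + c e) = ρ e * (y - z) by ring, abs_mul]
    calc δ v1 ≤ dist (xv v1) (ρ e * z + c e) := Metric.infDist_le_dist_of_mem hSz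
    _ = |ρ e| * dist y z := hd
    _ ≤ |ρ e| * (δ v1 + ε / |ρ e|) := by
        apply mul_le_mul_of_nonneg_left hdz.le hρe.le
    _ = |ρ e| * δ v1 + ε := by
        rw [mul_add, mul_div_cancel₀ _ hρe.ne']
  nlinarith [(hρ e).1]

end GD


section GD

variable {V E : Type} [Fintype V] [Fintype E]

/-- The `e`-th piece of a GD-IFS attractor. -/
def piece (ω : E → V) (ρ c : E → ℝ) (F : V → Set ℝ) (e : E) : Set ℝ :=
  (fun t => ρ e * t + c e) '' F (ω e)

lemma piece_compact (ω : E → V) (ρ c : E → ℝ) (F : V → Set ℝ)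
    (hFc : ∀ v, IsCompact (F v) ∧ (F v).Nonempty) (e : E) :
    IsCompact (piece ω ρ c F e) :=
  (hFc _).1.image (by fun_prop)

lemma piece_nonempty (ω : E → V) (ρ c : E → ℝ) (F : V → Set ℝ)
    (hFc : ∀ v, IsCompact (F v) ∧ (F v).Nonempty) (e : E) :
    (piece ω ρ c F e).Nonempty :=
  (hFc _).2.image _

lemma piece_subset (α ω : E → V) (ρ c : E → ℝ) (F : V → Set ℝ)
    (hFeq : ∀ v, F v = ⋃ e ∈ {e : E | α e = v}, (fun t => ρ e * t + c e) '' F (ω e))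
    (e : E) : piece ω ρ c F e ⊆ F (α e) := by
  rw [hFeq (α e)]
  exact Set.subset_biUnion_of_mem (show e ∈ {e' : E | α e' = α e} from rfl)

/-- Each piece sits in a closed interval `[p e, q e]` whose interior `(p e, q e)`
is the image of the COSC open set; distinct pieces at a common vertex have
disjoint open intervals. -/
lemma pieces_setup (α ω : E → V) (ρ c : E → ℝ) (F U : V → Set ℝ)
    (hρ : ∀ e, |ρ e| < 1 ∧ ρ e ≠ 0)
    (hFc : ∀ v, IsCompact (F v) ∧ (F v).Nonempty)
    (hFeq : ∀ v, F v = ⋃ e ∈ {e : E | α e = v}, (fun t => ρ e * t + c e) '' F (ω e))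
    (hU1 : ∀ v, (U v).Nonempty ∧ IsOpen (U v) ∧ Bornology.IsBounded (U v) ∧ Convex ℝ (U v))
    (hU2 : ∀ e, (fun t => ρ e * t + c e) '' U (ω e) ⊆ U (α e)) :
    ∃ p q : E → ℝ, ∀ e, p e < q e ∧
      (fun t => ρ e * t + c e) '' U (ω e) = Set.Ioo (p e) (q e) ∧
      piece ω ρ c F e ⊆ Set.Icc (p e) (q e) := by
  have hFU : ∀ v, F v ⊆ closure (U v) :=
    attractor_subset_closure α ω ρ c F U hρ hFc hFeq (fun v => (hU1 v).1) hU2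
  have h : ∀ e : E, ∃ pq : ℝ × ℝ, pq.1 < pq.2 ∧
      (fun t => ρ e * t + c e) '' U (ω e) = Set.Ioo pq.1 pq.2 ∧
      piece ω ρ c F e ⊆ Set.Icc pq.1 pq.2 := by
    intro e
    obtain ⟨p0, q0, hp0q0, hU0⟩ := open_convex_eq_Ioo (hU1 (ω e)).1 (hU1 (ω e)).2.1
      (hU1 (ω e)).2.2.1 (hU1 (ω e)).2.2.2
    obtain ⟨p, q, hpq, him⟩ := image_affine_Ioo' (c := c e) (hρ e).2 hp0q0
    refine ⟨(p, q), hpq, by rw [hU0]; exact him, ?_⟩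
    have h1 : piece ω ρ c F e ⊆ (fun t => ρ e * t + c e) '' closure (U (ω e)) :=
      Set.image_mono (hFU (ω e))
    have h2 : (fun t => ρ e * t + c e) '' closure (U (ω e))
        ⊆ closure ((fun t => ρ e * t + c e) '' U (ω e)) :=
      image_closure_subset_closure_image (by fun_prop)
    have h3 : closure ((fun t => ρ e * t + c e) '' U (ω e)) = Set.Icc p q := by
      rw [hU0, him, closure_Ioo hpq.ne]
    exact fun x hx => h3 ▸ (h2 (h1 hx))
  choose pq hpq using h
  exact ⟨fun e => (pq e).1, fun e => (pq e).2, hpq⟩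

lemma Ioo_disjoint_cases {p q p' q' : ℝ} (h : p < q) (h' : p' < q')
    (hd : Disjoint (Set.Ioo p q) (Set.Ioo p' q')) : q ≤ p' ∨ q' ≤ p := by
  by_contra hcon
  push_neg at hcon
  obtain ⟨h1, h2⟩ := hcon
  set x := max p p'
  set y := min q q'
  have hxy : x < y := by
    simp only [x, y, max_lt_iff, lt_min_iff]
    exact ⟨⟨h, h1⟩, h2, h'⟩
  have hmem1 : (x + y) / 2 ∈ Set.Ioo p q :=
    ⟨by have := le_max_left p p'; linarith, by have := min_le_left q q'; linarith⟩
  have hmem2 : (x + y) / 2 ∈ Set.Ioo p' q' :=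
    ⟨by have := le_max_right p p'; linarith, by have := min_le_right q q'; linarith⟩
  exact Set.disjoint_left.1 hd hmem1 hmem2

lemma Icc_inter_Ioo_sep {p q p' q' : ℝ} (h : q ≤ p' ∨ q' ≤ p) {x : ℝ}
    (hx : x ∈ Set.Icc p' q') : x ∉ Set.Ioo p q := by
  rcases h with h | h
  · exact fun hc => absurd hc.2 (not_lt.2 (le_trans h hx.1))
  · exact fun hc => absurd hc.1 (not_lt.2 (le_trans hx.2 h))

/-- Gap lengths scale into gap lengths along edges. -/
lemma gap_scale (α ω : E → V) (ρ c : E → ℝ) (F U : V → Set ℝ)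
    (hρ : ∀ e, |ρ e| < 1 ∧ ρ e ≠ 0)
    (hFc : ∀ v, IsCompact (F v) ∧ (F v).Nonempty)
    (hFeq : ∀ v, F v = ⋃ e ∈ {e : E | α e = v}, (fun t => ρ e * t + c e) '' F (ω e))
    (hU1 : ∀ v, (U v).Nonempty ∧ IsOpen (U v) ∧ Bornology.IsBounded (U v) ∧ Convex ℝ (U v))
    (hU2 : ∀ e, (fun t => ρ e * t + c e) '' U (ω e) ⊆ U (α e))
    (hU3 : ∀ e e', e ≠ e' → α e = α e' →
        Disjoint ((fun t => ρ e * t + c e) '' U (ω e))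
          ((fun t => ρ e' * t + c e') '' U (ω e'))) :
    ∀ e : E, ∀ l ∈ gapLengths (F (ω e)), |ρ e| * l ∈ gapLengths (F (α e)) := by
  obtain ⟨p, q, hpq⟩ := pieces_setup α ω ρ c F U hρ hFc hFeq hU1 hU2
  intro e l hl
  obtain ⟨a, b, haF, hbF, hab, hgap, rfl⟩ := hl
  set c₁ := min (ρ e * a + c e) (ρ e * b + c e) with hc₁
  set d₁ := max (ρ e * a + c e) (ρ e * b + c e) with hd₁
  have himg : ∀ t ∈ F (ω e), ρ e * t + c e ∈ piece ω ρ c F e := fun t ht => ⟨t, ht, rfl⟩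
  have hc₁p : c₁ ∈ piece ω ρ c F e := by
    rcases min_choice (ρ e * a + c e) (ρ e * b + c e) with h | h <;> rw [hc₁, h]
    · exact himg a haF
    · exact himg b hbF
  have hd₁p : d₁ ∈ piece ω ρ c F e := by
    rcases max_choice (ρ e * a + c e) (ρ e * b + c e) with h | h <;> rw [hd₁, h]
    · exact himg a haF
    · exact himg b hbF
  have hlen : d₁ - c₁ = |ρ e| * (b - a) := by
    rw [hd₁, hc₁, max_sub_min_eq_abs,
      show ρ e * b + c e - (ρ e * a + c e) = ρ e * (b - a) by ring, abs_mul,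
      abs_of_pos (show (0:ℝ) < b - a by linarith)]
  have hc₁d₁ : c₁ < d₁ := by
    have : d₁ - c₁ > 0 := by
      rw [hlen]
      exact mul_pos (abs_pos.2 (hρ e).2) (by linarith)
    linarith
  refine ⟨c₁, d₁, piece_subset α ω ρ c F hFeq e hc₁p, piece_subset α ω ρ c F hFeq e hd₁p,
    hc₁d₁, ?_, by linarith [hlen]⟩
  rw [Set.eq_empty_iff_forall_notMem]
  rintro x ⟨hx, hxF⟩
  rw [hFeq (α e), Set.mem_iUnion₂] at hxF
  obtain ⟨e', (he' : α e' = α e), y, hyF, hxy⟩ := hxF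
  by_cases hee : e' = e
  · subst hee
    have hxy' : ρ e' * y + c e' = x := hxy
    obtain ⟨hx1, hx2⟩ := hx
    rw [← hxy'] at hx1 hx2
    have hy : y ∈ Set.Ioo a b := by
      rcases lt_or_gt_of_ne (hρ e').2 with hneg | hpos
      · have h1 : c₁ = ρ e' * b + c e' := min_eq_right (by nlinarith)
        have h2 : d₁ = ρ e' * a + c e' := max_eq_left (by nlinarith)
        rw [h1] at hx1
        rw [h2] at hx2
        constructor <;> nlinarith
      · have h1 : c₁ = ρ e' * a + c e' := min_eq_left (by nlinarith)
        have h2 : d₁ = ρ e' * b + c e' := max_eq_right (by nlinarith)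
        rw [h1] at hx1
        rw [h2] at hx2
        constructor <;> nlinarith
    exact Set.eq_empty_iff_forall_notMem.1 hgap y ⟨hy, hyF⟩
  · -- x in another piece, excluded by interval separation
    have hsep : q e' ≤ p e ∨ q e ≤ p e' := by
      rcases Ioo_disjoint_cases (hpq e').1 (hpq e).1
        (by rw [← (hpq e').2.1, ← (hpq e).2.1]; exact hU3 e' e hee he') with h | h
      · exact Or.inl h
      · exact Or.inr h
    have hxIcc : x ∈ Set.Icc (p e') (q e') := by
      rw [← hxy]
      exact (hpq e').2.2 ⟨y, hyF, rfl⟩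
    have hxIoo : x ∈ Set.Ioo (p e) (q e) := by
      have h1 : c₁ ∈ Set.Icc (p e) (q e) := (hpq e).2.2 hc₁p
      have h2 : d₁ ∈ Set.Icc (p e) (q e) := (hpq e).2.2 hd₁p
      exact ⟨lt_of_le_of_lt h1.1 hx.1, lt_of_lt_of_le hx.2 h2.2⟩
    exact Icc_inter_Ioo_sep (by tauto) hxIcc hxIoo

end GD

section GD
variable {V E : Type} [Fintype V] [Fintype E]

/-- Every gap length of a GD-IFS attractor is a level-one gap value times a
product of absolute contraction ratios. -/
lemma gap_structure (α ω : E → V) (ρ c : E → ℝ) (F U : V → Set ℝ)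
    (hρ : ∀ e, |ρ e| < 1 ∧ ρ e ≠ 0)
    (hFc : ∀ v, IsCompact (F v) ∧ (F v).Nonempty)
    (hFeq : ∀ v, F v = ⋃ e ∈ {e : E | α e = v}, (fun t => ρ e * t + c e) '' F (ω e))
    (hU1 : ∀ v, (U v).Nonempty ∧ IsOpen (U v) ∧ Bornology.IsBounded (U v) ∧ Convex ℝ (U v))
    (hU2 : ∀ e, (fun t => ρ e * t + c e) '' U (ω e) ⊆ U (α e))
    (hU3 : ∀ e e', e ≠ e' → α e = α e' →
        Disjoint ((fun t => ρ e * t + c e) '' U (ω e))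
          ((fun t => ρ e' * t + c e') '' U (ω e'))) :
    ∀ (v : V), ∀ l ∈ gapLengths (F v), ∃ (ea eb : E) (m : E → ℕ),
      l = (sInf (piece ω ρ c F eb) - sSup (piece ω ρ c F ea)) * ∏ e, |ρ e| ^ m e := by
  classical
  obtain ⟨p, q, hpq⟩ := pieces_setup α ω ρ c F U hρ hFc hFeq hU1 hU2
  intro v l hl
  -- E is nonempty
  obtain ⟨x₀, hx₀⟩ := (hFc v).2
  have hx₀' := (hFeq v) ▸ hx₀
  rw [Set.mem_iUnion₂] at hx₀'
  obtain ⟨e₀, -, -⟩ := hx₀'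
  haveI : Nonempty E := ⟨e₀⟩
  haveI : Nonempty V := ⟨v⟩
  set ρm : ℝ := Finset.univ.sup' Finset.univ_nonempty (fun e => |ρ e|) with hρm
  have hρmle : ∀ e : E, |ρ e| ≤ ρm := by
    intro e; rw [hρm]; exact Finset.le_sup' (fun e => |ρ e|) (Finset.mem_univ e)
  have hρm1 : ρm < 1 := by
    rw [hρm, Finset.sup'_lt_iff]
    exact fun e _ => (hρ e).1
  have hρm0 : 0 < ρm := lt_of_lt_of_le (abs_pos.2 (hρ e₀).2) (hρmle e₀)
  set D : ℝ := Finset.univ.sup' Finset.univ_nonempty (fun w => sSup (F w) - sInf (F w))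
    with hD
  have hgapD : ∀ (w : V), ∀ l' ∈ gapLengths (F w), l' ≤ D := by
    rintro w l' ⟨a, b, haF, hbF, hab, -, rfl⟩
    have h1 : b ≤ sSup (F w) := le_csSup (hFc w).1.bddAbove hbF
    have h2 : sInf (F w) ≤ a := csInf_le (hFc w).1.bddBelow haF
    calc b - a ≤ sSup (F w) - sInf (F w) := by linarith
    _ ≤ D := by rw [hD]; exact Finset.le_sup' (fun w => sSup (F w) - sInf (F w)) (Finset.mem_univ w)
  have hlpos : 0 < l := by
    obtain ⟨a, b, -, -, hab, -, rfl⟩ := hl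
    linarith
  have hD0 : 0 < D := lt_of_lt_of_le hlpos (hgapD v l hl)
  -- main induction
  have main : ∀ (n : ℕ) (w : V), ∀ l' ∈ gapLengths (F w), D * ρm ^ n < l' →
      ∃ (ea eb : E) (m : E → ℕ),
      l' = (sInf (piece ω ρ c F eb) - sSup (piece ω ρ c F ea)) * ∏ e, |ρ e| ^ m e := by
    intro n
    induction n with
    | zero =>
      intro w l' hl' hbig
      rw [pow_zero, mul_one] at hbig
      exact absurd (hgapD w l' hl') (not_le.2 hbig)
    | succ n ih =>
      intro w l' hl' hbig
      obtain ⟨a, b, haF, hbF, hab, hgap, rfl⟩ := hl'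
      -- find the pieces containing a and b
      have haP := (hFeq w) ▸ haF
      rw [Set.mem_iUnion₂] at haP
      obtain ⟨ea, (hea : α ea = w), haPea⟩ := haP
      have hbP := (hFeq w) ▸ hbF
      rw [Set.mem_iUnion₂] at hbP
      obtain ⟨eb, (heb : α eb = w), hbPeb⟩ := hbP
      have hgap' : ∀ y, y ∈ Set.Ioo a b → y ∉ F w := by
        intro y hy hyF
        exact Set.eq_empty_iff_forall_notMem.1 hgap y ⟨hy, hyF⟩
      have hkey : (∃ e, α e = w ∧ a ∈ piece ω ρ c F e ∧ b ∈ piece ω ρ c F e) ∨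
          (a = sSup (piece ω ρ c F ea) ∧ b = sInf (piece ω ρ c F eb)) := by
        set Ma := sSup (piece ω ρ c F ea) with hMa
        have hMaP : Ma ∈ piece ω ρ c F ea :=
          (piece_compact ω ρ c F hFc ea).sSup_mem (piece_nonempty ω ρ c F hFc ea)
        have hMaF : Ma ∈ F w := hea ▸ piece_subset α ω ρ c F hFeq ea hMaP
        have haMa : a ≤ Ma := le_csSup (piece_compact ω ρ c F hFc ea).bddAbove haPea
        have hMacase : Ma ≤ a ∨ b ≤ Ma := by
          by_contra hcon
          push_neg at hcon
          exact hgap' Ma ⟨hcon.1, hcon.2⟩ hMaF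
        rcases hMacase with hMa1 | hMa2
        · -- a = Ma ; now look at the inf of piece eb
          have haeq : a = Ma := le_antisymm haMa hMa1
          set mb := sInf (piece ω ρ c F eb) with hmb
          have hmbP : mb ∈ piece ω ρ c F eb :=
            (piece_compact ω ρ c F hFc eb).sInf_mem (piece_nonempty ω ρ c F hFc eb)
          have hmbF : mb ∈ F w := heb ▸ piece_subset α ω ρ c F hFeq eb hmbP
          have hmbb : mb ≤ b := csInf_le (piece_compact ω ρ c F hFc eb).bddBelow hbPeb
          have hmbcase : mb ≤ a ∨ b ≤ mb := by
            by_contra hcon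
            push_neg at hcon
            exact hgap' mb ⟨hcon.1, hcon.2⟩ hmbF
          rcases hmbcase with hmb1 | hmb2
          · -- a ∈ piece eb as well : descend within piece eb
            left
            refine ⟨eb, heb, ?_, hbPeb⟩
            by_cases heab : ea = eb
            · exact heab ▸ haPea
            · have hsep := Ioo_disjoint_cases (hpq ea).1 (hpq eb).1
                (by rw [← (hpq ea).2.1, ← (hpq eb).2.1]
                    exact hU3 ea eb heab (hea.trans heb.symm))
              have haIcc : a ∈ Set.Icc (p ea) (q ea) := (hpq ea).2.2 haPea
              have hmbIcc : mb ∈ Set.Icc (p eb) (q eb) := (hpq eb).2.2 hmbP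
              have hbIcc : b ∈ Set.Icc (p eb) (q eb) := (hpq eb).2.2 hbPeb
              rcases hsep with h | h
              · -- q ea ≤ p eb : a = mb
                have : a = mb := le_antisymm (le_trans haIcc.2 (le_trans h hmbIcc.1)) hmb1
                exact this ▸ hmbP
              · -- q eb ≤ p ea : contradiction b ≤ a
                exact absurd (le_trans hbIcc.2 (le_trans h haIcc.1)) (not_le.2 hab)
          · -- right case : a = Ma, b = mb
            right
            exact ⟨haeq, le_antisymm hmb2 hmbb⟩
        · -- b ≤ Ma : b ∈ piece ea : descend within piece ea
          left
          refine ⟨ea, hea, haPea, ?_⟩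
          by_cases heab : eb = ea
          · exact heab ▸ hbPeb
          · have hsep := Ioo_disjoint_cases (hpq eb).1 (hpq ea).1
              (by rw [← (hpq eb).2.1, ← (hpq ea).2.1]
                  exact hU3 eb ea heab (heb.trans hea.symm))
            have haIcc : a ∈ Set.Icc (p ea) (q ea) := (hpq ea).2.2 haPea
            have hMaIcc : Ma ∈ Set.Icc (p ea) (q ea) := (hpq ea).2.2 hMaP
            have hbIcc : b ∈ Set.Icc (p eb) (q eb) := (hpq eb).2.2 hbPeb
            rcases hsep with h | h
            · -- q eb ≤ p ea : b ≤ a contradiction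
              exact absurd (le_trans hbIcc.2 (le_trans h haIcc.1)) (not_le.2 hab)
            · -- q ea ≤ p eb : b = Ma
              have : b = Ma := le_antisymm hMa2 (le_trans hMaIcc.2 (le_trans h hbIcc.1))
              exact this ▸ hMaP
      rcases hkey with ⟨e, hew, haPe, hbPe⟩ | ⟨haeq, hbeq⟩
      · -- descend : the gap comes from a gap of F (ω e)
        obtain ⟨a0, ha0F, ha0⟩ := haPe
        obtain ⟨b0, hb0F, hb0⟩ := hbPe
        simp only at ha0 hb0
        have hρe0 : 0 < |ρ e| := abs_pos.2 (hρ e).2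
        have hsub : piece ω ρ c F e ⊆ F w := hew ▸ piece_subset α ω ρ c F hFeq e
        have hdescend : ∃ l0 ∈ gapLengths (F (ω e)), b - a = |ρ e| * l0 := by
          rcases lt_or_gt_of_ne (hρ e).2 with hneg | hpos
          · -- ρ e < 0 : b0 < a0 and (b0, a0) is a gap
            have hb0a0 : b0 < a0 := by nlinarith
            refine ⟨a0 - b0, ⟨b0, a0, hb0F, ha0F, hb0a0, ?_, rfl⟩, ?_⟩
            · rw [Set.eq_empty_iff_forall_notMem]
              rintro y ⟨hy, hyF⟩
              refine hgap' (ρ e * y + c e) ⟨?_, ?_⟩ (hsub ⟨y, hyF, rfl⟩)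
              · rw [← ha0]; nlinarith [hy.2]
              · rw [← hb0]; nlinarith [hy.1]
            · rw [abs_of_neg hneg]; nlinarith
          · -- ρ e > 0 : a0 < b0 and (a0, b0) is a gap
            have ha0b0 : a0 < b0 := by nlinarith
            refine ⟨b0 - a0, ⟨a0, b0, ha0F, hb0F, ha0b0, ?_, rfl⟩, ?_⟩
            · rw [Set.eq_empty_iff_forall_notMem]
              rintro y ⟨hy, hyF⟩
              refine hgap' (ρ e * y + c e) ⟨?_, ?_⟩ (hsub ⟨y, hyF, rfl⟩)
              · rw [← ha0]; nlinarith [hy.1]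
              · rw [← hb0]; nlinarith [hy.2]
            · rw [abs_of_pos hpos]; nlinarith
        obtain ⟨l0, hl0gap, hl0⟩ := hdescend
        have hl0big : D * ρm ^ n < l0 := by
          have hl0pos : 0 < l0 := by
            obtain ⟨a1, b1, -, -, h1', -, rfl⟩ := hl0gap
            linarith
          have h2 : D * ρm ^ (n+1) < |ρ e| * l0 := by rw [← hl0]; exact hbig
          have h3 : |ρ e| * l0 ≤ ρm * l0 := mul_le_mul_of_nonneg_right (hρmle e) hl0pos.le
          have h4 : D * ρm ^ (n+1) = ρm * (D * ρm ^ n) := by ring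
          have h5 : ρm * (D * ρm ^ n) < ρm * l0 := by
            rw [← h4]; exact lt_of_lt_of_le h2 h3
          exact lt_of_mul_lt_mul_left h5 hρm0.le
        obtain ⟨ea', eb', m, hm⟩ := ih (ω e) l0 hl0gap hl0big
        refine ⟨ea', eb', fun e' => m e' + (if e' = e then 1 else 0), ?_⟩
        have hprod : ∏ e', |ρ e'| ^ (m e' + (if e' = e then 1 else 0))
            = (∏ e', |ρ e'| ^ m e') * |ρ e| := by
          rw [show (∏ e', |ρ e'| ^ (m e' + (if e' = e then 1 else 0)))
              = ∏ e', (|ρ e'| ^ m e') * (|ρ e'| ^ (if e' = e then 1 else 0)) from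
            Finset.prod_congr rfl (fun e' _ => pow_add _ _ _), Finset.prod_mul_distrib]
          congr 1
          simp [pow_ite]
        rw [hl0, hm, hprod]
        ring
      · -- level-one gap
        exact ⟨ea, eb, 0, by simp [haeq, hbeq]⟩
  obtain ⟨n, hn⟩ := exists_pow_lt_of_lt_one (div_pos hlpos hD0) hρm1
  exact main n v l hl (by rwa [← lt_div_iff₀' hD0])
end GD

section GD
variable {V E : Type} [Fintype V] [Fintype E]

lemma gd_ratio_qPosStar (α ω : E → V) (ρ c : E → ℝ) (F U : V → Set ℝ)
    (hρ : ∀ e, |ρ e| < 1 ∧ ρ e ≠ 0)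
    (hFc : ∀ v, IsCompact (F v) ∧ (F v).Nonempty)
    (hFeq : ∀ v, F v = ⋃ e ∈ {e : E | α e = v}, (fun t => ρ e * t + c e) '' F (ω e))
    (hU1 : ∀ v, (U v).Nonempty ∧ IsOpen (U v) ∧ Bornology.IsBounded (U v) ∧ Convex ℝ (U v))
    (hU2 : ∀ e, (fun t => ρ e * t + c e) '' U (ω e) ⊆ U (α e))
    (hU3 : ∀ e e', e ≠ e' → α e = α e' →
        Disjoint ((fun t => ρ e * t + c e) '' U (ω e))
          ((fun t => ρ e' * t + c e') '' U (ω e')))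
    (v : V) {rr θ' : ℝ} (h0 : 0 < rr) (h1 : rr < 1)
    (hθ' : θ' ∈ gapLengths (F v))
    (hall : ∀ k : ℕ, θ' * rr ^ k ∈ gapLengths (F v)) :
    rr ∈ qPosStar {t | ∃ e : E, t = |ρ e|} := by
  classical
  have hθpos : 0 < θ' := by
    obtain ⟨a, b, -, -, hab, -, rfl⟩ := hθ'
    linarith
  have hstr : ∀ k : ℕ, ∃ gab : E × E, ∃ m : E → ℕ, θ' * rr ^ k
      = (sInf (piece ω ρ c F gab.2) - sSup (piece ω ρ c F gab.1)) * ∏ e, |ρ e| ^ m e := by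
    intro k
    obtain ⟨ea, eb, m, hm⟩ := gap_structure α ω ρ c F U hρ hFc hFeq hU1 hU2 hU3 v _ (hall k)
    exact ⟨(ea, eb), m, hm⟩
  choose gab m hgm using hstr
  -- E is nonempty
  obtain ⟨x₀, hx₀⟩ := (hFc v).2
  have hx₀' := (hFeq v) ▸ hx₀
  rw [Set.mem_iUnion₂] at hx₀'
  obtain ⟨e₀, -, -⟩ := hx₀'
  haveI : Nonempty E := ⟨e₀⟩
  -- pigeonhole on the finitely many level-one gap pairs
  obtain ⟨P, hP⟩ := Finite.exists_infinite_fiber gab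
  have hK : {k : ℕ | gab k = P}.Infinite := by
    rw [← Set.infinite_coe_iff]
    exact hP
  set g : ℝ := sInf (piece ω ρ c F P.2) - sSup (piece ω ρ c F P.1) with hgdef
  have hprodpos : ∀ k, (0:ℝ) < ∏ e, |ρ e| ^ m k e := by
    intro k
    exact Finset.prod_pos (fun e _ => pow_pos (abs_pos.2 (hρ e).2) _)
  have hgK : ∀ k ∈ {k : ℕ | gab k = P}, θ' * rr ^ k = g * ∏ e, |ρ e| ^ m k e := by
    intro k hk
    have := hgm k
    rw [show gab k = P from hk] at this
    exact this
  have hgpos : 0 < g := by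
    obtain ⟨k, hk⟩ := hK.nonempty
    have h2 : 0 < g * ∏ e, |ρ e| ^ m k e := by
      rw [← hgK k hk]
      exact mul_pos hθpos (pow_pos h0 k)
    rcases mul_pos_iff.1 h2 with ⟨hg, -⟩ | ⟨-, hneg⟩
    · exact hg
    · exact absurd (hprodpos k) (not_lt.2 hneg.le)
  -- take logarithms
  have hlog : ∀ k ∈ {k : ℕ | gab k = P}, Real.log θ' + (k : ℝ) * Real.log rr
      = Real.log g + ∑ e, (m k e : ℝ) * Real.log |ρ e| := by
    intro k hk
    have h2 := congrArg Real.log (hgK k hk)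
    rw [Real.log_mul hθpos.ne' (pow_ne_zero k h0.ne'), Real.log_pow,
      Real.log_mul hgpos.ne' (hprodpos k).ne',
      Real.log_prod (fun e _ => (pow_pos (abs_pos.2 (hρ e).2) _).ne')] at h2
    simpa [Real.log_pow] using h2
  rcases farkasAux Finset.univ (fun e : E => Real.log |ρ e|) (Real.log rr) with
    ⟨q, hq0, -, hqsum⟩ | ⟨φ, hφ0, hφneg⟩
  · -- the cone case : build the rational exponent function
    set T : Finset ℝ := Finset.univ.image (fun e : E => |ρ e|) with hT
    set Q : ℝ → ℚ := fun a => ∑ e ∈ Finset.univ.filter (fun e : E => |ρ e| = a), q e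
      with hQ
    have hQ0 : ∀ a, 0 ≤ Q a := fun a => Finset.sum_nonneg (fun e _ => hq0 e)
    have hQoff : ∀ a, Q a ≠ 0 → ∃ e : E, |ρ e| = a := by
      intro a ha
      by_contra hcon
      push_neg at hcon
      have : Finset.univ.filter (fun e : E => |ρ e| = a) = ∅ := by
        rw [Finset.filter_eq_empty_iff]
        exact fun {e} _ => hcon e
      rw [hQ] at ha
      simp only [this, Finset.sum_empty] at ha
      exact ha rfl
    have hsum_eq : ∑ a ∈ T, (Q a : ℝ) * Real.log a = ∑ e, (q e : ℝ) * Real.log |ρ e| := by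
      rw [← Finset.sum_fiberwise_of_maps_to (g := fun e : E => |ρ e|) (t := T)
        (fun e _ => Finset.mem_image_of_mem _ (Finset.mem_univ e))
        (fun e => (q e : ℝ) * Real.log |ρ e|)]
      refine Finset.sum_congr rfl (fun a _ => ?_)
      have : ∀ e ∈ Finset.univ.filter (fun e : E => |ρ e| = a),
          (q e : ℝ) * Real.log |ρ e| = (q e : ℝ) * Real.log a := by
        intro e he
        rw [(Finset.mem_filter.1 he).2]
      rw [Finset.sum_congr rfl this, ← Finset.sum_mul, hQ]
      push_cast
      rfl
    have hlogrr : Real.log rr = ∑ a ∈ T, (Q a : ℝ) * Real.log a := by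
      rw [hsum_eq, ← hqsum]
    have hlogneg : Real.log rr < 0 := Real.log_neg h0 h1
    refine ⟨Q, fun a ha => ⟨(hQoff a ha).choose, ((hQoff a ha).choose_spec).symm⟩, ?_, ?_, hQ0, ?_⟩
    · refine Set.Finite.subset T.finite_toSet ?_
      intro a ha
      rw [Function.mem_support] at ha
      obtain ⟨e, he⟩ := hQoff a ha
      exact he ▸ Finset.mem_coe.2 (Finset.mem_image_of_mem _ (Finset.mem_univ e))
    · intro hQz
      rw [hQz] at hlogrr
      simp only [Pi.zero_apply, Rat.cast_zero, zero_mul, Finset.sum_const_zero] at hlogrr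
      rw [hlogrr] at hlogneg
      exact absurd hlogneg (lt_irrefl 0)
    · have hTpos : ∀ a ∈ T, (0:ℝ) < a := by
        intro a ha
        obtain ⟨e, -, rfl⟩ := Finset.mem_image.1 ha
        exact abs_pos.2 (hρ e).2
      have hfin : (Function.mulSupport fun a : ℝ => a ^ (Q a : ℝ)) ⊆ ↑T := by
        intro a ha
        rw [Function.mem_mulSupport] at ha
        by_contra hmem
        have hQa : Q a = 0 := by
          by_contra hQa
          obtain ⟨e, he⟩ := hQoff a hQa
          exact hmem (he ▸ Finset.mem_coe.2 (Finset.mem_image_of_mem _ (Finset.mem_univ e)))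
        rw [hQa] at ha
        simp at ha
      rw [finprod_eq_prod_of_mulSupport_subset _ hfin]
      have : ∀ a ∈ T, a ^ (Q a : ℝ) = Real.exp ((Q a : ℝ) * Real.log a) := by
        intro a ha
        rw [Real.rpow_def_of_pos (hTpos a ha), mul_comm]
      rw [Finset.prod_congr rfl this, ← Real.exp_sum, ← hlogrr, Real.exp_log h0]
  · -- the separating functional case : contradiction with k → ∞
    exfalso
    set φr : ℚ := φ (Real.log rr) with hφr
    have hφrneg : φr < 0 := hφneg
    have hbound : ∀ k ∈ {k : ℕ | gab k = P}, φ (Real.log g) ≤ φ (Real.log θ') + k * φr := by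
      intro k hk
      have h2 := congrArg φ (hlog k hk)
      rw [map_add, map_add] at h2
      have hsm : φ ((k : ℝ) * Real.log rr) = (k : ℚ) * φr := by
        rw [show ((k : ℝ)) * Real.log rr = ((k : ℚ) : ℝ) * Real.log rr by push_cast; ring]
        rw [show (((k:ℚ)) : ℝ) * Real.log rr = ((k:ℚ)) • Real.log rr from (Rat.smul_def _ _).symm]
        rw [map_smul, smul_eq_mul, hφr]
      have hsum : φ (∑ e, (m k e : ℝ) * Real.log |ρ e|)
          = ∑ e, ((m k e : ℚ)) * φ ((fun e : E => Real.log |ρ e|) e) := by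
        rw [show (∑ e, (m k e : ℝ) * Real.log |ρ e|)
            = ∑ e, ((m k e : ℚ)) • Real.log |ρ e| by
          refine Finset.sum_congr rfl (fun e _ => ?_)
          rw [Rat.smul_def]
          push_cast
          ring]
        rw [map_sum]
        refine Finset.sum_congr rfl (fun e _ => ?_)
        rw [map_smul, smul_eq_mul]
      rw [hsm, hsum] at h2
      have hnn : 0 ≤ ∑ e, ((m k e : ℚ)) * φ ((fun e : E => Real.log |ρ e|) e) :=
        Finset.sum_nonneg (fun e _ => mul_nonneg (by positivity) (hφ0 e (Finset.mem_univ e)))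
      linarith [h2.ge, h2.le, hnn]
    obtain ⟨N, hN⟩ := exists_nat_gt ((φ (Real.log θ') - φ (Real.log g)) / (-φr))
    obtain ⟨k, hk, hkN⟩ := hK.exists_gt N
    have hb := hbound k hk
    have hkQ : ((φ (Real.log θ') - φ (Real.log g)) / (-φr)) < (k : ℚ) := by
      calc ((φ (Real.log θ') - φ (Real.log g)) / (-φr)) < (N : ℚ) := hN
      _ < (k : ℚ) := by exact_mod_cast hkN
    rw [div_lt_iff₀ (by linarith : (0:ℚ) < -φr)] at hkQ
    nlinarith
end GD

end AuxLemmas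

theorem stmt4 {V E : Type} [Fintype V] [Fintype E]
    (α ω : E → V) (ρ c : E → ℝ) (F : V → Set ℝ)
    (hρ : ∀ e, |ρ e| < 1 ∧ ρ e ≠ 0)
    (hFc : ∀ v, IsCompact (F v) ∧ (F v).Nonempty)
    (hFeq : ∀ v, F v = ⋃ e ∈ {e : E | α e = v}, (fun t => ρ e * t + c e) '' F (ω e))
    (hCOSC : ∃ U : V → Set ℝ,
      (∀ v, (U v).Nonempty ∧ IsOpen (U v) ∧ Bornology.IsBounded (U v) ∧ Convex ℝ (U v)) ∧
      (∀ e, (fun t => ρ e * t + c e) '' U (ω e) ⊆ U (α e)) ∧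
      (∀ e e', e ≠ e' → α e = α e' →
        Disjoint ((fun t => ρ e * t + c e) '' U (ω e))
          ((fun t => ρ e' * t + c e') '' U (ω e'))))
    (hd2 : ∀ v, 2 ≤ Nat.card {e : E // α e = v})
    -- the absolute contraction ratio set A of the GD-IFS
    (A : Set ℝ) (hA : A = {t | ∃ e : E, t = |ρ e|})
    -- the vertex u : F_u is neither a closed interval nor a singleton
    (u : V) (hni : ¬ ∃ a b : ℝ, a ≤ b ∧ F u = Set.Icc a b)
    -- F_u is the attractor of a standard COSC IFS with ratio data (r, s)
    (ι : Type) [Fintype ι] [Nonempty ι] (r s : ι → ℝ)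
    (hr : ∀ i, |r i| < 1 ∧ r i ≠ 0)
    (hdist : ∀ i j, r i = r j → s i = s j → i = j)
    (hattr : F u = ⋃ i, (fun t => r i * t + s i) '' F u)
    (hIFScosc : ∃ U : Set ℝ, U.Nonempty ∧ IsOpen U ∧ Bornology.IsBounded U ∧ Convex ℝ U ∧
      (∀ i, (fun t => r i * t + s i) '' U ⊆ U) ∧
      (Pairwise fun i j =>
        Disjoint ((fun t => r i * t + s i) '' U) ((fun t => r j * t + s j) '' U)))
    -- the absolute contraction ratio set X of the standard IFS
    (X : Set ℝ) (hX : X = {t | ∃ i : ι, t = |r i|}) :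
    ∀ θ ∈ gapLengths (F u),
      X ⊆ natStar X ∧
      natStar X ⊆ ratioSet (gapLengths (F u)) θ ∧
      ratioSet (gapLengths (F u)) θ ⊆ qPosStar A ∩ qPosStar X := by
  intro θ hθ
  obtain ⟨Uc, hU1, hU2, hU3⟩ := hCOSC
  obtain ⟨U₀, hU₀ne, hU₀o, hU₀b, hU₀c, hU₀inv, hU₀disj⟩ := hIFScosc
  -- view the standard IFS as a GD-IFS over the vertex set `Unit`
  set α' : ι → Unit := fun _ => () with hα'
  set ω' : ι → Unit := fun _ => () with hω'
  set F' : Unit → Set ℝ := fun _ => F u with hF'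
  set U' : Unit → Set ℝ := fun _ => U₀ with hU'
  have hFeq' : ∀ v : Unit, F' v
      = ⋃ i ∈ {i : ι | α' i = v}, (fun t => r i * t + s i) '' F' (ω' i) := by
    intro v
    have h1 : {i : ι | α' i = v} = Set.univ := Set.eq_univ_of_forall (fun i => rfl)
    rw [h1, Set.biUnion_univ]
    exact hattr
  have hFc' : ∀ v : Unit, IsCompact (F' v) ∧ (F' v).Nonempty := fun _ => hFc u
  have hU1' : ∀ v : Unit, (U' v).Nonempty ∧ IsOpen (U' v) ∧ Bornology.IsBounded (U' v)
      ∧ Convex ℝ (U' v) := fun _ => ⟨hU₀ne, hU₀o, hU₀b, hU₀c⟩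
  have hU2' : ∀ i : ι, (fun t => r i * t + s i) '' U' (ω' i) ⊆ U' (α' i) := hU₀inv
  have hU3' : ∀ i j : ι, i ≠ j → α' i = α' j →
      Disjoint ((fun t => r i * t + s i) '' U' (ω' i))
        ((fun t => r j * t + s j) '' U' (ω' j)) := fun i j hij _ => hU₀disj hij
  have hscale : ∀ i : ι, ∀ l ∈ gapLengths (F u), |r i| * l ∈ gapLengths (F u) :=
    fun i => gap_scale α' ω' r s F' U' hr hFc' hFeq' hU1' hU2' hU3' i
  refine ⟨?_, ?_, ?_⟩
  · -- X ⊆ natStar X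
    intro x hx
    refine ⟨fun a => if a = x then 1 else 0, ?_, ?_, ?_, ?_⟩
    · intro a ha
      by_cases h : a = x
      · exact h ▸ hx
      · simp [h] at ha
    · apply Set.Finite.subset (Set.finite_singleton x)
      intro a ha
      rw [Function.mem_support] at ha
      rw [Set.mem_singleton_iff]
      by_contra h
      simp [h] at ha
    · intro h0
      have := congrFun h0 x
      simp at this
    · rw [finprod_eq_single _ x (fun b hb => by simp [hb])]
      simp
  · -- natStar X ⊆ ratioSet
    intro x hx
    obtain ⟨m, hmX, hmfin, hmne, hxeq⟩ := hx
    set p : ℝ → Prop := fun y => 0 < y ∧ y ≤ 1 ∧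
      ∀ l ∈ gapLengths (F u), y * l ∈ gapLengths (F u) with hp
    have hp1 : p 1 := ⟨one_pos, le_refl 1, fun l hl => by simpa using hl⟩
    have hpmul : ∀ y z, p y → p z → p (y * z) := by
      rintro y z ⟨hy0, hy1, hyS⟩ ⟨hz0, hz1, hzS⟩
      refine ⟨mul_pos hy0 hz0, by nlinarith, ?_⟩
      intro l hl
      rw [mul_assoc]
      exact hyS _ (hzS l hl)
    have hpX : ∀ a, a ∈ X → p a := by
      intro a ha
      rw [hX] at ha
      obtain ⟨i, rfl⟩ := ha
      exact ⟨abs_pos.2 (hr i).2, (hr i).1.le, hscale i⟩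
    have hpfac : ∀ a : ℝ, p (a ^ m a) := by
      intro a
      by_cases hma : m a = 0
      · rw [hma, pow_zero]; exact hp1
      · have hpa := hpX a (hmX a hma)
        obtain ⟨n, hn⟩ : ∃ n, m a = n := ⟨m a, rfl⟩
        rw [hn]
        clear hn hma
        induction n with
        | zero => rw [pow_zero]; exact hp1
        | succ n ihn => rw [pow_succ]; exact hpmul _ _ ihn hpa
    have hpx : p x := hxeq ▸ finprod_induction p hp1 hpmul hpfac
    have hxlt1 : x < 1 := by
      obtain ⟨a0, ha0'⟩ := Function.ne_iff.1 hmne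
      have hsupp : (Function.mulSupport fun a => a ^ m a) ⊆ ↑hmfin.toFinset := by
        intro a ha
        rw [Function.mem_mulSupport] at ha
        rw [Set.Finite.coe_toFinset, Function.mem_support]
        intro hz
        rw [hz, pow_zero] at ha
        exact ha rfl
      have hxprod : x = ∏ a ∈ hmfin.toFinset, a ^ m a := by
        rw [hxeq]; exact finprod_eq_prod_of_mulSupport_subset _ hsupp
      have hmem : a0 ∈ hmfin.toFinset := by
        rw [Set.Finite.mem_toFinset, Function.mem_support]; exact ha0'
      have hbounds : ∀ a ∈ hmfin.toFinset, 0 < a ∧ a < 1 := by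
        intro a ha
        rw [Set.Finite.mem_toFinset, Function.mem_support] at ha
        have haX := hmX a ha
        rw [hX] at haX
        obtain ⟨i, rfl⟩ := haX
        exact ⟨abs_pos.2 (hr i).2, (hr i).1⟩
      have herase : ∏ a ∈ hmfin.toFinset.erase a0, a ^ m a ≤ 1 := by
        apply Finset.prod_le_one
        · intro a ha
          exact (pow_pos (hbounds a (Finset.mem_of_mem_erase ha)).1 _).le
        · intro a ha
          exact pow_le_one₀ (hbounds a (Finset.mem_of_mem_erase ha)).1.le
            (hbounds a (Finset.mem_of_mem_erase ha)).2.le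
      have ha0fac : a0 ^ m a0 < 1 :=
        pow_lt_one₀ (hbounds a0 hmem).1.le (hbounds a0 hmem).2 ha0'
      have ha0pos : 0 < a0 ^ m a0 := pow_pos (hbounds a0 hmem).1 _
      calc x = a0 ^ m a0 * ∏ a ∈ hmfin.toFinset.erase a0, a ^ m a := by
            rw [hxprod]
            exact (Finset.mul_prod_erase _ (fun a => a ^ m a) hmem).symm
      _ ≤ a0 ^ m a0 * 1 := mul_le_mul_of_nonneg_left herase ha0pos.le
      _ < 1 := by rw [mul_one]; exact ha0fac
    refine ⟨hpx.1, hxlt1, θ, hθ, ⟨0, by simp⟩, ?_⟩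
    intro k
    induction k with
    | zero => simpa using hθ
    | succ n ihn =>
      rw [show θ * x ^ (n+1) = x * (θ * x ^ n) by ring]
      exact hpx.2.2 _ ihn
  · -- ratioSet ⊆ qPosStar A ∩ qPosStar X
    rintro y ⟨hy0, hy1, θ', hθ'GL, -, hall⟩
    constructor
    · rw [hA]
      exact gd_ratio_qPosStar α ω ρ c F Uc hρ hFc hFeq hU1 hU2 hU3 u hy0 hy1 hθ'GL hall
    · rw [hX]
      exact gd_ratio_qPosStar α' ω' r s F' U' hr hFc' hFeq' hU1' hU2' hU3' () hy0 hy1 hθ'GL hall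
end

section
/- Let (F_v)_{v∈V} be the attractors of a GD-IFS of similarities on ℝ satisfying the COSC, based on a digraph (V,E) with d_v ≥ 2 for all v ∈ V, and let A = {|ρ_e| : e ∈ E} be its absolute contraction ratio set. Assume that for some vertex u, the set F_u is not a closed interval and not a singleton, and that F_u is also the attractor of some standard IFS on ℝ satisfying the COSC. Suppose A₁ ∪ A₂ = A and A₁^{ℚ*} ∩ A₂^{ℚ₊*} = ∅. Then exactly one of the following dichotomy cases holds: either R_{GL(F_u)}(θ) ∩ A₁^{ℚ₊*} ≠ ∅ for all θ ∈ GL(F_u), or R_{GL(F_u)}(θ) ∩ A₁^{ℚ₊*} = ∅ for all θ ∈ GL(F_u). -/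
/- ### Auxiliary lemmas -/

open Set Metric Bornology

lemma convexOpen_eq_Ioo (V : Set ℝ) (hne : V.Nonempty) (ho : IsOpen V) (hb : IsBounded V)
    (hc : Convex ℝ V) : V = Set.Ioo (sInf V) (sSup V) := by
  have hba : BddAbove V := hb.bddAbove
  have hbb : BddBelow V := hb.bddBelow
  ext x
  constructor
  · intro hx
    obtain ⟨ε, hε, hball⟩ := Metric.isOpen_iff.1 ho x hx
    have h1 : x - ε/2 ∈ V := by
      apply hball; rw [Metric.mem_ball, Real.dist_eq, abs_sub_comm,
        abs_of_pos (by linarith : (0:ℝ) < x - (x - ε/2))]; linarith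
    have h2 : x + ε/2 ∈ V := by
      apply hball; rw [Metric.mem_ball, Real.dist_eq,
        abs_of_pos (by linarith : (0:ℝ) < x + ε/2 - x)]; linarith
    exact ⟨lt_of_le_of_lt (csInf_le hbb h1) (by linarith),
      lt_of_lt_of_le (by linarith : x < x + ε/2) (le_csSup hba h2)⟩
  · rintro ⟨h1, h2⟩
    obtain ⟨u, hu, hux⟩ := exists_lt_of_csInf_lt hne h1
    obtain ⟨v, hv, hvx⟩ := exists_lt_of_lt_csSup hne h2
    exact hc.ordConnected.out hu hv ⟨le_of_lt hux, le_of_lt hvx⟩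

lemma aff_mem_image {c d : ℝ} (hc : c ≠ 0) (S : Set ℝ) (z : ℝ) :
    z ∈ (fun t => c*t+d) '' S ↔ (z-d)/c ∈ S := by
  constructor
  · rintro ⟨t, ht, rfl⟩
    have : (c*t+d-d)/c = t := by field_simp; ring
    rwa [this]
  · intro h
    exact ⟨(z-d)/c, h, by field_simp; ring⟩

lemma image_Ioo_pos {c d a b : ℝ} (h : 0 < c) :
    (fun t => c*t+d) '' Set.Ioo a b = Set.Ioo (c*a+d) (c*b+d) := by
  ext z
  rw [aff_mem_image (ne_of_gt h)]
  simp only [Set.mem_Ioo]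
  constructor
  · rintro ⟨h1, h2⟩
    constructor
    · nlinarith [(lt_div_iff₀ h).1 h1]
    · nlinarith [(div_lt_iff₀ h).1 h2]
  · rintro ⟨h1, h2⟩
    exact ⟨(lt_div_iff₀ h).2 (by nlinarith), (div_lt_iff₀ h).2 (by nlinarith)⟩

lemma image_Ioo_neg {c d a b : ℝ} (h : c < 0) :
    (fun t => c*t+d) '' Set.Ioo a b = Set.Ioo (c*b+d) (c*a+d) := by
  ext z
  rw [aff_mem_image (ne_of_lt h)]
  simp only [Set.mem_Ioo]
  constructor
  · rintro ⟨h1, h2⟩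
    constructor
    · nlinarith [(div_lt_iff_of_neg h).1 h2]
    · nlinarith [(lt_div_iff_of_neg h).1 h1]
  · rintro ⟨h1, h2⟩
    exact ⟨(lt_div_iff_of_neg h).2 (by nlinarith), (div_lt_iff_of_neg h).2 (by nlinarith)⟩

lemma aff_image_isOpen {c d : ℝ} (hc : c ≠ 0) {S : Set ℝ} (hS : IsOpen S) :
    IsOpen ((fun t => c*t+d) '' S) := by
  have : (fun t => c*t+d) '' S = (fun y => (y-d)/c) ⁻¹' S := Set.ext (aff_mem_image hc S)
  rw [this]
  exact hS.preimage ((continuous_id.sub continuous_const).div_const c)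

lemma aff_image_convex {c d : ℝ} {S : Set ℝ} (hS : Convex ℝ S) :
    Convex ℝ ((fun t => c*t+d) '' S) := by
  intro x hx y hy a b ha hb hab
  obtain ⟨x', hx', rfl⟩ := hx
  obtain ⟨y', hy', rfl⟩ := hy
  refine ⟨a • x' + b • y', hS hx' hy' ha hb hab, ?_⟩
  simp only [smul_eq_mul]
  have hb1 : b = 1 - a := by linarith
  rw [hb1]; ring

lemma aff_image_isBounded {c d : ℝ} {S : Set ℝ} (hS : IsBounded S) :
    IsBounded ((fun t => c*t+d) '' S) := by
  rw [isBounded_iff_bddBelow_bddAbove] at hS ⊢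
  obtain ⟨⟨l, hl⟩, ⟨v, hv⟩⟩ := hS
  constructor
  · refine ⟨min (c*l+d) (c*v+d), ?_⟩
    rintro _ ⟨t, ht, rfl⟩
    dsimp only
    rcases le_or_gt 0 c with h | h
    · exact le_trans (min_le_left _ _) (by nlinarith [hl ht])
    · exact le_trans (min_le_right _ _) (by nlinarith [hv ht])
  · refine ⟨max (c*l+d) (c*v+d), ?_⟩
    rintro _ ⟨t, ht, rfl⟩
    dsimp only
    rcases le_or_gt 0 c with h | h
    · exact le_trans (by nlinarith [hv ht]) (le_max_right _ _)
    · exact le_trans (by nlinarith [hl ht]) (le_max_left _ _)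

lemma K_subset_closure {ι : Type} [Fintype ι] [Nonempty ι] {r s : ι → ℝ} {K U : Set ℝ}
    (hK : IsCompact K) (hKne : K.Nonempty)
    (hattr : K = ⋃ i, (fun t => r i * t + s i) '' K)
    (hr : ∀ i, |r i| < 1 ∧ r i ≠ 0)
    (hUne : U.Nonempty)
    (hinv : ∀ i, (fun t => r i * t + s i) '' U ⊆ U) : K ⊆ closure U := by
  set T := closure U with hT
  have hTne : T.Nonempty := hUne.closure
  have hTc : IsClosed T := isClosed_closure
  have hTinv : ∀ i, (fun t => r i * t + s i) '' T ⊆ T := by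
    intro i
    calc (fun t => r i * t + s i) '' closure U
        ⊆ closure ((fun t => r i * t + s i) '' U) :=
          image_closure_subset_closure_image
            ((continuous_const.mul continuous_id).add continuous_const)
      _ ⊆ closure U := closure_mono (hinv i)
  obtain ⟨x₀, hx₀K, hmax'⟩ := hK.exists_isMaxOn hKne ((continuous_infDist_pt T).continuousOn)
  have hmax : ∀ y ∈ K, infDist y T ≤ infDist x₀ T := fun y hy => hmax' hy
  have hx₀' : x₀ ∈ ⋃ i, (fun t => r i * t + s i) '' K := hattr ▸ hx₀K
  obtain ⟨_, ⟨i, rfl⟩, y₀, hy₀K, rfl⟩ := hx₀'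
  obtain ⟨t, htT, hdt⟩ := hTc.exists_infDist_eq_dist hTne y₀
  have key : infDist (r i * y₀ + s i) T ≤ |r i| * infDist y₀ T := by
    have h1 : infDist (r i * y₀ + s i) T ≤ dist (r i * y₀ + s i) (r i * t + s i) :=
      infDist_le_dist_of_mem (hTinv i ⟨t, htT, rfl⟩)
    have h2 : dist (r i * y₀ + s i) (r i * t + s i) = |r i| * dist y₀ t := by
      rw [Real.dist_eq, Real.dist_eq, ← abs_mul]; ring_nf
    rw [h2, ← hdt] at h1; exact h1
  have hzero : infDist (r i * y₀ + s i) T = 0 := by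
    have h3 : infDist y₀ T ≤ infDist (r i * y₀ + s i) T := hmax y₀ hy₀K
    have h4 : (0:ℝ) ≤ infDist (r i * y₀ + s i) T := infDist_nonneg
    have h5 : 0 < 1 - |r i| := by linarith [(hr i).1]
    nlinarith [abs_nonneg (r i)]
  intro x hxK
  have h6 : infDist x T ≤ 0 := hzero ▸ hmax x hxK
  have h7 : infDist x T = 0 := le_antisymm h6 infDist_nonneg
  exact (hTc.mem_iff_infDist_zero hTne).2 h7

/-- All the hypotheses on the standard IFS bundled together. -/
structure IFSData {ι : Type} [Fintype ι] [Nonempty ι] (r s : ι → ℝ) (K U : Set ℝ) : Prop where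
  hK : IsCompact K
  hKne : K.Nonempty
  hattr : K = ⋃ i, (fun t => r i * t + s i) '' K
  hr : ∀ i, |r i| < 1 ∧ r i ≠ 0
  hUne : U.Nonempty
  hUo : IsOpen U
  hUb : IsBounded U
  hUc : Convex ℝ U
  hinv : ∀ i, (fun t => r i * t + s i) '' U ⊆ U
  hdisj : Pairwise fun i j =>
    Disjoint ((fun t => r i * t + s i) '' U) ((fun t => r j * t + s j) '' U)

namespace IFSData

variable {ι : Type} [Fintype ι] [Nonempty ι] {r s : ι → ℝ} {K U : Set ℝ}
  (H : IFSData r s K U)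

/-- The candidate finite set of primary gap lengths. -/
def primaryGaps (r s : ι → ℝ) (K U : Set ℝ) : Set ℝ :=
  (fun a => sInf (K ∩ Ioi a) - a) ''
    ((range fun i => sSup ((fun t => r i * t + s i) '' K)) ∪
     (range fun i => sSup (((fun t => r i * t + s i) '' K) ∩
       Iio (sSup ((fun t => r i * t + s i) '' U)))))

lemma primaryGaps_finite : (primaryGaps r s K U).Finite :=
  ((finite_range _).union (finite_range _)).image _

include H
set_option linter.unusedSectionVars false

lemma rne (i : ι) : r i ≠ 0 := (H.hr i).2

lemma piece_ne (i : ι) : ((fun t => r i * t + s i) '' U).Nonempty := H.hUne.image _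

lemma pieceU_rep (i : ι) : (fun t => r i * t + s i) '' U =
    Ioo (sInf ((fun t => r i * t + s i) '' U)) (sSup ((fun t => r i * t + s i) '' U)) :=
  convexOpen_eq_Ioo _ (H.piece_ne i) (aff_image_isOpen (H.rne i) H.hUo)
    (aff_image_isBounded H.hUb) (aff_image_convex H.hUc)

lemma pieceU_lv (i : ι) :
    sInf ((fun t => r i * t + s i) '' U) < sSup ((fun t => r i * t + s i) '' U) := by
  have h := H.piece_ne i
  rw [H.pieceU_rep i] at h
  exact nonempty_Ioo.1 h

lemma closure_pieceU (i : ι) : closure ((fun t => r i * t + s i) '' U) =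
    Icc (sInf ((fun t => r i * t + s i) '' U)) (sSup ((fun t => r i * t + s i) '' U)) := by
  conv_lhs => rw [H.pieceU_rep i]
  exact closure_Ioo (ne_of_lt (H.pieceU_lv i))

lemma Urep : U = Ioo (sInf U) (sSup U) :=
  convexOpen_eq_Ioo _ H.hUne H.hUo H.hUb H.hUc

lemma closureU : closure U = Icc (sInf U) (sSup U) := by
  have h : (Ioo (sInf U) (sSup U)).Nonempty := H.Urep ▸ H.hUne
  conv_lhs => rw [H.Urep]
  exact closure_Ioo (ne_of_lt (nonempty_Ioo.1 h))

lemma pieceK_sub_K (i : ι) : (fun t => r i * t + s i) '' K ⊆ K := by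
  conv_rhs => rw [H.hattr]
  exact subset_iUnion (fun j => (fun t => r j * t + s j) '' K) i

lemma KsubT : K ⊆ closure U := K_subset_closure H.hK H.hKne H.hattr H.hr H.hUne H.hinv

lemma pieceK_sub_closure (i : ι) :
    (fun t => r i * t + s i) '' K ⊆ closure ((fun t => r i * t + s i) '' U) :=
  (Set.image_mono H.KsubT).trans
    (image_closure_subset_closure_image
      ((continuous_const.mul continuous_id).add continuous_const))

lemma disj_open_closure {i j : ι} (hij : i ≠ j) :
    Disjoint ((fun t => r i * t + s i) '' U) (closure ((fun t => r j * t + s j) '' U)) :=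
  (H.hdisj hij).closure_right (aff_image_isOpen (H.rne i) H.hUo)

lemma gap_sub_U {a b : ℝ} (haK : a ∈ K) (hbK : b ∈ K) : Ioo a b ⊆ U := by
  have hsub := H.KsubT
  rw [H.closureU] at hsub
  have ha := hsub haK
  have hb := hsub hbK
  conv_rhs => rw [H.Urep]
  exact Ioo_subset_Ioo ha.1 hb.2

lemma gap_image_empty (i : ι) {a b : ℝ} (haK : a ∈ K) (hbK : b ∈ K)
    (hgap : Ioo a b ∩ K = ∅) :
    ((fun t => r i * t + s i) '' Ioo a b) ∩ K = ∅ := by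
  by_contra hne
  obtain ⟨z, hz1, hz2⟩ := Set.nonempty_iff_ne_empty.2 hne
  have hz3 : z ∈ ⋃ j, (fun t => r j * t + s j) '' K := H.hattr ▸ hz2
  obtain ⟨_, ⟨j, rfl⟩, w, hwK, rfl⟩ := hz3
  by_cases hij : j = i
  · subst hij
    have h1 : (r j * w + s j - s j)/(r j) ∈ Ioo a b := (aff_mem_image (H.rne j) _ _).1 hz1
    have h2 : (r j * w + s j - s j)/(r j) = w := by
      rw [add_sub_cancel_right]; exact mul_div_cancel_left₀ w (H.rne j)
    rw [h2] at h1
    exact absurd (Set.mem_inter h1 hwK) (by rw [hgap]; exact notMem_empty w)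
  · have h1 : r j * w + s j ∈ (fun t => r i * t + s i) '' U :=
      Set.image_mono (H.gap_sub_U haK hbK) hz1
    have h2 : r j * w + s j ∈ closure ((fun t => r j * t + s j) '' U) :=
      H.pieceK_sub_closure j ⟨w, hwK, rfl⟩
    exact (H.disj_open_closure (Ne.symm hij)).ne_of_mem h1 h2 rfl

lemma gapLengths_mul (i : ι) {θ : ℝ} (hθ : θ ∈ gapLengths K) :
    |r i| * θ ∈ gapLengths K := by
  obtain ⟨a, b, haK, hbK, hab, hgap, rfl⟩ := hθ
  have hemp := H.gap_image_empty i haK hbK hgap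
  have haK' : r i * a + s i ∈ K := H.pieceK_sub_K i ⟨a, haK, rfl⟩
  have hbK' : r i * b + s i ∈ K := H.pieceK_sub_K i ⟨b, hbK, rfl⟩
  rcases lt_or_gt_of_ne (H.rne i) with hc | hc
  · refine ⟨r i * b + s i, r i * a + s i, hbK', haK', by nlinarith, ?_, ?_⟩
    · rw [← image_Ioo_neg hc]; exact hemp
    · rw [abs_of_neg hc]; ring
  · refine ⟨r i * a + s i, r i * b + s i, haK', hbK', by nlinarith, ?_, ?_⟩
    · rw [← image_Ioo_pos hc]; exact hemp
    · rw [abs_of_pos hc]; ring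

lemma gapLengths_word (w : Multiset ι) {θ : ℝ} (hθ : θ ∈ gapLengths K) :
    (w.map fun i => |r i|).prod * θ ∈ gapLengths K := by
  induction w using Multiset.induction with
  | empty => simpa using hθ
  | cons i w ih =>
    rw [Multiset.map_cons, Multiset.prod_cons, mul_assoc]
    exact H.gapLengths_mul i ih

lemma gap_b_eq {a b : ℝ} (hbK : b ∈ K) (hab : a < b) (hgap : Ioo a b ∩ K = ∅) :
    b = sInf (K ∩ Ioi a) := by
  symm
  apply IsLeast.csInf_eq
  constructor
  · exact ⟨hbK, hab⟩
  · intro z ⟨hzK, hza⟩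
    by_contra h
    push_neg at h
    have hmem : z ∈ Set.Ioo a b := Set.mem_Ioo.mpr ⟨hza, h⟩
    exact absurd (Set.mem_inter hmem hzK)
      (by rw [hgap]; exact notMem_empty z)

lemma primary_endpoint {a b : ℝ} (haK : a ∈ K) (hbK : b ∈ K) (hab : a < b)
    (hgap : Ioo a b ∩ K = ∅)
    (hprim : ¬ ∃ i, a ∈ (fun t => r i * t + s i) '' K ∧ b ∈ (fun t => r i * t + s i) '' K) :
    ∃ i, a = sSup ((fun t => r i * t + s i) '' K) ∨
      a = sSup (((fun t => r i * t + s i) '' K) ∩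
        Iio (sSup ((fun t => r i * t + s i) '' U))) := by
  have haU : a ∈ ⋃ i, (fun t => r i * t + s i) '' K := H.hattr ▸ haK
  obtain ⟨_, ⟨j, rfl⟩, haSj⟩ := haU
  set Sj := (fun t => r j * t + s j) '' K with hSjdef
  have hSjK : Sj ⊆ K := H.pieceK_sub_K j
  refine ⟨j, ?_⟩
  by_cases hx : ∃ x ∈ Sj, b ≤ x
  · right
    obtain ⟨x, hxSj, hbx⟩ := hx
    have hxb : b < x := by
      rcases lt_or_eq_of_le hbx with h | h
      · exact h
      · exact absurd ⟨j, haSj, h ▸ hxSj⟩ hprim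
    have hbU : b ∈ ⋃ i, (fun t => r i * t + s i) '' K := H.hattr ▸ hbK
    obtain ⟨_, ⟨k, rfl⟩, hbSk⟩ := hbU
    have hkj : k ≠ j := by
      rintro rfl
      exact absurd ⟨k, haSj, hbSk⟩ hprim
    have hjcl : Sj ⊆ Icc (sInf ((fun t => r j * t + s j) '' U))
        (sSup ((fun t => r j * t + s j) '' U)) := by
      rw [← H.closure_pieceU j]; exact H.pieceK_sub_closure j
    have haI := hjcl haSj
    have hxI := hjcl hxSj
    have hbI : b ∈ Icc (sInf ((fun t => r j * t + s j) '' U))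
        (sSup ((fun t => r j * t + s j) '' U)) :=
      ⟨le_trans haI.1 (le_of_lt hab), le_trans (le_of_lt hxb) hxI.2⟩
    have hbnotin : b ∉ (fun t => r j * t + s j) '' U := by
      intro hbin
      exact (H.disj_open_closure (Ne.symm hkj)).ne_of_mem hbin
        (H.pieceK_sub_closure k hbSk) rfl
    rw [H.pieceU_rep j] at hbnotin
    have hbv : b = sSup ((fun t => r j * t + s j) '' U) := by
      rcases eq_or_lt_of_le hbI.2 with h | h
      · exact h
      · exfalso
        apply hbnotin
        exact ⟨lt_of_le_of_lt haI.1 hab, h⟩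
    symm
    apply IsGreatest.csSup_eq
    constructor
    · exact ⟨haSj, by rw [← hbv]; exact hab⟩
    · rintro y ⟨hySj, hyv⟩
      by_contra hya
      push_neg at hya
      have hyb : y < b := by rw [hbv]; exact hyv
      have hmem : y ∈ Set.Ioo a b := Set.mem_Ioo.mpr ⟨hya, hyb⟩
      exact absurd (Set.mem_inter hmem (hSjK hySj))
        (by rw [hgap]; exact notMem_empty y)
  · left
    push_neg at hx
    symm
    apply IsGreatest.csSup_eq
    constructor
    · exact haSj
    · intro y hySj
      by_contra hya
      push_neg at hya
      have hmem : y ∈ Set.Ioo a b := Set.mem_Ioo.mpr ⟨hya, hx y hySj⟩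
      exact absurd (Set.mem_inter hmem (hSjK hySj))
        (by rw [hgap]; exact notMem_empty y)

lemma gap_lt_D {a b : ℝ} (haK : a ∈ K) (hbK : b ∈ K) :
    b - a ≤ sSup U - sInf U := by
  have h1 := H.KsubT
  rw [H.closureU] at h1
  have ha := h1 haK
  have hb := h1 hbK
  simp only [mem_Icc] at ha hb
  linarith [ha.1, hb.2]

lemma decomp_aux (i0 : ι) (hmax : ∀ j, |r j| ≤ |r i0|) :
    ∀ n : ℕ, ∀ a b : ℝ, a ∈ K → b ∈ K → a < b → Ioo a b ∩ K = ∅ →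
    (sSup U - sInf U + 1) * |r i0| ^ n < b - a →
    ∃ (w : Multiset ι) (g : ℝ), g ∈ primaryGaps r s K U ∧
      b - a = (w.map fun i => |r i|).prod * g := by
  intro n
  induction n with
  | zero =>
    intro a b haK hbK hab hgap hbig
    exfalso
    have := H.gap_lt_D haK hbK
    simp only [pow_zero, mul_one] at hbig
    linarith
  | succ n ih =>
    intro a b haK hbK hab hgap hbig
    have hρpos : 0 < |r i0| := abs_pos.2 (H.rne i0)
    by_cases hprim : ∃ i, a ∈ (fun t => r i * t + s i) '' K ∧ b ∈ (fun t => r i * t + s i) '' K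
    · obtain ⟨i, ⟨a₀, ha₀K, ha₀⟩, ⟨b₀, hb₀K, hb₀⟩⟩ := hprim
      simp only at ha₀ hb₀
      have hipos : 0 < |r i| := abs_pos.2 (H.rne i)
      rcases lt_or_gt_of_ne (H.rne i) with hc | hc
      · have h1 : b₀ < a₀ := by nlinarith
        have hlen : b - a = |r i| * (a₀ - b₀) := by rw [abs_of_neg hc]; nlinarith
        have hgap0 : Ioo b₀ a₀ ∩ K = ∅ := by
          by_contra hne
          obtain ⟨z, hz1, hz2⟩ := Set.nonempty_iff_ne_empty.2 hne
          have hz3 : r i * z + s i ∈ Ioo a b := by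
            have : r i * z + s i ∈ (fun t => r i * t + s i) '' Ioo b₀ a₀ := ⟨z, hz1, rfl⟩
            rwa [image_Ioo_neg hc, ha₀, hb₀] at this
          exact absurd (Set.mem_inter hz3 (H.pieceK_sub_K i ⟨z, hz2, rfl⟩))
            (by rw [hgap]; exact notMem_empty _)
        have hmeas : (sSup U - sInf U + 1) * |r i0| ^ n < a₀ - b₀ := by
          have h2 : |r i| * (a₀ - b₀) ≤ |r i0| * (a₀ - b₀) := by nlinarith [hmax i]
          have h3 : (sSup U - sInf U + 1) * (|r i0| ^ n * |r i0|) < |r i0| * (a₀ - b₀) := by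
            calc (sSup U - sInf U + 1) * (|r i0| ^ n * |r i0|)
                = (sSup U - sInf U + 1) * |r i0| ^ (n+1) := by ring
              _ < b - a := hbig
              _ = |r i| * (a₀ - b₀) := hlen
              _ ≤ |r i0| * (a₀ - b₀) := h2
          nlinarith
        obtain ⟨w, g, hg, heq⟩ := ih b₀ a₀ hb₀K ha₀K h1 hgap0 hmeas
        refine ⟨i ::ₘ w, g, hg, ?_⟩
        rw [Multiset.map_cons, Multiset.prod_cons, mul_assoc, ← heq, hlen]
      · have h1 : a₀ < b₀ := by nlinarith
        have hlen : b - a = |r i| * (b₀ - a₀) := by rw [abs_of_pos hc]; nlinarith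
        have hgap0 : Ioo a₀ b₀ ∩ K = ∅ := by
          by_contra hne
          obtain ⟨z, hz1, hz2⟩ := Set.nonempty_iff_ne_empty.2 hne
          have hz3 : r i * z + s i ∈ Ioo a b := by
            have : r i * z + s i ∈ (fun t => r i * t + s i) '' Ioo a₀ b₀ := ⟨z, hz1, rfl⟩
            rwa [image_Ioo_pos hc, ha₀, hb₀] at this
          exact absurd (Set.mem_inter hz3 (H.pieceK_sub_K i ⟨z, hz2, rfl⟩))
            (by rw [hgap]; exact notMem_empty _)
        have hmeas : (sSup U - sInf U + 1) * |r i0| ^ n < b₀ - a₀ := by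
          have h2 : |r i| * (b₀ - a₀) ≤ |r i0| * (b₀ - a₀) := by nlinarith [hmax i]
          have h3 : (sSup U - sInf U + 1) * (|r i0| ^ n * |r i0|) < |r i0| * (b₀ - a₀) := by
            calc (sSup U - sInf U + 1) * (|r i0| ^ n * |r i0|)
                = (sSup U - sInf U + 1) * |r i0| ^ (n+1) := by ring
              _ < b - a := hbig
              _ = |r i| * (b₀ - a₀) := hlen
              _ ≤ |r i0| * (b₀ - a₀) := h2
          nlinarith
        obtain ⟨w, g, hg, heq⟩ := ih a₀ b₀ ha₀K hb₀K h1 hgap0 hmeas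
        refine ⟨i ::ₘ w, g, hg, ?_⟩
        rw [Multiset.map_cons, Multiset.prod_cons, mul_assoc, ← heq, hlen]
    · obtain ⟨j, hcase⟩ := H.primary_endpoint haK hbK hab hgap hprim
      refine ⟨0, b - a, ?_, by simp⟩
      refine ⟨a, ?_, ?_⟩
      · rcases hcase with h | h
        · exact Set.mem_union_left _ ⟨j, h.symm⟩
        · exact Set.mem_union_right _ ⟨j, h.symm⟩
      · show sInf (K ∩ Ioi a) - a = b - a
        rw [← H.gap_b_eq hbK hab hgap]

lemma decomp {θ : ℝ} (hθ : θ ∈ gapLengths K) :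
    ∃ (w : Multiset ι) (g : ℝ), g ∈ primaryGaps r s K U ∧
      θ = (w.map fun i => |r i|).prod * g := by
  obtain ⟨a, b, haK, hbK, hab, hgap, rfl⟩ := hθ
  obtain ⟨i0, _, hmax⟩ := Finset.exists_max_image Finset.univ (fun i => |r i|)
    ⟨Classical.arbitrary ι, Finset.mem_univ _⟩
  have hmax' : ∀ j, |r j| ≤ |r i0| := fun j => hmax j (Finset.mem_univ j)
  have hρlt : |r i0| < 1 := (H.hr i0).1
  have hD : 0 < sSup U - sInf U + 1 := by
    obtain ⟨x, hx⟩ := H.hUne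
    have h1 : sInf U ≤ x := csInf_le H.hUb.bddBelow hx
    have h2 : x ≤ sSup U := le_csSup H.hUb.bddAbove hx
    linarith
  obtain ⟨n, hn⟩ := exists_pow_lt_of_lt_one
    (div_pos (by linarith : (0:ℝ) < b - a) hD) hρlt
  have hn' : (sSup U - sInf U + 1) * |r i0| ^ n < b - a := by
    rw [lt_div_iff₀ hD] at hn
    linarith [hn]
  exact H.decomp_aux i0 hmax' n a b haK hbK hab hgap hn'

end IFSData

lemma prod_map_pos {ι : Type} {ρ : ι → ℝ} (hρ : ∀ i, 0 < ρ i) (w : Multiset ι) :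
    0 < (w.map ρ).prod := by
  induction w using Multiset.induction with
  | empty => simp
  | cons i w ih => rw [Multiset.map_cons, Multiset.prod_cons]; exact mul_pos (hρ i) ih

lemma prod_map_le_one {ι : Type} {ρ : ι → ℝ} (hρ : ∀ i, 0 < ρ i ∧ ρ i < 1) (w : Multiset ι) :
    (w.map ρ).prod ≤ 1 := by
  induction w using Multiset.induction with
  | empty => simp
  | cons i w ih =>
    rw [Multiset.map_cons, Multiset.prod_cons]
    have := prod_map_pos (fun i => (hρ i).1) w
    nlinarith [(hρ i).1, (hρ i).2]

lemma prod_map_lt_one {ι : Type} {ρ : ι → ℝ} (hρ : ∀ i, 0 < ρ i ∧ ρ i < 1) {w : Multiset ι}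
    (hw : w ≠ 0) : (w.map ρ).prod < 1 := by
  obtain ⟨i, hi⟩ := Multiset.exists_mem_of_ne_zero hw
  obtain ⟨w', rfl⟩ := Multiset.exists_cons_of_mem hi
  rw [Multiset.map_cons, Multiset.prod_cons]
  have h1 := prod_map_pos (fun i => (hρ i).1) w'
  have h2 := prod_map_le_one hρ w'
  nlinarith [(hρ i).1, (hρ i).2]

/-- The key pigeonhole/Dickson argument. -/
lemma chain_rel {ι : Type} [Fintype ι] {ρ : ι → ℝ} (hρ : ∀ i, 0 < ρ i ∧ ρ i < 1)
    {Θ G : Set ℝ} (hG : G.Finite)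
    (hdec : ∀ θ ∈ Θ, ∃ (w : Multiset ι) (g : ℝ), g ∈ G ∧ θ = (w.map ρ).prod * g)
    {x θ' : ℝ} (hx0 : 0 < x) (hx1 : x < 1) (hθ'pos : 0 < θ')
    (hchain : ∀ m : ℕ, θ' * x ^ m ∈ Θ) :
    ∃ (n : ℕ) (w : Multiset ι), 0 < n ∧ w ≠ 0 ∧ x ^ n = (w.map ρ).prod := by
  classical
  choose w g hgG hgeq using fun m => hdec _ (hchain m)
  haveI : Finite ↥G := hG.to_subtype
  obtain ⟨y, hy⟩ := Finite.exists_infinite_fiber (fun m => (⟨g m, hgG m⟩ : G))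
  set M := (fun m => (⟨g m, hgG m⟩ : G)) ⁻¹' {y} with hM
  have hMinf : M.Infinite := Set.infinite_coe_iff.mp hy
  set e := hMinf.natEmbedding with he
  have hge : ∀ n : ℕ, g (e n : ℕ) = (y : ℝ) := by
    intro n
    have h1 : (⟨g (e n : ℕ), hgG _⟩ : G) = y := (e n).2
    exact congrArg Subtype.val h1
  have hpwo : (Set.univ : Set (ι → ℕ)).IsPWO :=
    Set.isPWO_of_wellQuasiOrderedLE _
  obtain ⟨m, n, hmn, hle⟩ := Set.PartiallyWellOrderedOn.exists_lt hpwo (f := fun k i => Multiset.count i (w (e k : ℕ)))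
    (fun _ => Set.mem_univ _)
  set p := (e m : ℕ) with hp
  set q := (e n : ℕ) with hq
  have hpq : p ≠ q := fun h => (ne_of_lt hmn) (e.injective (Subtype.ext h))
  have hwle : w p ≤ w q := Multiset.le_iff_count.2 hle
  set d := w q - w p with hd
  have hwq : w q = w p + d := by rw [hd, add_comm, tsub_add_cancel_of_le hwle]
  set P := ((w p).map ρ).prod with hP'
  set Dd := (d.map ρ).prod with hDd'
  have hprodq : ((w q).map ρ).prod = P * Dd := by
    rw [hwq, Multiset.map_add, Multiset.prod_add]
  have hP : 0 < P := prod_map_pos (fun i => (hρ i).1) _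
  have hDpos : 0 < Dd := prod_map_pos (fun i => (hρ i).1) _
  have heqp : θ' * x ^ p = P * (y : ℝ) := by rw [← hge m]; exact hgeq p
  have heqq : θ' * x ^ q = P * Dd * (y : ℝ) := by rw [← hprodq, ← hge n]; exact hgeq q
  have hgpos : 0 < (y : ℝ) := by
    have h1 : 0 < θ' * x ^ p := mul_pos hθ'pos (pow_pos hx0 p)
    rw [heqp] at h1
    nlinarith
  have hPYne : P * (y : ℝ) ≠ 0 := ne_of_gt (mul_pos hP hgpos)
  rcases lt_trichotomy p q with hlt | heq | hgt
  · have key : P * (y : ℝ) * x ^ (q - p) = P * (y : ℝ) * Dd := by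
      calc P * (y : ℝ) * x ^ (q - p) = (θ' * x ^ p) * x ^ (q - p) := by rw [heqp]
        _ = θ' * x ^ q := by rw [mul_assoc, ← pow_add]; congr 2; omega
        _ = P * Dd * (y : ℝ) := heqq
        _ = P * (y : ℝ) * Dd := by ring
    have hxd : x ^ (q - p) = Dd := mul_left_cancel₀ hPYne key
    refine ⟨q - p, d, by omega, ?_, hxd⟩
    intro hd0
    rw [hd0] at hDd'
    have : Dd = 1 := by rw [hDd']; simp
    have h4 : x ^ (q - p) < 1 := pow_lt_one₀ (le_of_lt hx0) hx1 (by omega)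
    rw [hxd, this] at h4
    exact lt_irrefl _ h4
  · exact absurd heq hpq
  · exfalso
    have key : P * (y : ℝ) * (Dd * x ^ (p - q)) = P * (y : ℝ) * 1 := by
      calc P * (y : ℝ) * (Dd * x ^ (p - q)) = (P * Dd * (y : ℝ)) * x ^ (p - q) := by ring
        _ = (θ' * x ^ q) * x ^ (p - q) := by rw [heqq]
        _ = θ' * x ^ p := by rw [mul_assoc, ← pow_add]; congr 2; omega
        _ = P * (y : ℝ) * 1 := by rw [heqp, mul_one]
    have h4 : Dd * x ^ (p - q) = 1 := mul_left_cancel₀ hPYne key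
    have h5 : Dd ≤ 1 := prod_map_le_one hρ d
    have h7 : x ^ (p - q) < 1 := pow_lt_one₀ (le_of_lt hx0) hx1 (by omega)
    nlinarith [pow_pos hx0 (p - q)]

lemma gapLengths_pos {K : Set ℝ} {θ : ℝ} (hθ : θ ∈ gapLengths K) : 0 < θ := by
  obtain ⟨a, b, _, _, hab, _, rfl⟩ := hθ
  linarith

lemma gapLengths_nonempty {K : Set ℝ} (hK : IsCompact K) (hKne : K.Nonempty)
    (hni : ¬ ∃ a b : ℝ, a ≤ b ∧ K = Set.Icc a b) : (gapLengths K).Nonempty := by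
  set a₀ := sInf K with ha₀
  set b₀ := sSup K with hb₀
  have haK : a₀ ∈ K := hK.sInf_mem hKne
  have hbK : b₀ ∈ K := hK.sSup_mem hKne
  have hab : a₀ ≤ b₀ := csInf_le hK.bddBelow hbK
  have hsub : K ⊆ Icc a₀ b₀ := fun x hx => ⟨csInf_le hK.bddBelow hx, le_csSup hK.bddAbove hx⟩
  have hne : K ≠ Icc a₀ b₀ := fun h => hni ⟨a₀, b₀, hab, h⟩
  have hex : ∃ x ∈ Icc a₀ b₀, x ∉ K := by
    by_contra h
    push_neg at h
    exact hne (Set.Subset.antisymm hsub h)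
  obtain ⟨x, hxI, hxK⟩ := hex
  have hax : a₀ < x := lt_of_le_of_ne hxI.1 (fun h => hxK (h ▸ haK))
  have hxb : x < b₀ := lt_of_le_of_ne hxI.2 (fun h => hxK (h.symm ▸ hbK))
  have hS1c : IsCompact (K ∩ Iic x) := hK.inter_right isClosed_Iic
  have hS1ne : (K ∩ Iic x).Nonempty := ⟨a₀, haK, le_of_lt hax⟩
  have hS2c : IsCompact (K ∩ Ici x) := hK.inter_right isClosed_Ici
  have hS2ne : (K ∩ Ici x).Nonempty := ⟨b₀, hbK, le_of_lt hxb⟩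
  set a' := sSup (K ∩ Iic x) with ha'
  set b' := sInf (K ∩ Ici x) with hb'
  have ha'mem : a' ∈ K ∩ Iic x := hS1c.sSup_mem hS1ne
  have hb'mem : b' ∈ K ∩ Ici x := hS2c.sInf_mem hS2ne
  have ha'x : a' < x := lt_of_le_of_ne ha'mem.2 (fun h => hxK (h ▸ ha'mem.1))
  have hxb' : x < b' := lt_of_le_of_ne hb'mem.2 (fun h => hxK (h.symm ▸ hb'mem.1))
  refine ⟨b' - a', a', b', ha'mem.1, hb'mem.1, lt_trans ha'x hxb', ?_, rfl⟩
  rw [Set.eq_empty_iff_forall_notMem]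
  rintro z ⟨⟨hz1, hz2⟩, hzK⟩
  rcases le_or_gt z x with h | h
  · exact absurd (le_csSup hS1c.bddAbove (⟨hzK, h⟩ : z ∈ K ∩ Iic x)) (not_le.2 hz1)
  · exact absurd (csInf_le hS2c.bddBelow (⟨hzK, le_of_lt h⟩ : z ∈ K ∩ Ici x)) (not_le.2 hz2)

lemma qPosStar_pow {A : Set ℝ} (hApos : ∀ a ∈ A, 0 < a) {x : ℝ} (hx : x ∈ qPosStar A)
    {n : ℕ} (hn : 0 < n) : x ^ n ∈ qPosStar A := by
  obtain ⟨q, hqA, hqfin, hqne, hqpos, rfl⟩ := hx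
  refine ⟨fun a => n * q a, fun a h => hqA a (fun h0 => h (by simp [h0])), ?_, ?_, ?_, ?_⟩
  · apply hqfin.subset
    intro a ha
    simp only [Function.mem_support] at ha ⊢
    intro h0; rw [h0, mul_zero] at ha; exact ha rfl
  · obtain ⟨a, ha⟩ := Function.ne_iff.1 hqne
    apply Function.ne_iff.2
    refine ⟨a, ?_⟩
    simp only [Pi.zero_apply] at ha ⊢
    exact mul_ne_zero (Nat.cast_ne_zero.2 (Nat.pos_iff_ne_zero.1 hn)) ha
  · intro a
    exact mul_nonneg (by positivity) (hqpos a)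
  · have hfin : (Function.mulSupport fun a => a ^ ((q a : ℝ))).Finite := by
      apply hqfin.subset
      intro a ha
      simp only [Function.mem_mulSupport] at ha
      simp only [Function.mem_support]
      intro h0
      rw [h0] at ha
      simp only [Rat.cast_zero, Real.rpow_zero] at ha
      exact ha rfl
    rw [finprod_pow hfin]
    apply finprod_congr
    intro a
    by_cases h0 : q a = 0
    · simp [h0]
    · have hapos : 0 < a := hApos a (hqA a h0)
      rw [← Real.rpow_natCast (a ^ ((q a : ℝ))) n, ← Real.rpow_mul hapos.le]
      congr 1
      push_cast
      ring

theorem stmt5 {V E : Type} [Fintype V] [Fintype E]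
    (α ω : E → V) (ρ c : E → ℝ) (F : V → Set ℝ)
    (hρ : ∀ e, |ρ e| < 1 ∧ ρ e ≠ 0)
    (hFc : ∀ v, IsCompact (F v) ∧ (F v).Nonempty)
    (hFeq : ∀ v, F v = ⋃ e ∈ {e : E | α e = v}, (fun t => ρ e * t + c e) '' F (ω e))
    (hCOSC : ∃ U : V → Set ℝ,
      (∀ v, (U v).Nonempty ∧ IsOpen (U v) ∧ Bornology.IsBounded (U v) ∧ Convex ℝ (U v)) ∧
      (∀ e, (fun t => ρ e * t + c e) '' U (ω e) ⊆ U (α e)) ∧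
      (∀ e e', e ≠ e' → α e = α e' →
        Disjoint ((fun t => ρ e * t + c e) '' U (ω e))
          ((fun t => ρ e' * t + c e') '' U (ω e'))))
    (hd2 : ∀ v, 2 ≤ Nat.card {e : E // α e = v})
    (A : Set ℝ) (hA : A = {t | ∃ e : E, t = |ρ e|})
    (u : V) (hni : ¬ ∃ a b : ℝ, a ≤ b ∧ F u = Set.Icc a b)
    -- F_u is the attractor of a standard COSC IFS
    (ι : Type) [Fintype ι] [Nonempty ι] (r s : ι → ℝ)
    (hr : ∀ i, |r i| < 1 ∧ r i ≠ 0)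
    (hdist : ∀ i j, r i = r j → s i = s j → i = j)
    (hattr : F u = ⋃ i, (fun t => r i * t + s i) '' F u)
    (hIFScosc : ∃ U : Set ℝ, U.Nonempty ∧ IsOpen U ∧ Bornology.IsBounded U ∧ Convex ℝ U ∧
      (∀ i, (fun t => r i * t + s i) '' U ⊆ U) ∧
      (Pairwise fun i j =>
        Disjoint ((fun t => r i * t + s i) '' U) ((fun t => r j * t + s j) '' U)))
    -- the splitting A = A₁ ∪ A₂ with A₁^{ℚ*} ∩ A₂^{ℚ₊*} = ∅
    (A₁ A₂ : Set ℝ) (hsplit : A₁ ∪ A₂ = A) (hsep : qStar A₁ ∩ qPosStar A₂ = ∅) :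
    Xor'
      (∀ θ ∈ gapLengths (F u), (ratioSet (gapLengths (F u)) θ ∩ qPosStar A₁).Nonempty)
      (∀ θ ∈ gapLengths (F u), ratioSet (gapLengths (F u)) θ ∩ qPosStar A₁ = ∅) := by
  obtain ⟨U, hUne, hUo, hUb, hUc, hinv, hdisj⟩ := hIFScosc
  have H : IFSData r s (F u) U :=
    ⟨(hFc u).1, (hFc u).2, hattr, hr, hUne, hUo, hUb, hUc, hinv, hdisj⟩
  have hρ' : ∀ i, 0 < |r i| ∧ |r i| < 1 := fun i => ⟨abs_pos.2 (hr i).2, (hr i).1⟩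
  have hΘne : (gapLengths (F u)).Nonempty := gapLengths_nonempty (hFc u).1 (hFc u).2 hni
  have hA₁pos : ∀ a ∈ A₁, 0 < a := by
    intro a ha
    have haA : a ∈ A := hsplit ▸ Set.mem_union_left _ ha
    rw [hA] at haA
    obtain ⟨e, rfl⟩ := haA
    exact abs_pos.2 (hρ e).2
  by_cases hC : ∃ w : Multiset ι, w ≠ 0 ∧ (w.map fun i => |r i|).prod ∈ qPosStar A₁
  · -- Case 1 holds for every θ
    left
    have hcase1 : ∀ θ ∈ gapLengths (F u),
        (ratioSet (gapLengths (F u)) θ ∩ qPosStar A₁).Nonempty := by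
      intro θ hθ
      obtain ⟨w, hw0, hwq⟩ := hC
      set β := (w.map fun i => |r i|).prod with hβ
      have hchain : ∀ k : ℕ, θ * β ^ k ∈ gapLengths (F u) := by
        intro k
        induction k with
        | zero => simpa using hθ
        | succ k ih =>
          have h1 := H.gapLengths_word w ih
          have h2 : β * (θ * β ^ k) = θ * β ^ (k+1) := by rw [pow_succ]; ring
          rwa [← hβ, h2] at h1
      refine ⟨β, ⟨⟨prod_map_pos (fun i => (hρ' i).1) w, prod_map_lt_one hρ' hw0,
        θ, hθ, ⟨0, by simp⟩, hchain⟩, hwq⟩⟩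
    refine ⟨hcase1, ?_⟩
    intro hcase2
    obtain ⟨θ₀, hθ₀⟩ := hΘne
    obtain ⟨x, hx⟩ := hcase1 θ₀ hθ₀
    rw [hcase2 θ₀ hθ₀] at hx
    exact hx
  · -- Case 2 holds for every θ
    right
    have hcase2 : ∀ θ ∈ gapLengths (F u),
        ratioSet (gapLengths (F u)) θ ∩ qPosStar A₁ = ∅ := by
      intro θ hθ
      rw [Set.eq_empty_iff_forall_notMem]
      rintro x ⟨⟨hx0, hx1, θ', hθ', ⟨k, hk⟩, hchain⟩, hxq⟩
      have hθ'pos : 0 < θ' := gapLengths_pos hθ'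
      obtain ⟨n, w, hn, hw0, hxn⟩ := chain_rel hρ' (IFSData.primaryGaps_finite)
        (fun θ hθ => H.decomp hθ) hx0 hx1 hθ'pos hchain
      exact hC ⟨w, hw0, hxn ▸ qPosStar_pow hA₁pos hxq hn⟩
    refine ⟨hcase2, ?_⟩
    intro hcase1
    obtain ⟨θ₀, hθ₀⟩ := hΘne
    obtain ⟨x, hx⟩ := hcase1 θ₀ hθ₀
    rw [hcase2 θ₀ hθ₀] at hx
    exact hx
end

section
/- With the construction 𝔉(x,b) described in the context (parameters x_i^{(k)} ∈ (−1,1)∖{0}, ξ_i^{(k)} ≥ 0 with ∑_{k=1}^{d_i−1} ξ_i^{(k)} > 0 for each vertex i, spectral radius of M strictly less than 1, and (l_i) = (id − M)^{−1}(∑_k ξ_i^{(k)})): for every vertex i ∈ V one has l_i > 0, and the convex hull of the attractor F_i equals the closed interval [b_i^{(1)}, b_i^{(1)} + l_i]. -/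
open Matrix Filter Polynomial

attribute [local instance] Matrix.linftyOpNormedRing Matrix.linftyOpNormedAlgebra

private lemma pow_entry_tendsto_zero' {V : Type} [Fintype V] [DecidableEq V] [Nonempty V]
    (M : Matrix V V ℝ)
    (hspec : ∀ μ : ℂ, ((M.map (fun t : ℝ => (t : ℂ))).charpoly.IsRoot μ) → ‖μ‖ < 1) :
    ∀ i j : V, Tendsto (fun n => (M ^ n) i j) atTop (nhds 0) := by
  set A : Matrix V V ℂ := M.map (fun t : ℝ => (t : ℂ)) with hA
  have hroot : ∀ μ ∈ spectrum ℂ A, A.charpoly.IsRoot μ := by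
    intro μ h
    rw [spectrum.mem_iff, Matrix.isUnit_iff_isUnit_det] at h
    have hdet : ((algebraMap ℂ (Matrix V V ℂ)) μ - A).det = 0 := by
      by_contra h0
      exact h (isUnit_iff_ne_zero.mpr h0)
    have h2 : A.charpoly.eval μ = (Matrix.scalar V μ - A).det := by
      rw [Matrix.charpoly, eval_det, matPolyEquiv_charmatrix]; simp
    rw [IsRoot.def, h2]
    convert hdet using 3
    rfl
  have hrad : spectralRadius ℂ A < 1 := by
    have := spectrum.spectralRadius_lt_of_forall_lt (a := A) (r := 1)
      (fun z hz => by rw [← NNReal.coe_lt_coe]; simpa using hspec z (hroot z hz))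
    simpa using this
  obtain ⟨c, hc1, hc2⟩ := exists_between hrad
  have hev : ∀ᶠ n : ℕ in atTop, (‖A ^ n‖₊ : ENNReal) ^ (1 / (n:ℝ)) < c :=
    eventually_lt_of_limsup_lt
      (lt_of_le_of_lt (spectrum.limsup_pow_nnnorm_pow_one_div_le_spectralRadius A) hc1)
  have hnorm : Tendsto (fun n : ℕ => (‖A ^ n‖₊ : ENNReal)) atTop (nhds 0) := by
    have hcount : Tendsto (fun n : ℕ => c ^ n) atTop (nhds 0) :=
      ENNReal.tendsto_pow_atTop_nhds_zero_of_lt_one hc2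
    refine tendsto_of_tendsto_of_tendsto_of_le_of_le' tendsto_const_nhds hcount
      (Eventually.of_forall fun n => zero_le) ?_
    filter_upwards [hev, eventually_ge_atTop 1] with n hn hn1
    have hne : (n : ℝ) ≠ 0 := by positivity
    calc (‖A ^ n‖₊ : ENNReal) = ((‖A ^ n‖₊ : ENNReal) ^ (1 / (n:ℝ))) ^ (n : ℝ) := by
          rw [← ENNReal.rpow_mul, one_div_mul_cancel hne, ENNReal.rpow_one]
      _ ≤ c ^ (n : ℝ) := ENNReal.rpow_le_rpow hn.le (by positivity)
      _ = c ^ n := ENNReal.rpow_natCast c n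
  have hnormR : Tendsto (fun n : ℕ => ‖A ^ n‖) atTop (nhds 0) := by
    have h0 : Tendsto (fun n : ℕ => ‖A ^ n‖₊) atTop (nhds 0) := by
      rw [← ENNReal.coe_zero] at hnorm
      exact (ENNReal.tendsto_coe).mp hnorm
    have := (NNReal.tendsto_coe (f := atTop)).mpr h0
    simpa using this
  intro i j
  have hentry : ∀ n : ℕ, |(M ^ n) i j| ≤ ‖A ^ n‖ := by
    intro n
    have hmap : A ^ n = (M ^ n).map (fun t : ℝ => (t : ℂ)) := by
      have : A = Complex.ofRealHom.mapMatrix M := rfl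
      rw [this, ← map_pow]
      rfl
    have h1 : |(M ^ n) i j| = ‖(A ^ n) i j‖ := by
      rw [hmap]
      simp [Matrix.map_apply, Complex.norm_real]
    rw [h1]
    have h2 : ‖(A ^ n) i j‖₊ ≤ ‖A ^ n‖₊ := by
      rw [Matrix.linfty_opNNNorm_def]
      exact le_trans (Finset.single_le_sum (f := fun k => ‖(A ^ n) i k‖₊) (fun k _ => zero_le) (Finset.mem_univ j))
        (Finset.le_sup (f := fun i => ∑ j, ‖(A ^ n) i j‖₊) (Finset.mem_univ i))
    exact h2
  exact squeeze_zero_norm (fun n => hentry n) hnormR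

private lemma l_fixed_and_pos' {V : Type} [Fintype V] [DecidableEq V] [Nonempty V]
    (M : Matrix V V ℝ) (hMnn : ∀ i j, 0 ≤ M i j)
    (hspec : ∀ μ : ℂ, ((M.map (fun t : ℝ => (t : ℂ))).charpoly.IsRoot μ) → ‖μ‖ < 1)
    (ξv : V → ℝ) (hξv : ∀ v, 0 < ξv v) (l : V → ℝ)
    (hl : l = ((1 - M)⁻¹).mulVec ξv) :
    (∀ v, l v = ξv v + M.mulVec l v) ∧ (∀ v, ξv v ≤ l v) := by
  have hdet : (1 - M).det ≠ 0 := by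
    intro h0
    have h1 : (M.charpoly).eval 1 = (1 - M).det := by
      rw [Matrix.charpoly, eval_det, matPolyEquiv_charmatrix]; simp
    have h2 : ((M.map (fun t : ℝ => (t : ℂ))).charpoly).IsRoot 1 := by
      have h3 : M.map (fun t : ℝ => (t : ℂ)) = M.map (Complex.ofRealHom : ℝ →+* ℂ) := rfl
      rw [IsRoot.def, h3, Matrix.charpoly_map]
      rw [Polynomial.eval_one_map]
      rw [h1, h0]
      simp
    have := hspec 1 h2
    simp at this
  have hfix : ∀ v, l v = ξv v + M.mulVec l v := by
    have h2 : (1 - M).mulVec l = ξv := by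
      rw [hl, Matrix.mulVec_mulVec, Matrix.mul_nonsing_inv _ (isUnit_iff_ne_zero.mpr hdet),
        Matrix.one_mulVec]
    intro v
    have h3 := congrFun h2 v
    rw [Matrix.sub_mulVec, Matrix.one_mulVec] at h3
    have h4 : l v - M.mulVec l v = ξv v := h3
    linarith
  refine ⟨hfix, ?_⟩
  have Pnn : ∀ n : ℕ, ∀ i j, 0 ≤ (M ^ n) i j := by
    intro n
    induction n with
    | zero => intro i j; rw [pow_zero]; by_cases h : i = j <;> simp [Matrix.one_apply, h]
    | succ n ih =>
      intro i j
      rw [pow_succ, Matrix.mul_apply]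
      exact Finset.sum_nonneg fun k _ => mul_nonneg (ih i k) (hMnn k j)
  have hfix' : l = fun v => ξv v + M.mulVec l v := funext hfix
  have key : ∀ n : ℕ, ∀ v, l v =
      (∑ k ∈ Finset.range n, ((M ^ k).mulVec ξv) v) + ((M ^ n).mulVec l) v := by
    intro n
    induction n with
    | zero => intro v; simp [Matrix.one_mulVec]
    | succ n ih =>
      intro v
      have h5 : ((M ^ n).mulVec l) v = ((M ^ n).mulVec ξv) v + ((M ^ (n+1)).mulVec l) v := by
        conv_lhs => rw [hfix']
        have : (fun v => ξv v + M.mulVec l v) = ξv + M.mulVec l := rfl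
        rw [this, Matrix.mulVec_add, Matrix.mulVec_mulVec, ← pow_succ]
        rfl
      rw [Finset.sum_range_succ]
      have := ih v
      linarith
  intro v
  have hmul0 : Tendsto (fun n => ((M ^ n).mulVec l) v) atTop (nhds 0) := by
    have : ∀ n, ((M ^ n).mulVec l) v = ∑ j, (M ^ n) v j * l j := fun n => rfl
    simp only [this]
    have h6 : Tendsto (fun n => ∑ j, (M ^ n) v j * l j) atTop (nhds (∑ j : V, 0 * l j)) := by
      apply tendsto_finset_sum
      intro j _
      exact (pow_entry_tendsto_zero' M hspec v j).mul_const (l j)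
    simpa using h6
  have hge : ∀ n : ℕ, 1 ≤ n → ξv v + ((M ^ n).mulVec l) v ≤ l v := by
    intro n hn
    rw [key n v]
    have h7 : ξv v ≤ ∑ k ∈ Finset.range n, ((M ^ k).mulVec ξv) v := by
      have h8 : ((M ^ 0).mulVec ξv) v = ξv v := by simp [Matrix.one_mulVec]
      rw [← h8]
      apply Finset.single_le_sum (f := fun k => ((M ^ k).mulVec ξv) v)
      · intro k _
        exact Finset.sum_nonneg fun j _ => mul_nonneg (Pnn k v j) (hξv j).le
      · simpa using (show 0 < n from hn)
    linarith
  have hlim : Tendsto (fun n => ξv v + ((M ^ n).mulVec l) v) atTop (nhds (ξv v)) := by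
    simpa using (tendsto_const_nhds (x := ξv v)).add hmul0
  exact le_of_tendsto hlim (eventually_atTop.mpr ⟨1, hge⟩)

set_option maxHeartbeats 1000000 in
theorem stmt6 {V E : Type} [Fintype V] [Fintype E] [DecidableEq V]
    (α ω : E → V)
    -- out-degrees, all at least 2
    (d : V → ℕ) (hd : ∀ v, d v = Nat.card {e : E // α e = v}) (hd2 : ∀ v, 2 ≤ d v)
    -- enumeration of the edges leaving each vertex
    (en : V → ℕ → E) (hen : ∀ v, Set.BijOn (en v) (Set.Iio (d v)) {e : E | α e = v})
    -- parameters of the construction 𝔉(x,b)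
    (x : V → ℕ → ℝ) (hx : ∀ i k, k < d i → |x i k| < 1 ∧ x i k ≠ 0)
    (ξ : V → ℕ → ℝ) (hξ : ∀ i k, k + 1 < d i → 0 ≤ ξ i k)
    (hξsum : ∀ i, 0 < ∑ k ∈ Finset.range (d i - 1), ξ i k)
    -- the matrix M and its spectral radius condition
    (M : Matrix V V ℝ)
    (hM : ∀ i j, M i j = ∑ k ∈ Finset.range (d i), if ω (en i k) = j then |x i k| else 0)
    (hspec : ∀ μ : ℂ, ((M.map (fun t : ℝ => (t : ℂ))).charpoly.IsRoot μ) → ‖μ‖ < 1)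
    -- l = (id - M)⁻¹ (∑_k ξ_i^{(k)})
    (l : V → ℝ) (hl : l = ((1 - M)⁻¹).mulVec (fun i => ∑ k ∈ Finset.range (d i - 1), ξ i k))
    -- translations b_i^{(k)}
    (b0 : V → ℝ) (bb : V → ℕ → ℝ)
    (hbb0 : ∀ i, bb i 0 = b0 i)
    (hbbs : ∀ i k, k + 1 < d i →
      bb i (k + 1) = bb i k + |x i k| * l (ω (en i k)) + ξ i k)
    -- the GD-IFS maps of 𝔉(x,b)
    (S : E → ℝ → ℝ)
    (hS : ∀ i k, k < d i → ∀ t : ℝ, S (en i k) t =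
      x i k * (t - b0 (ω (en i k))) + bb i k -
        x i k * l (ω (en i k)) * (if x i k < 0 then 1 else 0))
    -- attractors of 𝔉(x,b)
    (F : V → Set ℝ)
    (hFc : ∀ v, IsCompact (F v) ∧ (F v).Nonempty)
    (hFeq : ∀ v, F v = ⋃ e ∈ {e : E | α e = v}, S e '' F (ω e)) :
    ∀ i : V, 0 < l i ∧ convexHull ℝ (F i) = Set.Icc (b0 i) (b0 i + l i) := by
  intro i₀
  haveI : Nonempty V := ⟨i₀⟩
  classical
  -- basic numeric facts about degrees
  have hdv : ∀ v, 0 < d v := fun v => lt_of_lt_of_le (by norm_num) (hd2 v)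
  -- M is entrywise nonnegative
  have Mnn : ∀ i j, 0 ≤ M i j := by
    intro i j
    rw [hM]
    exact Finset.sum_nonneg fun k _ => by positivity
  obtain ⟨hfix, hge⟩ := l_fixed_and_pos' M Mnn hspec _ hξsum l hl
  have hlpos : ∀ v, 0 < l v := fun v => lt_of_lt_of_le (hξsum v) (hge v)
  -- M. mulVec l in terms of the enumeration
  have hMl : ∀ v, M.mulVec l v = ∑ k ∈ Finset.range (d v), |x v k| * l (ω (en v k)) := by
    intro v
    show ∑ j, M v j * l j = _
    simp only [hM, Finset.sum_mul, ite_mul, zero_mul]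
    rw [Finset.sum_comm]
    congr 1
    ext k
    simp
  -- edges leaving v
  have hαen : ∀ v k, k < d v → α (en v k) = v := fun v k hk => (hen v).mapsTo hk
  have hsub : ∀ v k, k < d v → ∀ t ∈ F (ω (en v k)), S (en v k) t ∈ F v := by
    intro v k hk t ht
    rw [hFeq v]
    exact Set.mem_biUnion (hαen v k hk) (Set.mem_image_of_mem _ ht)
  have hcover : ∀ v, ∀ y ∈ F v, ∃ k, k < d v ∧ ∃ t ∈ F (ω (en v k)), S (en v k) t = y := by
    intro v y hy
    rw [hFeq v] at hy
    simp only [Set.mem_iUnion, Set.mem_image, Set.mem_setOf_eq] at hy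
    obtain ⟨e, he, t, ht, rfl⟩ := hy
    obtain ⟨k, hk, hke⟩ := (hen v).surjOn he
    exact ⟨k, hk, by rw [hke]; exact ⟨t, ht, rfl⟩⟩
  -- inf and sup of the attractors
  set m : V → ℝ := fun v => sInf (F v) with hm_def
  set s : V → ℝ := fun v => sSup (F v) with hs_def
  have hmF : ∀ v, m v ∈ F v := fun v => (hFc v).1.sInf_mem (hFc v).2
  have hsF : ∀ v, s v ∈ F v := fun v => (hFc v).1.sSup_mem (hFc v).2
  have hlow : ∀ v, ∀ y ∈ F v, m v ≤ y := fun v y hy => csInf_le (hFc v).1.bddBelow hy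
  have hup : ∀ v, ∀ y ∈ F v, y ≤ s v := fun v y hy => le_csSup (hFc v).1.bddAbove hy
  -- formula for bb
  have ξnn : ∀ v j, j < d v - 1 → 0 ≤ ξ v j := fun v j hj => hξ v j (by omega)
  have hbbf : ∀ v k, k < d v →
      bb v k = b0 v + ∑ j ∈ Finset.range k, (|x v j| * l (ω (en v j)) + ξ v j) := by
    intro v k
    induction k with
    | zero => intro _; simp [hbb0]
    | succ k ih =>
      intro hk
      rw [hbbs v k hk, ih (by omega), Finset.sum_range_succ]
      ring
  have hbbge : ∀ v k, k < d v → b0 v ≤ bb v k := by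
    intro v k hk
    rw [hbbf v k hk]
    have : 0 ≤ ∑ j ∈ Finset.range k, (|x v j| * l (ω (en v j)) + ξ v j) := by
      apply Finset.sum_nonneg
      intro j hj
      have hj' : j < k := Finset.mem_range.mp hj
      have h1 : 0 ≤ |x v j| * l (ω (en v j)) := mul_nonneg (abs_nonneg _) (hlpos _).le
      have h2 : 0 ≤ ξ v j := ξnn v j (by omega)
      linarith
    linarith
  -- the right endpoints g v k := bb v k + |x v k| * l (ω (en v k))
  set g : V → ℕ → ℝ := fun v k => bb v k + |x v k| * l (ω (en v k)) with hg_def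
  have glast : ∀ v, g v (d v - 1) = b0 v + l v := by
    intro v
    have h2v := hd2 v
    have hd1 : d v - 1 < d v := by omega
    have hdd : d v - 1 + 1 = d v := by omega
    have h1 : l v = (∑ k ∈ Finset.range (d v - 1), ξ v k) + M.mulVec l v := hfix v
    rw [hMl v] at h1
    have hsum := Finset.sum_range_succ (fun k => |x v k| * l (ω (en v k))) (d v - 1)
    rw [hdd] at hsum
    have h2 := hbbf v (d v - 1) hd1
    rw [Finset.sum_add_distrib] at h2
    show bb v (d v - 1) + |x v (d v - 1)| * l (ω (en v (d v - 1))) = b0 v + l v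
    rw [h2]
    rw [hsum] at h1
    linarith
  have hgle : ∀ v k, k < d v → g v k ≤ b0 v + l v := by
    intro v k hk
    have gstep : ∀ k', k' + 1 < d v → g v k' ≤ g v (k' + 1) := by
      intro k' hk'
      have h1 : bb v (k' + 1) = g v k' + ξ v k' := hbbs v k' hk'
      have h2 : 0 ≤ ξ v k' := hξ v k' hk'
      have h3 : 0 ≤ |x v (k' + 1)| * l (ω (en v (k' + 1))) :=
        mul_nonneg (abs_nonneg _) (hlpos _).le
      show g v k' ≤ bb v (k' + 1) + |x v (k' + 1)| * l (ω (en v (k' + 1)))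
      rw [h1]
      linarith
    have chain : ∀ n k', k' + n < d v → g v k' ≤ g v (k' + n) := by
      intro n
      induction n with
      | zero => intro k' _; simp
      | succ n ih =>
        intro k' hk'
        have h1 : g v k' ≤ g v (k' + n) := ih k' (by omega)
        have h2 : g v (k' + n) ≤ g v (k' + n + 1) := gstep (k' + n) (by omega)
        calc g v k' ≤ g v (k' + n) := h1
          _ ≤ g v (k' + (n + 1)) := by rw [← add_assoc]; exact h2
    have h4 : g v k ≤ g v (k + (d v - 1 - k)) := chain (d v - 1 - k) k (by omega)
    have h5 : k + (d v - 1 - k) = d v - 1 := by omega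
    rw [h5] at h4
    rw [← glast v]
    exact h4
  -- the uniform contraction ratio r
  have hrangene : ∀ v, (Finset.range (d v)).Nonempty :=
    fun v => Finset.nonempty_range_iff.mpr (hdv v).ne'
  set r : ℝ := Finset.univ.sup' Finset.univ_nonempty
      (fun v => (Finset.range (d v)).sup' (hrangene v) fun k => |x v k|) with hr_def
  have hrx : ∀ v k, k < d v → |x v k| ≤ r := by
    intro v k hk
    refine le_trans ?_ (Finset.le_sup' _ (Finset.mem_univ v))
    exact Finset.le_sup' (f := fun k => |x v k|) (Finset.mem_range.mpr hk)
  have hr1 : r < 1 := by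
    rw [hr_def]
    rw [Finset.sup'_lt_iff]
    intro v _
    rw [Finset.sup'_lt_iff]
    intro k hk
    exact (hx v k (Finset.mem_range.mp hk)).1
  have hr0 : 0 ≤ r := le_trans (abs_nonneg _) (hrx i₀ 0 (hdv i₀))
  -- the error δ
  set δ : ℝ := Finset.univ.sup' Finset.univ_nonempty
      (fun v => max |m v - b0 v| |s v - (b0 v + l v)|) with hδ_def
  have hδm : ∀ v, |m v - b0 v| ≤ δ :=
    fun v => le_trans (le_max_left _ _)
      (Finset.le_sup' (fun v => max |m v - b0 v| |s v - (b0 v + l v)|) (Finset.mem_univ v))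
  have hδs : ∀ v, |s v - (b0 v + l v)| ≤ δ :=
    fun v => le_trans (le_max_right _ _)
      (Finset.le_sup' (fun v => max |m v - b0 v| |s v - (b0 v + l v)|) (Finset.mem_univ v))
  have hδ0 : 0 ≤ δ := le_trans (abs_nonneg _) (hδm i₀)
  -- the key interval estimates
  have c1 : ∀ v k, k < d v → ∀ t, m (ω (en v k)) ≤ t → t ≤ s (ω (en v k)) →
      bb v k - r * δ ≤ S (en v k) t := by
    intro v k hk t hmt hts
    have hSv := hS v k hk t
    have habs : |x v k| ≤ r := hrx v k hk
    have ham := abs_le.mp (hδm (ω (en v k)))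
    have has := abs_le.mp (hδs (ω (en v k)))
    rcases lt_or_gt_of_ne (hx v k hk).2 with han | hap
    · rw [abs_of_neg han] at habs
      rw [hSv, if_pos han]
      have h1 : x v k * (t - b0 (ω (en v k))) ≥ x v k * (s (ω (en v k)) - b0 (ω (en v k))) :=
        mul_le_mul_of_nonpos_left (by linarith) han.le
      have h2 : (-(x v k)) * (s (ω (en v k)) - (b0 (ω (en v k)) + l (ω (en v k)))) ≤ (-(x v k)) * δ :=
        mul_le_mul_of_nonneg_left has.2 (by linarith)
      have h3 : (-(x v k)) * δ ≤ r * δ := mul_le_mul_of_nonneg_right habs hδ0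
      nlinarith
    · rw [abs_of_pos hap] at habs
      rw [hSv, if_neg (by linarith)]
      have h1 : x v k * (t - b0 (ω (en v k))) ≥ x v k * (m (ω (en v k)) - b0 (ω (en v k))) :=
        mul_le_mul_of_nonneg_left (by linarith) hap.le
      have h2 : x v k * (-δ) ≤ x v k * (m (ω (en v k)) - b0 (ω (en v k))) :=
        mul_le_mul_of_nonneg_left ham.1 hap.le
      have h3 : x v k * δ ≤ r * δ := mul_le_mul_of_nonneg_right habs hδ0
      nlinarith
  have c2 : ∀ v k, k < d v → ∀ t, m (ω (en v k)) ≤ t → t ≤ s (ω (en v k)) →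
      S (en v k) t ≤ g v k + r * δ := by
    intro v k hk t hmt hts
    have hSv := hS v k hk t
    have habs : |x v k| ≤ r := hrx v k hk
    have ham := abs_le.mp (hδm (ω (en v k)))
    have has := abs_le.mp (hδs (ω (en v k)))
    rw [hg_def]
    simp only []
    rcases lt_or_gt_of_ne (hx v k hk).2 with han | hap
    · rw [abs_of_neg han]
      rw [hSv, if_pos han]
      have h1 : x v k * (t - b0 (ω (en v k))) ≤ x v k * (m (ω (en v k)) - b0 (ω (en v k))) :=
        mul_le_mul_of_nonpos_left (by linarith) han.le
      have h2 : (-(x v k)) * (b0 (ω (en v k)) - m (ω (en v k))) ≤ (-(x v k)) * δ :=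
        mul_le_mul_of_nonneg_left (by linarith) (by linarith)
      have h3 : (-(x v k)) * δ ≤ r * δ := by
        rw [abs_of_neg han] at habs
        exact mul_le_mul_of_nonneg_right habs hδ0
      nlinarith
    · rw [abs_of_pos hap]
      rw [hSv, if_neg (by linarith)]
      have h1 : x v k * (t - b0 (ω (en v k))) ≤ x v k * (s (ω (en v k)) - b0 (ω (en v k))) :=
        mul_le_mul_of_nonneg_left (by linarith) hap.le
      have h2 : x v k * (s (ω (en v k)) - (b0 (ω (en v k)) + l (ω (en v k)))) ≤ x v k * δ :=
        mul_le_mul_of_nonneg_left has.2 hap.le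
      have h3 : x v k * δ ≤ r * δ := by
        rw [abs_of_pos hap] at habs
        exact mul_le_mul_of_nonneg_right habs hδ0
      nlinarith
  have c3lo : ∀ v k, k < d v →
      S (en v k) (if 0 < x v k then m (ω (en v k)) else s (ω (en v k))) ≤ bb v k + r * δ := by
    intro v k hk
    have habs : |x v k| ≤ r := hrx v k hk
    have ham := abs_le.mp (hδm (ω (en v k)))
    have has := abs_le.mp (hδs (ω (en v k)))
    rcases lt_or_gt_of_ne (hx v k hk).2 with han | hap
    · rw [if_neg (by linarith)]
      rw [hS v k hk _, if_pos han]
      rw [abs_of_neg han] at habs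
      have h2 : (-(x v k)) * (b0 (ω (en v k)) + l (ω (en v k)) - s (ω (en v k))) ≤ (-(x v k)) * δ :=
        mul_le_mul_of_nonneg_left (by linarith) (by linarith)
      have h3 : (-(x v k)) * δ ≤ r * δ := mul_le_mul_of_nonneg_right habs hδ0
      nlinarith
    · rw [if_pos hap]
      rw [hS v k hk _, if_neg (by linarith)]
      rw [abs_of_pos hap] at habs
      have h2 : x v k * (m (ω (en v k)) - b0 (ω (en v k))) ≤ x v k * δ :=
        mul_le_mul_of_nonneg_left ham.2 hap.le
      have h3 : x v k * δ ≤ r * δ := mul_le_mul_of_nonneg_right habs hδ0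
      nlinarith
  have c3hi : ∀ v k, k < d v →
      g v k - r * δ ≤ S (en v k) (if 0 < x v k then s (ω (en v k)) else m (ω (en v k))) := by
    intro v k hk
    have habs : |x v k| ≤ r := hrx v k hk
    have ham := abs_le.mp (hδm (ω (en v k)))
    have has := abs_le.mp (hδs (ω (en v k)))
    rw [hg_def]
    simp only []
    rcases lt_or_gt_of_ne (hx v k hk).2 with han | hap
    · rw [if_neg (by linarith)]
      rw [hS v k hk _, if_pos han]
      rw [abs_of_neg han] at habs ⊢
      have h2 : (-(x v k)) * (m (ω (en v k)) - b0 (ω (en v k))) ≤ (-(x v k)) * δ :=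
        mul_le_mul_of_nonneg_left ham.2 (by linarith)
      have h3 : (-(x v k)) * δ ≤ r * δ := mul_le_mul_of_nonneg_right habs hδ0
      nlinarith
    · rw [if_pos hap]
      rw [hS v k hk _, if_neg (by linarith)]
      rw [abs_of_pos hap] at habs ⊢
      have h2 : x v k * (b0 (ω (en v k)) + l (ω (en v k)) - s (ω (en v k))) ≤ x v k * δ :=
        mul_le_mul_of_nonneg_left (by linarith) hap.le
      have h3 : x v k * δ ≤ r * δ := mul_le_mul_of_nonneg_right habs hδ0
      nlinarith
  -- the four main estimates
  have e1 : ∀ v, m v - b0 v ≤ r * δ := by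
    intro v
    set t₀ : ℝ := if 0 < x v 0 then m (ω (en v 0)) else s (ω (en v 0)) with ht₀
    have ht₀F : t₀ ∈ F (ω (en v 0)) := by
      rw [ht₀]; split
      · exact hmF _
      · exact hsF _
    have h1 : S (en v 0) t₀ ∈ F v := hsub v 0 (hdv v) t₀ ht₀F
    have h2 : m v ≤ S (en v 0) t₀ := hlow v _ h1
    have h3 : S (en v 0) t₀ ≤ bb v 0 + r * δ := c3lo v 0 (hdv v)
    rw [hbb0] at h3
    linarith
  have e2 : ∀ v, b0 v - m v ≤ r * δ := by
    intro v
    obtain ⟨k, hk, t, ht, hSt⟩ := hcover v (m v) (hmF v)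
    have h1 : bb v k - r * δ ≤ S (en v k) t :=
      c1 v k hk t (hlow _ t ht) (hup _ t ht)
    have h2 : b0 v ≤ bb v k := hbbge v k hk
    rw [hSt] at h1
    linarith
  have e3 : ∀ v, s v - (b0 v + l v) ≤ r * δ := by
    intro v
    obtain ⟨k, hk, t, ht, hSt⟩ := hcover v (s v) (hsF v)
    have h1 : S (en v k) t ≤ g v k + r * δ :=
      c2 v k hk t (hlow _ t ht) (hup _ t ht)
    have h2 : g v k ≤ b0 v + l v := hgle v k hk
    rw [hSt] at h1
    linarith
  have e4 : ∀ v, (b0 v + l v) - s v ≤ r * δ := by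
    intro v
    have h2v := hd2 v
    have hd1 : d v - 1 < d v := by omega
    set t₁ : ℝ := if 0 < x v (d v - 1) then s (ω (en v (d v - 1))) else m (ω (en v (d v - 1)))
      with ht₁
    have ht₁F : t₁ ∈ F (ω (en v (d v - 1))) := by
      rw [ht₁]; split
      · exact hsF _
      · exact hmF _
    have h1 : S (en v (d v - 1)) t₁ ∈ F v := hsub v (d v - 1) hd1 t₁ ht₁F
    have h2 : S (en v (d v - 1)) t₁ ≤ s v := hup v _ h1
    have h3 : g v (d v - 1) - r * δ ≤ S (en v (d v - 1)) t₁ := c3hi v (d v - 1) hd1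
    rw [glast v] at h3
    linarith
  -- conclude δ = 0
  have hsup : δ ≤ r * δ := by
    have hbnd : ∀ v ∈ (Finset.univ : Finset V),
        (fun v => max |m v - b0 v| |s v - (b0 v + l v)|) v ≤ r * δ := by
      intro v _
      apply max_le
      · exact abs_le.mpr ⟨by linarith [e2 v], e1 v⟩
      · exact abs_le.mpr ⟨by linarith [e4 v], e3 v⟩
    exact hδ_def ▸ Finset.sup'_le _ _ hbnd
  have hδeq : δ = 0 := by
    rcases eq_or_lt_of_le hδ0 with h | h
    · exact h.symm
    · have := mul_lt_mul_of_pos_right hr1 h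
      rw [one_mul] at this
      linarith
  have hmv : ∀ v, m v = b0 v := by
    intro v
    have := hδm v
    rw [hδeq] at this
    have := abs_le.mp this
    linarith [this.1, this.2]
  have hsv : ∀ v, s v = b0 v + l v := by
    intro v
    have := hδs v
    rw [hδeq] at this
    have := abs_le.mp this
    linarith [this.1, this.2]
  refine ⟨hlpos i₀, ?_⟩
  apply Set.Subset.antisymm
  · apply convexHull_min
    · intro y hy
      exact Set.mem_Icc.mpr ⟨(hmv i₀) ▸ hlow i₀ y hy, (hsv i₀) ▸ hup i₀ y hy⟩
    · exact convex_Icc _ _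
  · rw [← segment_eq_Icc (by linarith [hlpos i₀] : b0 i₀ ≤ b0 i₀ + l i₀)]
    exact segment_subset_convexHull ((hmv i₀) ▸ hmF i₀) ((hsv i₀) ▸ hsF i₀)
end
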